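/- arXiv:2203.06473 — 17 statements merged into one kernel-verified Lean document; each statement's English description precedes it below -/
import Mathlib

section
/- Let (Λ, F, ω) be a continuous g-fusion frame for H with frame operator S. For f ∈ H and a measurable set X₁ ⊆ X, define S^{X₁} f = ∫_{X₁} ω(x)² π_{F(x)} Λ_x* Λ_x π_{F(x)} S⁻¹ f dμ(x) (the partial frame operator built from the canonical dual family Λ̃_x = Λ_x π_{F(x)} S⁻¹, so that S^{X₁} + S^{X₁ᶜ} = Id_H). Then for every f ∈ H: ∫_{X₁} ω(x)² ⟨Λ_x π_{F(x)} S⁻¹ f, Λ_x π_{F(x)} f⟩ dμ(x) − ‖S^{X₁} f‖² = ∫_{X₁ᶜ} ω(x)² conj(⟨Λ_x π_{F(x)} S⁻¹ f, Λ_x π_{F(x)} f⟩) dμ(x) − ‖S^{X₁ᶜ} f‖², where conj denotes complex conjugation. -/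
open MeasureTheory

theorem stmt_2
    {H : Type*} [NormedAddCommGroup H] [InnerProductSpace ℂ H] [CompleteSpace H]
    {X : Type*} [MeasurableSpace X] (μ : Measure X)
    (ω : X → ℝ) (hω : ∀ x, 0 ≤ ω x) (hωm : Measurable ω)
    {Hx : X → Type*} [∀ x, NormedAddCommGroup (Hx x)]
    [∀ x, InnerProductSpace ℂ (Hx x)] [∀ x, CompleteSpace (Hx x)]
    (K : X → Submodule ℂ H) [∀ x, CompleteSpace (K x)]
    (Λ : (x : X) → (↥(K x) →L[ℂ] Hx x))
    (L : (x : X) → (H →L[ℂ] Hx x))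
    (hL : ∀ x, L x = (Λ x).comp (K x).orthogonalProjection)
    (hInt : ∀ f : H, Integrable
      (fun x => (ω x) ^ 2 • (ContinuousLinearMap.adjoint (L x)) ((L x) f)) μ)
    (hnInt : ∀ f : H, Integrable (fun x => (ω x) ^ 2 * ‖(L x) f‖ ^ 2) μ)
    (A B : ℝ) (hA : 0 < A) (hAB : A ≤ B)
    (hlow : ∀ f : H, A * ‖f‖ ^ 2 ≤ ∫ x, (ω x) ^ 2 * ‖(L x) f‖ ^ 2 ∂μ)
    (hupp : ∀ f : H, ∫ x, (ω x) ^ 2 * ‖(L x) f‖ ^ 2 ∂μ ≤ B * ‖f‖ ^ 2)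
    (S Sinv : H →L[ℂ] H)
    (hS : ∀ f : H, S f = ∫ x, (ω x) ^ 2 • (ContinuousLinearMap.adjoint (L x)) ((L x) f) ∂μ)
    (hSpos : S.IsPositive) (hSinv1 : S.comp Sinv = 1) (hSinv2 : Sinv.comp S = 1)
    (X₁ : Set X) (hX₁ : MeasurableSet X₁)
    (hiInt : ∀ f g : H, Integrable
      (fun x => ((ω x : ℂ)) ^ 2 * (inner ℂ ((L x) g) ((L x) f) : ℂ)) μ) :
    ∀ f : H,
      (∫ x in X₁, ((ω x : ℂ)) ^ 2 * (inner ℂ ((L x) (Sinv f)) ((L x) f) : ℂ) ∂μ)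
          - ((‖∫ x in X₁, (ω x) ^ 2 • (ContinuousLinearMap.adjoint (L x)) ((L x) (Sinv f)) ∂μ‖ ^ 2 : ℝ) : ℂ)
        = (∫ x in X₁ᶜ, ((ω x : ℂ)) ^ 2
              * (starRingEnd ℂ) (inner ℂ ((L x) (Sinv f)) ((L x) f) : ℂ) ∂μ)
          - ((‖∫ x in X₁ᶜ, (ω x) ^ 2 • (ContinuousLinearMap.adjoint (L x)) ((L x) (Sinv f)) ∂μ‖ ^ 2 : ℝ) : ℂ) := by

  intro f
  set g : H := Sinv f with hg
  set h : X → H := fun x => (ω x) ^ 2 • (ContinuousLinearMap.adjoint (L x)) ((L x) g) with hh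
  have hint : Integrable h μ := hInt g
  set u₁ : H := ∫ x in X₁, h x ∂μ with hu₁
  set u₂ : H := ∫ x in X₁ᶜ, h x ∂μ with hu₂
  have hsum : u₁ + u₂ = f := by
    rw [hu₁, hu₂, integral_add_compl hX₁ hint, ← hS g]
    have := congrArg (fun T : H →L[ℂ] H => T f) hSinv1
    simpa [hg] using this
  have key : ∀ (s : Set X), (∫ x in s, ((ω x : ℂ)) ^ 2 * (inner ℂ ((L x) g) ((L x) f) : ℂ) ∂μ)
      = (inner ℂ (∫ x in s, h x ∂μ) f : ℂ) := by
    intro s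
    have h1 : (inner ℂ (∫ x in s, h x ∂μ) f : ℂ)
        = ∫ x in s, (inner ℂ (h x) f : ℂ) ∂μ := by
      rw [← inner_conj_symm, ← integral_inner (hint.restrict), ← integral_conj]
      simp
    rw [h1]
    refine integral_congr_ae (Filter.Eventually.of_forall fun x => ?_)
    rw [hh]
    simp only [RCLike.real_smul_eq_coe_smul (K := ℂ), inner_smul_left,
      ContinuousLinearMap.adjoint_inner_left, map_pow, Complex.coe_algebraMap, Complex.conj_ofReal]
  have key2 : (∫ x in X₁ᶜ, ((ω x : ℂ)) ^ 2
        * (starRingEnd ℂ) (inner ℂ ((L x) g) ((L x) f) : ℂ) ∂μ)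
      = (inner ℂ f u₂ : ℂ) := by
    have h2 : (∫ x in X₁ᶜ, ((ω x : ℂ)) ^ 2
          * (starRingEnd ℂ) (inner ℂ ((L x) g) ((L x) f) : ℂ) ∂μ)
        = (starRingEnd ℂ) (∫ x in X₁ᶜ, ((ω x : ℂ)) ^ 2 * (inner ℂ ((L x) g) ((L x) f) : ℂ) ∂μ) := by
      rw [← integral_conj]
      refine integral_congr_ae (Filter.Eventually.of_forall fun x => ?_)
      simp
    rw [h2, key X₁ᶜ, ← hu₂, inner_conj_symm]
  rw [key X₁, key2, ← hu₁]
  have hn1 : ((‖u₁‖ ^ 2 : ℝ) : ℂ) = (inner ℂ u₁ u₁ : ℂ) := by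
    rw [inner_self_eq_norm_sq_to_K]; norm_cast
  have hn2 : ((‖u₂‖ ^ 2 : ℝ) : ℂ) = (inner ℂ u₂ u₂ : ℂ) := by
    rw [inner_self_eq_norm_sq_to_K]; norm_cast
  rw [hn1, hn2, ← hsum]
  simp only [inner_add_left, inner_add_right]
  ring
end

section
/- Let (Λ, F, ω) be a Parseval continuous g-fusion frame for H. Then for every measurable set X₁ ⊆ X and every f ∈ H: ∫_{X₁} ω(x)² ‖Λ_x π_{F(x)} f‖² dμ(x) − ‖𝓜^{X₁} f‖² = ∫_{X₁ᶜ} ω(x)² ‖Λ_x π_{F(x)} f‖² dμ(x) − ‖𝓜^{X₁ᶜ} f‖². -/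
open MeasureTheory

theorem stmt_3
    {H : Type*} [NormedAddCommGroup H] [InnerProductSpace ℂ H] [CompleteSpace H]
    {X : Type*} [MeasurableSpace X] (μ : Measure X)
    (ω : X → ℝ) (hω : ∀ x, 0 ≤ ω x) (hωm : Measurable ω)
    {Hx : X → Type*} [∀ x, NormedAddCommGroup (Hx x)]
    [∀ x, InnerProductSpace ℂ (Hx x)] [∀ x, CompleteSpace (Hx x)]
    (K : X → Submodule ℂ H) [∀ x, CompleteSpace (K x)]
    (Λ : (x : X) → (↥(K x) →L[ℂ] Hx x))
    (L : (x : X) → (H →L[ℂ] Hx x))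
    (hL : ∀ x, L x = (Λ x).comp ((K x).orthogonalProjectionOnto))
    (hInt : ∀ f : H, Integrable
      (fun x => (ω x) ^ 2 • (ContinuousLinearMap.adjoint (L x)) ((L x) f)) μ)
    (hnInt : ∀ f : H, Integrable (fun x => (ω x) ^ 2 * ‖(L x) f‖ ^ 2) μ)
    (hpar : ∀ f : H, ∫ x, (ω x) ^ 2 * ‖(L x) f‖ ^ 2 ∂μ = ‖f‖ ^ 2)
    (X₁ : Set X) (hX₁ : MeasurableSet X₁)
    :
    ∀ f : H,
      (∫ x in X₁, (ω x) ^ 2 * ‖(L x) f‖ ^ 2 ∂μ) - ‖∫ x in X₁, (ω x) ^ 2 • (ContinuousLinearMap.adjoint (L x)) ((L x) f) ∂μ‖ ^ 2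
        = (∫ x in X₁ᶜ, (ω x) ^ 2 * ‖(L x) f‖ ^ 2 ∂μ) - ‖∫ x in X₁ᶜ, (ω x) ^ 2 • (ContinuousLinearMap.adjoint (L x)) ((L x) f) ∂μ‖ ^ 2 := by
  intro f
  -- inner ℂ product computation for each point
  have hpt : ∀ (g : H) (x : X),
      (inner ℂ g ((ω x) ^ 2 • (ContinuousLinearMap.adjoint (L x)) ((L x) g)) : ℂ)
        = ((ω x) ^ 2 * ‖(L x) g‖ ^ 2 : ℝ) := by
    intro g x
    rw [inner_smul_right_eq_smul, ContinuousLinearMap.adjoint_inner_right,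
      inner_self_eq_norm_sq_to_K, Complex.real_smul]
    push_cast
    rfl
  -- inner ℂ of set integrals with f
  have hset : ∀ (s : Set X),
      (inner ℂ f (∫ x in s, (ω x) ^ 2 • (ContinuousLinearMap.adjoint (L x)) ((L x) f) ∂μ) : ℂ)
        = ((∫ x in s, (ω x) ^ 2 * ‖(L x) f‖ ^ 2 ∂μ : ℝ) : ℂ) := by
    intro s
    rw [← integral_inner ((hInt f).restrict),
      integral_congr_ae (Filter.Eventually.of_forall fun x => hpt f x)]
    exact integral_ofReal
  -- the frame operator is the identity
  have hS : ∀ g : H,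
      (∫ x, (ω x) ^ 2 • (ContinuousLinearMap.adjoint (L x)) ((L x) g) ∂μ) = g := by
    have hadd : ∀ g h : H,
        (∫ x, (ω x) ^ 2 • (ContinuousLinearMap.adjoint (L x)) ((L x) (g + h)) ∂μ)
          = (∫ x, (ω x) ^ 2 • (ContinuousLinearMap.adjoint (L x)) ((L x) g) ∂μ)
            + (∫ x, (ω x) ^ 2 • (ContinuousLinearMap.adjoint (L x)) ((L x) h) ∂μ) := by
      intro g h
      rw [← integral_add (hInt g) (hInt h)]
      congr 1
      ext x
      simp [map_add, smul_add]
    have hsmul : ∀ (c : ℂ) (g : H),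
        (∫ x, (ω x) ^ 2 • (ContinuousLinearMap.adjoint (L x)) ((L x) (c • g)) ∂μ)
          = c • (∫ x, (ω x) ^ 2 • (ContinuousLinearMap.adjoint (L x)) ((L x) g) ∂μ) := by
      intro c g
      rw [← integral_smul]
      congr 1
      ext x
      rw [(L x).map_smul, (ContinuousLinearMap.adjoint (L x)).map_smul, smul_comm]
    set T : H →ₗ[ℂ] H :=
      { toFun := fun g =>
          (∫ x, (ω x) ^ 2 • (ContinuousLinearMap.adjoint (L x)) ((L x) g) ∂μ) - g
        map_add' := by intro g h; rw [hadd]; abel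
        map_smul' := by intro c g; rw [hsmul, RingHom.id_apply, smul_sub] } with hT
    have hTz : T = 0 := by
      rw [← inner_map_self_eq_zero]
      intro g
      have : (inner ℂ (T g) g : ℂ) = (starRingEnd ℂ) (inner ℂ g (T g)) := (inner_conj_symm _ _).symm
      rw [this]
      have hinner : (inner ℂ g (T g) : ℂ) = 0 := by
        simp only [hT, LinearMap.coe_mk, AddHom.coe_mk, inner_sub_right]
        have h1 : (inner ℂ g (∫ x, (ω x) ^ 2 • (ContinuousLinearMap.adjoint (L x)) ((L x) g) ∂μ) : ℂ)
            = ((∫ x, (ω x) ^ 2 * ‖(L x) g‖ ^ 2 ∂μ : ℝ) : ℂ) := by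
          rw [← integral_inner (hInt g),
            integral_congr_ae (Filter.Eventually.of_forall fun x => hpt g x)]
          exact integral_ofReal
        rw [h1, hpar g, inner_self_eq_norm_sq_to_K]
        norm_cast
        exact sub_self _
      rw [hinner, map_zero]
    intro g
    have := congrArg (fun (S : H →ₗ[ℂ] H) => S g) hTz
    simpa [hT, sub_eq_zero] using this
  -- decomposition
  set a := ∫ x in X₁, (ω x) ^ 2 • (ContinuousLinearMap.adjoint (L x)) ((L x) f) ∂μ with ha
  set b := ∫ x in X₁ᶜ, (ω x) ^ 2 • (ContinuousLinearMap.adjoint (L x)) ((L x) f) ∂μ with hb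
  have hab : a + b = f := by
    rw [ha, hb, integral_add_compl hX₁ (hInt f)]
    exact hS f
  -- express set integrals via real parts
  have h1 : (∫ x in X₁, (ω x) ^ 2 * ‖(L x) f‖ ^ 2 ∂μ) = (inner ℂ f a : ℂ).re := by
    rw [hset X₁]; simp
  have h2 : (∫ x in X₁ᶜ, (ω x) ^ 2 * ‖(L x) f‖ ^ 2 ∂μ) = (inner ℂ f b : ℂ).re := by
    rw [hset X₁ᶜ]; simp
  rw [h1, h2]
  have hfb : f - b = a := by rw [← hab]; abel
  have hfa : f - a = b := by rw [← hab]; abel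
  have hna : ‖a‖ ^ 2 = (inner ℂ a a : ℂ).re := by
    have := inner_self_eq_norm_sq (𝕜 := ℂ) a
    simpa [RCLike.re_to_complex] using this.symm
  have hnb : ‖b‖ ^ 2 = (inner ℂ b b : ℂ).re := by
    have := inner_self_eq_norm_sq (𝕜 := ℂ) b
    simpa [RCLike.re_to_complex] using this.symm
  rw [hna, hnb]
  have key : (inner ℂ f a : ℂ) - inner ℂ a a - ((inner ℂ f b : ℂ) - inner ℂ b b)
      = inner ℂ (f - a - b) (a - b) - (inner ℂ a b - inner ℂ b a) := by
    simp only [inner_sub_left, inner_sub_right]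
    ring
  have hz : f - a - b = 0 := by rw [← hab]; abel
  have hsym : (inner ℂ a b : ℂ).re = (inner ℂ b a : ℂ).re := by
    have := inner_re_symm (𝕜 := ℂ) a b
    simpa [RCLike.re_to_complex] using this
  have : ((inner ℂ f a : ℂ) - inner ℂ a a - ((inner ℂ f b : ℂ) - inner ℂ b b)).re = 0 := by
    rw [key, hz]
    simp only [inner_zero_left, zero_sub, Complex.neg_re, Complex.sub_re]
    linarith
  simp only [Complex.sub_re] at this
  linarith
end

section
/- Let (Λ, F, ω) be a Parseval continuous g-fusion frame for H. Then for every measurable set X₁ ⊆ X and every f ∈ H: (1/2)‖f‖² ≤ ‖𝓜^{X₁} f‖² + ‖𝓜^{X₁ᶜ} f‖² ≤ (3/2)‖f‖², and (3/4)‖f‖² ≤ ∫_{X₁} ω(x)² ‖Λ_x π_{F(x)} f‖² dμ(x) + ‖𝓜^{X₁ᶜ} f‖² ≤ ‖f‖². -/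
open MeasureTheory ContinuousLinearMap RCLike

section aux
variable {H : Type*} [NormedAddCommGroup H] [InnerProductSpace ℂ H] [CompleteSpace H]
    {X : Type*} [MeasurableSpace X] {μ : Measure X}
    {ω : X → ℝ}
    {Hx : X → Type*} [∀ x, NormedAddCommGroup (Hx x)]
    [∀ x, InnerProductSpace ℂ (Hx x)] [∀ x, CompleteSpace (Hx x)]
    {L : (x : X) → (H →L[ℂ] Hx x)} {h : H}

lemma aux_ptw (g h : H) (x : X) :
    (innerSL ℂ g) ((ω x) ^ 2 • (adjoint (L x)) ((L x) h)) =
      ((ω x : ℂ)) ^ 2 * inner ℂ ((L x) g) ((L x) h) := by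
  rw [innerSL_apply_apply, RCLike.real_smul_eq_coe_smul (K := ℂ), inner_smul_right,
    adjoint_inner_right]
  norm_cast

lemma aux_int (hF : Integrable (fun x => (ω x) ^ 2 • (adjoint (L x)) ((L x) h)) μ)
    (g : H) :
    Integrable (fun x => ((ω x : ℂ)) ^ 2 * inner ℂ ((L x) g) ((L x) h)) μ := by
  have := (innerSL ℂ g).integrable_comp hF
  simpa only [aux_ptw] using this

lemma aux1 (hF : Integrable (fun x => (ω x) ^ 2 • (adjoint (L x)) ((L x) h)) μ)
    (g : H) :
    (inner ℂ g (∫ x, (ω x) ^ 2 • (adjoint (L x)) ((L x) h) ∂μ) : ℂ) =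
      ∫ x, ((ω x : ℂ)) ^ 2 * inner ℂ ((L x) g) ((L x) h) ∂μ := by
  have h1 := (innerSL ℂ g).integral_comp_comm hF
  simp only [aux_ptw] at h1
  rw [h1]; rfl

lemma aux_re (hF : Integrable (fun x => (ω x) ^ 2 • (adjoint (L x)) ((L x) h)) μ)
    (g : H) :
    re (inner ℂ g (∫ x, (ω x) ^ 2 • (adjoint (L x)) ((L x) h) ∂μ) : ℂ) =
      ∫ x, (ω x) ^ 2 * re (inner ℂ ((L x) g) ((L x) h) : ℂ) ∂μ := by
  rw [aux1 hF g, ← integral_re (aux_int hF g)]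
  congr 1
  funext x
  simp [Complex.mul_re, ← Complex.ofReal_pow]


lemma aux_polar
    (hnInt : ∀ u : H, Integrable (fun x => (ω x) ^ 2 * ‖(L x) u‖ ^ 2) μ)
    (hpar : ∀ u : H, ∫ x, (ω x) ^ 2 * ‖(L x) u‖ ^ 2 ∂μ = ‖u‖ ^ 2)
    (g h : H) :
    ∫ x, (ω x) ^ 2 * re (inner ℂ ((L x) g) ((L x) h) : ℂ) ∂μ = re (inner ℂ g h : ℂ) := by
  have key : ∀ x : X, (ω x) ^ 2 * re (inner ℂ ((L x) g) ((L x) h) : ℂ) =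
      ((ω x) ^ 2 * ‖(L x) (g + h)‖ ^ 2 - (ω x) ^ 2 * ‖(L x) g‖ ^ 2
        - (ω x) ^ 2 * ‖(L x) h‖ ^ 2) / 2 := by
    intro x
    have h2 := norm_add_sq (𝕜 := ℂ) ((L x) g) ((L x) h)
    rw [← map_add] at h2
    nlinarith [h2]
  calc ∫ x, (ω x) ^ 2 * re (inner ℂ ((L x) g) ((L x) h) : ℂ) ∂μ
      = ∫ x, ((ω x) ^ 2 * ‖(L x) (g + h)‖ ^ 2 - (ω x) ^ 2 * ‖(L x) g‖ ^ 2
          - (ω x) ^ 2 * ‖(L x) h‖ ^ 2) / 2 ∂μ := by simp_rw [key]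
    _ = ((∫ x, (ω x) ^ 2 * ‖(L x) (g + h)‖ ^ 2 ∂μ) - (∫ x, (ω x) ^ 2 * ‖(L x) g‖ ^ 2 ∂μ)
          - ∫ x, (ω x) ^ 2 * ‖(L x) h‖ ^ 2 ∂μ) / 2 := by
        have e1 := integral_sub ((hnInt (g + h)).sub (hnInt g)) (hnInt h)
        simp only [Pi.sub_apply] at e1
        rw [integral_div, e1, integral_sub (hnInt (g + h)) (hnInt g)]
    _ = re (inner ℂ g h : ℂ) := by
        rw [hpar, hpar, hpar]
        have h3 := norm_add_sq (𝕜 := ℂ) g h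
        linarith

lemma auxP
    (hnInt : ∀ u : H, Integrable (fun x => (ω x) ^ 2 * ‖(L x) u‖ ^ 2) μ)
    (hpar : ∀ u : H, ∫ x, (ω x) ^ 2 * ‖(L x) u‖ ^ 2 ∂μ = ‖u‖ ^ 2)
    (hF : Integrable (fun x => (ω x) ^ 2 • (adjoint (L x)) ((L x) h)) μ)
    (g : H) :
    ∫ x, ((ω x : ℂ)) ^ 2 * inner ℂ ((L x) g) ((L x) h) ∂μ = (inner ℂ g h : ℂ) := by
  have hre : ∀ g : H, (∫ x, ((ω x : ℂ)) ^ 2 * inner ℂ ((L x) g) ((L x) h) ∂μ).re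
      = (inner ℂ g h : ℂ).re := by
    intro g
    have h1 := aux_re hF g
    rw [aux1 hF g] at h1
    have h2 := aux_polar hnInt hpar g h
    have : re ((∫ x, ((ω x : ℂ)) ^ 2 * inner ℂ ((L x) g) ((L x) h) ∂μ)) = re ((inner ℂ g h : ℂ)) := by
      rw [h1, h2]
    simpa using this
  apply Complex.ext
  · exact hre g
  · have h1 := hre (Complex.I • g)
    have h2 : ∫ x, ((ω x : ℂ)) ^ 2 * inner ℂ ((L x) (Complex.I • g)) ((L x) h) ∂μ
        = -Complex.I * ∫ x, ((ω x : ℂ)) ^ 2 * inner ℂ ((L x) g) ((L x) h) ∂μ := by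
      rw [← integral_const_mul]
      congr 1
      funext x
      rw [ContinuousLinearMap.map_smul, inner_smul_left, Complex.conj_I]
      ring
    rw [h2] at h1
    have h3 : (inner ℂ (Complex.I • g) h : ℂ) = -Complex.I * (inner ℂ g h : ℂ) := by
      rw [inner_smul_left]
      simp [Complex.conj_I]
    rw [h3] at h1
    simpa using h1


lemma aux_int_re (hF : Integrable (fun x => (ω x) ^ 2 • (adjoint (L x)) ((L x) h)) μ)
    (g : H) :
    Integrable (fun x => (ω x) ^ 2 * re (inner ℂ ((L x) g) ((L x) h) : ℂ)) μ := by
  refine (aux_int hF g).re.congr (Filter.Eventually.of_forall fun x => ?_)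
  simp [Complex.mul_re, ← Complex.ofReal_pow]

lemma aux_bound (hF : Integrable (fun x => (ω x) ^ 2 • (adjoint (L x)) ((L x) h)) μ)
    (hnInt : ∀ u : H, Integrable (fun x => (ω x) ^ 2 * ‖(L x) u‖ ^ 2) μ)
    (hpar : ∀ u : H, ∫ x, (ω x) ^ 2 * ‖(L x) u‖ ^ 2 ∂μ = ‖u‖ ^ 2)
    (S : Set X) :
    ‖∫ x in S, (ω x) ^ 2 • (adjoint (L x)) ((L x) h) ∂μ‖ ^ 2 ≤
      ∫ x in S, (ω x) ^ 2 * ‖(L x) h‖ ^ 2 ∂μ := by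
  have e1 : ‖∫ x in S, (ω x) ^ 2 • (adjoint (L x)) ((L x) h) ∂μ‖ ^ 2 =
      ∫ x in S, (ω x) ^ 2 *
        re (inner ℂ ((L x) (∫ x in S, (ω x) ^ 2 • (adjoint (L x)) ((L x) h) ∂μ)) ((L x) h) : ℂ) ∂μ := by
    rw [← inner_self_eq_norm_sq (𝕜 := ℂ)]
    exact aux_re hF.restrict _
  set g := ∫ x in S, (ω x) ^ 2 • (adjoint (L x)) ((L x) h) ∂μ with hg
  have e2 : ∫ x in S, (ω x) ^ 2 * re (inner ℂ ((L x) g) ((L x) h) : ℂ) ∂μ ≤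
      ∫ x in S, ((ω x) ^ 2 * ‖(L x) g‖ ^ 2 + (ω x) ^ 2 * ‖(L x) h‖ ^ 2) / 2 ∂μ := by
    refine integral_mono_ae ((aux_int_re hF g).restrict)
      ((((hnInt g).add (hnInt h)).div_const 2).restrict)
      (Filter.Eventually.of_forall fun x => ?_)
    have := re_inner_le_norm (𝕜 := ℂ) ((L x) g) ((L x) h)
    nlinarith [sq_nonneg (‖(L x) g‖ - ‖(L x) h‖), sq_nonneg (ω x)]
  have e3 : ∫ x in S, ((ω x) ^ 2 * ‖(L x) g‖ ^ 2 + (ω x) ^ 2 * ‖(L x) h‖ ^ 2) / 2 ∂μ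
      = ((∫ x in S, (ω x) ^ 2 * ‖(L x) g‖ ^ 2 ∂μ) + ∫ x in S, (ω x) ^ 2 * ‖(L x) h‖ ^ 2 ∂μ) / 2 := by
    rw [integral_div, integral_add ((hnInt g).restrict) ((hnInt h).restrict)]
  have e4 : ∫ x in S, (ω x) ^ 2 * ‖(L x) g‖ ^ 2 ∂μ ≤ ‖g‖ ^ 2 := by
    rw [← hpar g]
    exact setIntegral_le_integral (hnInt g) (Filter.Eventually.of_forall fun x => by positivity)
  linarith

end aux


theorem stmt_5
    {H : Type*} [NormedAddCommGroup H] [InnerProductSpace ℂ H] [CompleteSpace H]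
    {X : Type*} [MeasurableSpace X] (μ : Measure X)
    (ω : X → ℝ) (hω : ∀ x, 0 ≤ ω x) (hωm : Measurable ω)
    {Hx : X → Type*} [∀ x, NormedAddCommGroup (Hx x)]
    [∀ x, InnerProductSpace ℂ (Hx x)] [∀ x, CompleteSpace (Hx x)]
    (K : X → Submodule ℂ H) [∀ x, CompleteSpace (K x)]
    (Λ : (x : X) → (↥(K x) →L[ℂ] Hx x))
    (L : (x : X) → (H →L[ℂ] Hx x))
    (hL : ∀ x, L x = (Λ x).comp (Submodule.orthogonalProjectionOnto (K x)))
    (hInt : ∀ f : H, Integrable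
      (fun x => (ω x) ^ 2 • (ContinuousLinearMap.adjoint (L x)) ((L x) f)) μ)
    (hnInt : ∀ f : H, Integrable (fun x => (ω x) ^ 2 * ‖(L x) f‖ ^ 2) μ)
    (hpar : ∀ f : H, ∫ x, (ω x) ^ 2 * ‖(L x) f‖ ^ 2 ∂μ = ‖f‖ ^ 2)
    (X₁ : Set X) (hX₁ : MeasurableSet X₁)
    :
    ∀ f : H,
      (1 / 2 * ‖f‖ ^ 2 ≤ ‖∫ x in X₁, (ω x) ^ 2 • (ContinuousLinearMap.adjoint (L x)) ((L x) f) ∂μ‖ ^ 2 + ‖∫ x in X₁ᶜ, (ω x) ^ 2 • (ContinuousLinearMap.adjoint (L x)) ((L x) f) ∂μ‖ ^ 2 ∧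
        ‖∫ x in X₁, (ω x) ^ 2 • (ContinuousLinearMap.adjoint (L x)) ((L x) f) ∂μ‖ ^ 2 + ‖∫ x in X₁ᶜ, (ω x) ^ 2 • (ContinuousLinearMap.adjoint (L x)) ((L x) f) ∂μ‖ ^ 2 ≤ 3 / 2 * ‖f‖ ^ 2) ∧
      (3 / 4 * ‖f‖ ^ 2 ≤ (∫ x in X₁, (ω x) ^ 2 * ‖(L x) f‖ ^ 2 ∂μ) + ‖∫ x in X₁ᶜ, (ω x) ^ 2 • (ContinuousLinearMap.adjoint (L x)) ((L x) f) ∂μ‖ ^ 2 ∧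
        (∫ x in X₁, (ω x) ^ 2 * ‖(L x) f‖ ^ 2 ∂μ) + ‖∫ x in X₁ᶜ, (ω x) ^ 2 • (ContinuousLinearMap.adjoint (L x)) ((L x) f) ∂μ‖ ^ 2 ≤ ‖f‖ ^ 2) := by
  intro f
  have hSf : (∫ x, (ω x) ^ 2 • (ContinuousLinearMap.adjoint (L x)) ((L x) f) ∂μ) = f := by
    refine ext_inner_left ℂ fun g => ?_
    rw [aux1 (hInt f) g, auxP hnInt hpar (hInt f) g]
  have hsum : (∫ x in X₁, (ω x) ^ 2 • (ContinuousLinearMap.adjoint (L x)) ((L x) f) ∂μ)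
      + (∫ x in X₁ᶜ, (ω x) ^ 2 • (ContinuousLinearMap.adjoint (L x)) ((L x) f) ∂μ) = f := by
    rw [integral_add_compl hX₁ (hInt f), hSf]
  have hts : (∫ x in X₁, (ω x) ^ 2 * ‖(L x) f‖ ^ 2 ∂μ)
      + (∫ x in X₁ᶜ, (ω x) ^ 2 * ‖(L x) f‖ ^ 2 ∂μ) = ‖f‖ ^ 2 := by
    rw [integral_add_compl hX₁ (hnInt f), hpar f]
  have ht0 : 0 ≤ ∫ x in X₁, (ω x) ^ 2 * ‖(L x) f‖ ^ 2 ∂μ :=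
    setIntegral_nonneg hX₁ fun x _ => by positivity
  have hs0 : 0 ≤ ∫ x in X₁ᶜ, (ω x) ^ 2 * ‖(L x) f‖ ^ 2 ∂μ :=
    setIntegral_nonneg hX₁.compl fun x _ => by positivity
  have h1 : ‖∫ x in X₁, (ω x) ^ 2 • (ContinuousLinearMap.adjoint (L x)) ((L x) f) ∂μ‖ ^ 2 ≤
      ∫ x in X₁, (ω x) ^ 2 * ‖(L x) f‖ ^ 2 ∂μ := aux_bound (hInt f) hnInt hpar X₁
  have h2 : ‖∫ x in X₁ᶜ, (ω x) ^ 2 • (ContinuousLinearMap.adjoint (L x)) ((L x) f) ∂μ‖ ^ 2 ≤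
      ∫ x in X₁ᶜ, (ω x) ^ 2 * ‖(L x) f‖ ^ 2 ∂μ := aux_bound (hInt f) hnInt hpar X₁ᶜ
  -- re inner ℂ f m₁ = t
  have hA : RCLike.re ((inner ℂ f (∫ x in X₁, (ω x) ^ 2 • (ContinuousLinearMap.adjoint (L x)) ((L x) f) ∂μ)) : ℂ)
      = ∫ x in X₁, (ω x) ^ 2 * ‖(L x) f‖ ^ 2 ∂μ := by
    rw [aux_re (hInt f).restrict f]
    refine integral_congr_ae (Filter.Eventually.of_forall fun x => ?_)
    simp only [inner_self_eq_norm_sq]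
  have h6 : ‖∫ x in X₁ᶜ, (ω x) ^ 2 • (ContinuousLinearMap.adjoint (L x)) ((L x) f) ∂μ‖ ^ 2
      = ‖f‖ ^ 2 - 2 * (∫ x in X₁, (ω x) ^ 2 * ‖(L x) f‖ ^ 2 ∂μ)
        + ‖∫ x in X₁, (ω x) ^ 2 • (ContinuousLinearMap.adjoint (L x)) ((L x) f) ∂μ‖ ^ 2 := by
    have hm2 : (∫ x in X₁ᶜ, (ω x) ^ 2 • (ContinuousLinearMap.adjoint (L x)) ((L x) f) ∂μ)
        = f - ∫ x in X₁, (ω x) ^ 2 • (ContinuousLinearMap.adjoint (L x)) ((L x) f) ∂μ := by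
      rw [eq_sub_iff_add_eq, add_comm]; exact hsum
    rw [hm2, norm_sub_sq (𝕜 := ℂ), hA]
  have h7 : (∫ x in X₁, (ω x) ^ 2 * ‖(L x) f‖ ^ 2 ∂μ) ^ 2 ≤
      ‖f‖ ^ 2 * ‖∫ x in X₁, (ω x) ^ 2 • (ContinuousLinearMap.adjoint (L x)) ((L x) f) ∂μ‖ ^ 2 := by
    have hle : (∫ x in X₁, (ω x) ^ 2 * ‖(L x) f‖ ^ 2 ∂μ) ≤
        ‖f‖ * ‖∫ x in X₁, (ω x) ^ 2 • (ContinuousLinearMap.adjoint (L x)) ((L x) f) ∂μ‖ := by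
      rw [← hA]; exact re_inner_le_norm _ _
    nlinarith [ht0, norm_nonneg f,
      norm_nonneg (∫ x in X₁, (ω x) ^ 2 • (ContinuousLinearMap.adjoint (L x)) ((L x) f) ∂μ)]
  have ha0 : 0 ≤ ‖∫ x in X₁, (ω x) ^ 2 • (ContinuousLinearMap.adjoint (L x)) ((L x) f) ∂μ‖ ^ 2 := by
    positivity
  have hN0 : 0 ≤ ‖f‖ ^ 2 := by positivity
  rcases (norm_nonneg f).eq_or_lt with hN | hN
  · have hNz : ‖f‖ ^ 2 = 0 := by rw [← hN]; ring
    constructor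
    · constructor <;> linarith
    · constructor <;> linarith
  · have hNp : 0 < ‖f‖ ^ 2 := by positivity
    refine ⟨⟨?_, ?_⟩, ?_, ?_⟩
    · nlinarith [sq_nonneg (2 * (∫ x in X₁, (ω x) ^ 2 * ‖(L x) f‖ ^ 2 ∂μ) - ‖f‖ ^ 2)]
    · linarith
    · nlinarith [sq_nonneg (2 * (∫ x in X₁, (ω x) ^ 2 * ‖(L x) f‖ ^ 2 ∂μ) - ‖f‖ ^ 2)]
    · linarith
end

section
/- Let (Λ, F, ω) be a Parseval continuous g-fusion frame for H. Then for every measurable set X₁ ⊆ X, the operator 𝓜^{X₁} − (𝓜^{X₁})² is positive and bounded above by (1/4)·Id_H; that is, for every f ∈ H, 0 ≤ ⟨𝓜^{X₁} f, f⟩ − ‖𝓜^{X₁} f‖² ≤ (1/4)‖f‖². -/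
open MeasureTheory

lemma aux_smul_re {E : Type*} [NormedAddCommGroup E] [InnerProductSpace ℂ E] (x y : E) (r : ℝ) :
    (inner ℂ x (r • y) : ℂ).re = r * (inner ℂ x y : ℂ).re := by
  have : (r • y) = (r : ℂ) • y := by
    simp [Complex.coe_smul]
  rw [this, inner_smul_right]
  simp [Complex.mul_re]

lemma aux_norm {E : Type*} [NormedAddCommGroup E] [InnerProductSpace ℂ E] (x : E) :
    (inner ℂ x x : ℂ).re = ‖x‖ ^ 2 := by
  rw [← RCLike.re_to_complex]; exact inner_self_eq_norm_sq x

lemma aux_int_re_s6 {α : Type*} [MeasurableSpace α] (μ : Measure α) (f : α → ℂ)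
    (hf : Integrable f μ) : (∫ x, f x ∂μ).re = ∫ x, (f x).re ∂μ := by
  simpa using (integral_re hf).symm

theorem stmt_6
    {H : Type*} [NormedAddCommGroup H] [InnerProductSpace ℂ H] [CompleteSpace H]
    {X : Type*} [MeasurableSpace X] (μ : Measure X)
    (ω : X → ℝ) (hω : ∀ x, 0 ≤ ω x) (hωm : Measurable ω)
    {Hx : X → Type*} [∀ x, NormedAddCommGroup (Hx x)]
    [∀ x, InnerProductSpace ℂ (Hx x)] [∀ x, CompleteSpace (Hx x)]
    (K : X → Submodule ℂ H) [∀ x, CompleteSpace (K x)]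
    (Λ : (x : X) → (↥(K x) →L[ℂ] Hx x))
    (L : (x : X) → (H →L[ℂ] Hx x))
    (hL : ∀ x, L x = (Λ x).comp ((K x).orthogonalProjectionOnto))
    (hInt : ∀ f : H, Integrable
      (fun x => (ω x) ^ 2 • (ContinuousLinearMap.adjoint (L x)) ((L x) f)) μ)
    (hnInt : ∀ f : H, Integrable (fun x => (ω x) ^ 2 * ‖(L x) f‖ ^ 2) μ)
    (hpar : ∀ f : H, ∫ x, (ω x) ^ 2 * ‖(L x) f‖ ^ 2 ∂μ = ‖f‖ ^ 2)
    (X₁ : Set X) (hX₁ : MeasurableSet X₁)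
    :
    ∀ f : H,
      0 ≤ (inner ℂ (∫ x in X₁, (ω x) ^ 2 • (ContinuousLinearMap.adjoint (L x)) ((L x) f) ∂μ) f : ℂ).re - ‖∫ x in X₁, (ω x) ^ 2 • (ContinuousLinearMap.adjoint (L x)) ((L x) f) ∂μ‖ ^ 2 ∧
      (inner ℂ (∫ x in X₁, (ω x) ^ 2 • (ContinuousLinearMap.adjoint (L x)) ((L x) f) ∂μ) f : ℂ).re - ‖∫ x in X₁, (ω x) ^ 2 • (ContinuousLinearMap.adjoint (L x)) ((L x) f) ∂μ‖ ^ 2 ≤ 1 / 4 * ‖f‖ ^ 2 := by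
  intro f
  set M : H := ∫ x in X₁, (ω x) ^ 2 • (ContinuousLinearMap.adjoint (L x)) ((L x) f) ∂μ with hMdef
  -- key identity
  have key : ∀ g : H, (inner ℂ g M : ℂ).re
      = ∫ x in X₁, (ω x) ^ 2 * (inner ℂ ((L x) g) ((L x) f) : ℂ).re ∂μ := by
    intro g
    have h1 : (inner ℂ g M : ℂ)
        = ∫ x in X₁, (inner ℂ g ((ω x) ^ 2 • (ContinuousLinearMap.adjoint (L x)) ((L x) f)) : ℂ) ∂μ := by
      rw [hMdef]
      exact (ContinuousLinearMap.integral_comp_comm (innerSL ℂ g) ((hInt f).restrict)).symm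
    have h2 : Integrable
        (fun x => (inner ℂ g ((ω x) ^ 2 • (ContinuousLinearMap.adjoint (L x)) ((L x) f)) : ℂ))
        (μ.restrict X₁) := (innerSL ℂ g).integrable_comp ((hInt f).restrict)
    rw [h1, aux_int_re_s6 _ _ h2]
    refine integral_congr_ae (Filter.Eventually.of_forall fun x => ?_)
    simp only [aux_smul_re, ContinuousLinearMap.adjoint_inner_right]
  -- the "diagonal" quantity
  set a : H → ℝ := fun g => ∫ x in X₁, (ω x) ^ 2 * ‖(L x) g‖ ^ 2 ∂μ with ha
  have hint1 : ∀ g : H, Integrable (fun x => (ω x) ^ 2 * (inner ℂ ((L x) g) ((L x) f) : ℂ).re)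
      (μ.restrict X₁) := by
    intro g
    have h2 : Integrable
        (fun x => (inner ℂ g ((ω x) ^ 2 • (ContinuousLinearMap.adjoint (L x)) ((L x) f)) : ℂ))
        (μ.restrict X₁) := (innerSL ℂ g).integrable_comp ((hInt f).restrict)
    have := (RCLike.reCLM (K := ℂ)).integrable_comp h2
    refine this.congr (Filter.Eventually.of_forall fun x => ?_)
    simp only [RCLike.reCLM_apply, RCLike.re_to_complex, aux_smul_re,
      ContinuousLinearMap.adjoint_inner_right]
  have keyself : ∀ g : H, (inner ℂ g M : ℂ).re ≤ (a g + a f) / 2 := by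
    intro g
    rw [key g]
    have hint2 : Integrable (fun x => ((ω x) ^ 2 * ‖(L x) g‖ ^ 2 + (ω x) ^ 2 * ‖(L x) f‖ ^ 2) / 2)
        (μ.restrict X₁) := (((hnInt g).restrict).add ((hnInt f).restrict)).div_const 2
    have hmono : ∫ x in X₁, (ω x) ^ 2 * (inner ℂ ((L x) g) ((L x) f) : ℂ).re ∂μ
        ≤ ∫ x in X₁, ((ω x) ^ 2 * ‖(L x) g‖ ^ 2 + (ω x) ^ 2 * ‖(L x) f‖ ^ 2) / 2 ∂μ := by
      refine integral_mono (hint1 g) hint2 fun x => ?_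
      have hcs : (inner ℂ ((L x) g) ((L x) f) : ℂ).re ≤ ‖(L x) g‖ * ‖(L x) f‖ := by
        have := re_inner_le_norm (𝕜 := ℂ) ((L x) g) ((L x) f)
        simpa using this
      have hsq : ‖(L x) g‖ * ‖(L x) f‖ ≤ (‖(L x) g‖ ^ 2 + ‖(L x) f‖ ^ 2) / 2 := by
        nlinarith [sq_nonneg (‖(L x) g‖ - ‖(L x) f‖)]
      have hω2 : (0:ℝ) ≤ (ω x) ^ 2 := sq_nonneg _
      calc (ω x) ^ 2 * (inner ℂ ((L x) g) ((L x) f) : ℂ).re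
          ≤ (ω x) ^ 2 * ((‖(L x) g‖ ^ 2 + ‖(L x) f‖ ^ 2) / 2) :=
            mul_le_mul_of_nonneg_left (hcs.trans hsq) hω2
        _ = ((ω x) ^ 2 * ‖(L x) g‖ ^ 2 + (ω x) ^ 2 * ‖(L x) f‖ ^ 2) / 2 := by ring
    calc ∫ x in X₁, (ω x) ^ 2 * (inner ℂ ((L x) g) ((L x) f) : ℂ).re ∂μ
        ≤ ∫ x in X₁, ((ω x) ^ 2 * ‖(L x) g‖ ^ 2 + (ω x) ^ 2 * ‖(L x) f‖ ^ 2) / 2 ∂μ := hmono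
      _ = (a g + a f) / 2 := by
          rw [ha]
          rw [integral_div, integral_add ((hnInt g).restrict) ((hnInt f).restrict)]
  have ha_le : ∀ g : H, a g ≤ ‖g‖ ^ 2 := by
    intro g
    rw [ha, ← hpar g]
    exact setIntegral_le_integral (hnInt g) (Filter.Eventually.of_forall fun x => by positivity)
  have ha_nonneg : ∀ g : H, 0 ≤ a g := fun g =>
    integral_nonneg fun x => by positivity
  -- Re ⟪f, M⟫ = a f
  have hfa : (inner ℂ f M : ℂ).re = a f := by
    rw [key f, ha]
    refine integral_congr_ae (Filter.Eventually.of_forall fun x => ?_)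
    simp only [aux_norm]
  -- ‖M‖² ≤ a f
  have hMa : ‖M‖ ^ 2 ≤ a f := by
    have h1 : ‖M‖ ^ 2 = (inner ℂ M M : ℂ).re := (aux_norm M).symm
    have h2 := keyself M
    have h3 := ha_le M
    linarith [h1 ▸ h2]
  have hMf : (inner ℂ M f : ℂ).re = a f := by
    have hsymm : (inner ℂ M f : ℂ).re = (inner ℂ f M : ℂ).re := by
      have := inner_re_symm (𝕜 := ℂ) M f
      simpa using this
    rw [hsymm, hfa]
  have hcs : (inner ℂ M f : ℂ).re ≤ ‖M‖ * ‖f‖ := by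
    have := re_inner_le_norm (𝕜 := ℂ) M f
    simpa using this
  constructor
  · rw [hMf]; linarith
  · rw [hMf]
    nlinarith [sq_nonneg (‖M‖ - ‖f‖ / 2), norm_nonneg M, norm_nonneg f]
end

section
/- Let (Λ, F, ω) be a continuous g-fusion frame for H with frame operator S, and let S^{-1/2} denote the positive square root of the positive invertible operator S⁻¹. Then for every f ∈ H, ∫_X ω(x)² ‖Λ_x π_{F(x)} S^{-1/2} f‖² dμ(x) = ‖f‖²; in other words, the transformed family (Λ_x π_{F(x)} S^{-1/2})_{x∈X} with weight ω is a Parseval continuous g-fusion mapping. -/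
open MeasureTheory

theorem stmt_7
    {H : Type*} [NormedAddCommGroup H] [InnerProductSpace ℂ H] [CompleteSpace H]
    {X : Type*} [MeasurableSpace X] (μ : Measure X)
    (ω : X → ℝ) (hω : ∀ x, 0 ≤ ω x) (hωm : Measurable ω)
    {Hx : X → Type*} [∀ x, NormedAddCommGroup (Hx x)]
    [∀ x, InnerProductSpace ℂ (Hx x)] [∀ x, CompleteSpace (Hx x)]
    (K : X → Submodule ℂ H) [∀ x, CompleteSpace (K x)]
    (Λ : (x : X) → (↥(K x) →L[ℂ] Hx x))
    (L : (x : X) → (H →L[ℂ] Hx x))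
    (hL : ∀ x, L x = (Λ x).comp ((K x).orthogonalProjectionOnto))
    (hInt : ∀ f : H, Integrable
      (fun x => (ω x) ^ 2 • (ContinuousLinearMap.adjoint (L x)) ((L x) f)) μ)
    (hnInt : ∀ f : H, Integrable (fun x => (ω x) ^ 2 * ‖(L x) f‖ ^ 2) μ)
    (A B : ℝ) (hA : 0 < A) (hAB : A ≤ B)
    (hlow : ∀ f : H, A * ‖f‖ ^ 2 ≤ ∫ x, (ω x) ^ 2 * ‖(L x) f‖ ^ 2 ∂μ)
    (hupp : ∀ f : H, ∫ x, (ω x) ^ 2 * ‖(L x) f‖ ^ 2 ∂μ ≤ B * ‖f‖ ^ 2)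
    (S Sinv : H →L[ℂ] H)
    (hS : ∀ f : H, S f = ∫ x, (ω x) ^ 2 • (ContinuousLinearMap.adjoint (L x)) ((L x) f) ∂μ)
    (hSpos : S.IsPositive) (hSinv1 : S.comp Sinv = 1) (hSinv2 : Sinv.comp S = 1)
    (R : H →L[ℂ] H) (hRpos : R.IsPositive) (hRR : R.comp R = Sinv)
    :
    ∀ f : H, ∫ x, (ω x) ^ 2 * ‖(L x) (R f)‖ ^ 2 ∂μ = ‖f‖ ^ 2 := by
  have key : ∀ g : H, (inner ℂ g (S g) : ℂ) =
      ((∫ x, (ω x) ^ 2 * ‖(L x) g‖ ^ 2 ∂μ : ℝ) : ℂ) := by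
    intro g
    rw [hS g, ← integral_inner (hInt g) g]
    have h1 : ∀ x, (inner ℂ g ((ω x) ^ 2 • (ContinuousLinearMap.adjoint (L x)) ((L x) g)) : ℂ)
        = (((ω x) ^ 2 * ‖(L x) g‖ ^ 2 : ℝ) : ℂ) := by
      intro x
      have : ((ω x) ^ 2 : ℝ) • (ContinuousLinearMap.adjoint (L x)) ((L x) g)
          = (((ω x) ^ 2 : ℝ) : ℂ) • (ContinuousLinearMap.adjoint (L x)) ((L x) g) :=
        (Complex.coe_smul _ _).symm
      rw [this, inner_smul_right, ContinuousLinearMap.adjoint_inner_right,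
        inner_self_eq_norm_sq_to_K]
      rw [show (RCLike.ofReal ‖(L x) g‖ : ℂ) = ((‖(L x) g‖ : ℝ) : ℂ) from rfl]
      push_cast
      ring
    calc ∫ x, (inner ℂ g ((ω x) ^ 2 • (ContinuousLinearMap.adjoint (L x)) ((L x) g)) : ℂ) ∂μ
        = ∫ x, (((ω x) ^ 2 * ‖(L x) g‖ ^ 2 : ℝ) : ℂ) ∂μ := by simp only [h1]
      _ = ((∫ x, (ω x) ^ 2 * ‖(L x) g‖ ^ 2 ∂μ : ℝ) : ℂ) := integral_ofReal
  -- operator algebra: R S R = 1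
  have hS1 : S * Sinv = 1 := hSinv1
  have hS2 : Sinv * S = 1 := hSinv2
  have hRR' : R * R = Sinv := hRR
  have hcomm : R * Sinv = Sinv * R := by
    rw [← hRR', mul_assoc]
  have h1 : S * R = R * S := by
    calc S * R = (S * R) * (Sinv * S) := by rw [hS2, mul_one]
      _ = S * (R * Sinv) * S := by noncomm_ring
      _ = S * (Sinv * R) * S := by rw [hcomm]
      _ = (S * Sinv) * (R * S) := by noncomm_ring
      _ = R * S := by rw [hS1, one_mul]
  have hRSR : R * (S * R) = 1 := by
    rw [h1, ← mul_assoc, hRR', hS2]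
  intro f
  have hg := key (R f)
  have hsym : (inner ℂ (R f) (S (R f)) : ℂ) = inner ℂ f (R (S (R f))) :=
    hRpos.isSelfAdjoint.isSymmetric f (S (R f))
  have h3 : R (S (R f)) = f := by
    have := congrArg (fun T : H →L[ℂ] H => T f) hRSR
    simpa [ContinuousLinearMap.mul_apply] using this
  rw [hsym, h3, inner_self_eq_norm_sq_to_K] at hg
  rw [show (RCLike.ofReal ‖f‖ : ℂ) = ((‖f‖ : ℝ) : ℂ) from rfl] at hg
  exact_mod_cast hg.symm
end

section
/- Let (Λ, F, ω) be a continuous g-fusion frame for H with frame operator S, and let S^{-1/2} denote the positive square root of S⁻¹. Then for every measurable set X₁ ⊆ X and every f ∈ H: ∫_{X₁} ω(x)² ‖Λ_x π_{F(x)} f‖² dμ(x) − ‖S^{-1/2} 𝓜^{X₁} f‖² = ∫_{X₁ᶜ} ω(x)² ‖Λ_x π_{F(x)} f‖² dμ(x) − ‖S^{-1/2} 𝓜^{X₁ᶜ} f‖². -/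
open MeasureTheory

theorem stmt_8
    {H : Type*} [NormedAddCommGroup H] [InnerProductSpace ℂ H] [CompleteSpace H]
    {X : Type*} [MeasurableSpace X] (μ : Measure X)
    (ω : X → ℝ) (hω : ∀ x, 0 ≤ ω x) (hωm : Measurable ω)
    {Hx : X → Type*} [∀ x, NormedAddCommGroup (Hx x)]
    [∀ x, InnerProductSpace ℂ (Hx x)] [∀ x, CompleteSpace (Hx x)]
    (K : X → Submodule ℂ H) [∀ x, CompleteSpace (K x)]
    (Λ : (x : X) → (↥(K x) →L[ℂ] Hx x))
    (L : (x : X) → (H →L[ℂ] Hx x))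
    (hL : ∀ x, L x = (Λ x).comp ((K x).orthogonalProjectionOnto))
    (hInt : ∀ f : H, Integrable
      (fun x => (ω x) ^ 2 • (ContinuousLinearMap.adjoint (L x)) ((L x) f)) μ)
    (hnInt : ∀ f : H, Integrable (fun x => (ω x) ^ 2 * ‖(L x) f‖ ^ 2) μ)
    (A B : ℝ) (hA : 0 < A) (hAB : A ≤ B)
    (hlow : ∀ f : H, A * ‖f‖ ^ 2 ≤ ∫ x, (ω x) ^ 2 * ‖(L x) f‖ ^ 2 ∂μ)
    (hupp : ∀ f : H, ∫ x, (ω x) ^ 2 * ‖(L x) f‖ ^ 2 ∂μ ≤ B * ‖f‖ ^ 2)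
    (S Sinv : H →L[ℂ] H)
    (hS : ∀ f : H, S f = ∫ x, (ω x) ^ 2 • (ContinuousLinearMap.adjoint (L x)) ((L x) f) ∂μ)
    (hSpos : S.IsPositive) (hSinv1 : S.comp Sinv = 1) (hSinv2 : Sinv.comp S = 1)
    (R : H →L[ℂ] H) (hRpos : R.IsPositive) (hRR : R.comp R = Sinv)
    (X₁ : Set X) (hX₁ : MeasurableSet X₁)
    :
    ∀ f : H,
      (∫ x in X₁, (ω x) ^ 2 * ‖(L x) f‖ ^ 2 ∂μ) - ‖R (∫ x in X₁, (ω x) ^ 2 • (ContinuousLinearMap.adjoint (L x)) ((L x) f) ∂μ)‖ ^ 2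
        = (∫ x in X₁ᶜ, (ω x) ^ 2 * ‖(L x) f‖ ^ 2 ∂μ) - ‖R (∫ x in X₁ᶜ, (ω x) ^ 2 • (ContinuousLinearMap.adjoint (L x)) ((L x) f) ∂μ)‖ ^ 2 := by
  intro f
  have hg : Integrable (fun x => (ω x) ^ 2 • (ContinuousLinearMap.adjoint (L x)) ((L x) f)) μ :=
    hInt f
  set g : X → H := fun x => (ω x) ^ 2 • (ContinuousLinearMap.adjoint (L x)) ((L x) f) with hgdef
  set M := ∫ x in X₁, g x ∂μ with hMdef
  set N := ∫ x in X₁ᶜ, g x ∂μ with hNdef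
  have hMN : M + N = S f := by
    rw [hS, hMdef, hNdef]
    exact integral_add_compl hX₁ hg
  -- self-adjointness of R and Sinv
  have hRsa : ContinuousLinearMap.adjoint R = R :=
    ContinuousLinearMap.isSelfAdjoint_iff'.mp hRpos.isSelfAdjoint
  have hSinvSA : ContinuousLinearMap.adjoint Sinv = Sinv := by
    rw [← hRR, ContinuousLinearMap.adjoint_comp, hRsa]
  -- pointwise identity
  have hpt : ∀ x, (ω x) ^ 2 * ‖(L x) f‖ ^ 2 = RCLike.re (inner ℂ f (g x) : ℂ) := by
    intro x
    rw [hgdef]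
    simp only
    rw [RCLike.real_smul_eq_coe_smul (K := ℂ), inner_smul_right,
      ContinuousLinearMap.adjoint_inner_right, inner_self_eq_norm_sq_to_K]
    simp [← Complex.ofReal_pow]
  have key : ∀ Y : Set X, (∫ x in Y, (ω x) ^ 2 * ‖(L x) f‖ ^ 2 ∂μ)
      = RCLike.re (inner ℂ f (∫ x in Y, g x ∂μ) : ℂ) := by
    intro Y
    rw [← integral_inner (hg.integrableOn (s := Y)) f,
      ← integral_re ((hg.integrableOn (s := Y)).const_inner f)]
    exact integral_congr_ae (Filter.Eventually.of_forall fun x => hpt x)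
  have hnorm : ∀ v : H, ‖R v‖ ^ 2 = RCLike.re (inner ℂ v (Sinv v) : ℂ) := by
    intro v
    rw [← inner_self_eq_norm_sq (𝕜 := ℂ)]
    congr 1
    calc (inner ℂ (R v) (R v) : ℂ)
        = inner ℂ v (ContinuousLinearMap.adjoint R (R v)) :=
          (ContinuousLinearMap.adjoint_inner_right R v (R v)).symm
      _ = inner ℂ v (R (R v)) := by rw [hRsa]
      _ = inner ℂ v (Sinv v) := by rw [← hRR]; rfl
  have hf : Sinv M + Sinv N = f := by
    have h1 : Sinv (M + N) = Sinv (S f) := by rw [hMN]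
    have h2 : Sinv (S f) = f := by
      have := congrArg (fun T : H →L[ℂ] H => T f) hSinv2
      simpa using this
    rw [map_add] at h1
    rw [h1, h2]
  have hfM : f - Sinv M = Sinv N := by rw [← hf]; abel
  have hfN : f - Sinv N = Sinv M := by rw [← hf]; abel
  rw [key X₁, key X₁ᶜ, hnorm, hnorm]
  have e1 : RCLike.re (inner ℂ f M : ℂ) - RCLike.re (inner ℂ M (Sinv M) : ℂ)
      = RCLike.re (inner ℂ M (Sinv N) : ℂ) := by
    rw [inner_re_symm, ← map_sub, ← inner_sub_right, hfM]
  have e2 : RCLike.re (inner ℂ f N : ℂ) - RCLike.re (inner ℂ N (Sinv N) : ℂ)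
      = RCLike.re (inner ℂ N (Sinv M) : ℂ) := by
    rw [inner_re_symm, ← map_sub, ← inner_sub_right, hfN]
  have e3 : RCLike.re (inner ℂ M (Sinv N) : ℂ) = RCLike.re (inner ℂ N (Sinv M) : ℂ) := by
    conv_lhs => rw [← hSinvSA]
    rw [ContinuousLinearMap.adjoint_inner_right, inner_re_symm]
  rw [e1, e2, e3]
end

section
/- Let (Λ, F, ω) be a continuous g-fusion frame for H with frame operator S. Then for every measurable set X₁ ⊆ X, 0 ≤ 𝓜^{X₁} − 𝓜^{X₁} S⁻¹ 𝓜^{X₁} ≤ (1/4)·S in the sense of operator order; that is, for every f ∈ H, 0 ≤ ⟨𝓜^{X₁} f, f⟩ − ⟨S⁻¹ 𝓜^{X₁} f, 𝓜^{X₁} f⟩ ≤ (1/4)⟨S f, f⟩. -/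
open MeasureTheory

theorem stmt_9
    {H : Type*} [NormedAddCommGroup H] [InnerProductSpace ℂ H] [CompleteSpace H]
    {X : Type*} [MeasurableSpace X] (μ : Measure X)
    (ω : X → ℝ) (hω : ∀ x, 0 ≤ ω x) (hωm : Measurable ω)
    {Hx : X → Type*} [∀ x, NormedAddCommGroup (Hx x)]
    [∀ x, InnerProductSpace ℂ (Hx x)] [∀ x, CompleteSpace (Hx x)]
    (K : X → Submodule ℂ H) [∀ x, CompleteSpace (K x)]
    (Λ : (x : X) → (↥(K x) →L[ℂ] Hx x))
    (L : (x : X) → (H →L[ℂ] Hx x))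
    (hL : ∀ x, L x = (Λ x).comp (Submodule.orthogonalProjectionOnto (K x)))
    (hInt : ∀ f : H, Integrable
      (fun x => (ω x) ^ 2 • (ContinuousLinearMap.adjoint (L x)) ((L x) f)) μ)
    (hnInt : ∀ f : H, Integrable (fun x => (ω x) ^ 2 * ‖(L x) f‖ ^ 2) μ)
    (A B : ℝ) (hA : 0 < A) (hAB : A ≤ B)
    (hlow : ∀ f : H, A * ‖f‖ ^ 2 ≤ ∫ x, (ω x) ^ 2 * ‖(L x) f‖ ^ 2 ∂μ)
    (hupp : ∀ f : H, ∫ x, (ω x) ^ 2 * ‖(L x) f‖ ^ 2 ∂μ ≤ B * ‖f‖ ^ 2)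
    (S Sinv : H →L[ℂ] H)
    (hS : ∀ f : H, S f = ∫ x, (ω x) ^ 2 • (ContinuousLinearMap.adjoint (L x)) ((L x) f) ∂μ)
    (hSpos : S.IsPositive) (hSinv1 : S.comp Sinv = 1) (hSinv2 : Sinv.comp S = 1)
    (X₁ : Set X) (hX₁ : MeasurableSet X₁)
    :
    ∀ f : H,
      0 ≤ (inner ℂ (∫ x in X₁, (ω x) ^ 2 • (ContinuousLinearMap.adjoint (L x)) ((L x) f) ∂μ) f : ℂ).re
            - (inner ℂ (Sinv (∫ x in X₁, (ω x) ^ 2 • (ContinuousLinearMap.adjoint (L x)) ((L x) f) ∂μ)) (∫ x in X₁, (ω x) ^ 2 • (ContinuousLinearMap.adjoint (L x)) ((L x) f) ∂μ) : ℂ).re ∧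
      (inner ℂ (∫ x in X₁, (ω x) ^ 2 • (ContinuousLinearMap.adjoint (L x)) ((L x) f) ∂μ) f : ℂ).re
          - (inner ℂ (Sinv (∫ x in X₁, (ω x) ^ 2 • (ContinuousLinearMap.adjoint (L x)) ((L x) f) ∂μ)) (∫ x in X₁, (ω x) ^ 2 • (ContinuousLinearMap.adjoint (L x)) ((L x) f) ∂μ) : ℂ).re
        ≤ 1 / 4 * (inner ℂ (S f) f : ℂ).re := by
  intro f
  classical
  set Mi : Set X → H → H := fun s v =>
    ∫ x in s, (ω x) ^ 2 • (ContinuousLinearMap.adjoint (L x)) ((L x) v) ∂μ with hMi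
  -- inner ℂ product formula for set integrals
  have key : ∀ (s : Set X) (u v : H),
      (inner ℂ (Mi s u) v : ℂ) = ∫ x in s, ((ω x : ℂ)) ^ 2 * (inner ℂ ((L x) u) ((L x) v) : ℂ) ∂μ := by
    intro s u v
    have h0 : (inner ℂ v (Mi s u) : ℂ)
        = ∫ x in s, (inner ℂ v ((ω x) ^ 2 • (ContinuousLinearMap.adjoint (L x)) ((L x) u)) : ℂ) ∂μ := by
      simp only [hMi]
      exact ((innerSL ℂ v).integral_comp_comm ((hInt u).restrict)).symm
    have h1 : (inner ℂ v (Mi s u) : ℂ)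
        = ∫ x in s, ((ω x : ℂ)) ^ 2 * (inner ℂ ((L x) v) ((L x) u) : ℂ) ∂μ := by
      rw [h0]
      refine integral_congr_ae (Filter.Eventually.of_forall fun x => ?_)
      beta_reduce
      rw [RCLike.real_smul_eq_coe_smul (K := ℂ), inner_smul_right,
        ContinuousLinearMap.adjoint_inner_right]
      norm_cast
    rw [← inner_conj_symm, h1, ← integral_conj]
    refine integral_congr_ae (Filter.Eventually.of_forall fun x => ?_)
    beta_reduce
    simp [map_mul, inner_conj_symm, Complex.conj_ofReal, ← Complex.ofReal_pow]
  -- quadratic form is a real nonnegative integral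
  have qform : ∀ (s : Set X) (u : H),
      (inner ℂ (Mi s u) u : ℂ) = ((∫ x in s, (ω x) ^ 2 * ‖(L x) u‖ ^ 2 ∂μ : ℝ) : ℂ) := by
    intro s u
    have hcoe : ∫ x in s, (((ω x) ^ 2 * ‖(L x) u‖ ^ 2 : ℝ) : ℂ) ∂μ
        = ((∫ x in s, (ω x) ^ 2 * ‖(L x) u‖ ^ 2 ∂μ : ℝ) : ℂ) := integral_ofReal
    rw [key, ← hcoe]
    refine integral_congr_ae (Filter.Eventually.of_forall fun x => ?_)
    beta_reduce
    rw [inner_self_eq_norm_sq_to_K]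
    norm_cast
    exact (Complex.ofReal_mul _ _).symm
  have qnonneg : ∀ (s : Set X) (u : H), 0 ≤ (inner ℂ (Mi s u) u : ℂ).re := by
    intro s u
    rw [qform]
    simp only [Complex.ofReal_re]
    exact integral_nonneg fun x => mul_nonneg (sq_nonneg _) (sq_nonneg _)
  -- hermitian symmetry
  have herm : ∀ (s : Set X) (u v : H),
      (inner ℂ (Mi s u) v : ℂ) = (starRingEnd ℂ) (inner ℂ (Mi s v) u : ℂ) := by
    intro s u v
    rw [key, key, ← integral_conj]
    refine integral_congr_ae (Filter.Eventually.of_forall fun x => ?_)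
    beta_reduce
    simp [map_mul, inner_conj_symm, Complex.conj_ofReal, ← Complex.ofReal_pow]
  -- additivity in the vector variable
  have subM : ∀ (s : Set X) (u v : H), Mi s (u - v) = Mi s u - Mi s v := by
    intro s u v
    simp only [hMi, map_sub, smul_sub]
    exact integral_sub ((hInt u).restrict) ((hInt v).restrict)
  -- splitting over X₁ and its complement
  have split : ∀ v : H, Mi X₁ v + Mi X₁ᶜ v = S v := by
    intro v
    simp only [hS, hMi]
    exact integral_add_compl hX₁ (hInt v)
  set m : H := Mi X₁ f with hm
  set g : H := Sinv m with hg
  have hSg : S g = m := by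
    have : S (Sinv m) = (S.comp Sinv) m := rfl
    rw [hg, this, hSinv1, ContinuousLinearMap.one_apply]
  -- self-adjointness of S
  have hsa : ∀ x y : H, (inner ℂ (S x) y : ℂ) = (inner ℂ x (S y) : ℂ) := by
    intro x y
    have h := hSpos.1
    exact h x y
  have reSymm : ∀ x y : H, (inner ℂ x y : ℂ).re = (inner ℂ y x : ℂ).re := by
    intro x y
    rw [← inner_conj_symm, Complex.conj_re]
  set a : ℝ := (inner ℂ m f : ℂ).re with ha
  set p : ℝ := (inner ℂ g m : ℂ).re with hp
  have hpm : (inner ℂ m g : ℂ).re = p := by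
    rw [hp]
    exact reSymm m g
  have hMgf : (inner ℂ (Mi X₁ g) f : ℂ).re = p := by
    rw [herm X₁ g f]
    rw [Complex.conj_re, hpm]
  set qg : ℝ := (inner ℂ (Mi X₁ g) g : ℂ).re with hqg
  -- identity 1 : re ⟪M (f-g), f-g⟫ = a - 2p + qg
  have e1 : (inner ℂ (Mi X₁ (f - g)) (f - g) : ℂ).re = a - 2 * p + qg := by
    rw [subM, inner_sub_left, inner_sub_right, inner_sub_right]
    simp only [Complex.sub_re]
    rw [hMgf, hpm, ← ha, ← hqg]
    ring
  -- identity 2 : re ⟪N g, g⟫ = p - qg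
  have e2 : (inner ℂ (Mi X₁ᶜ g) g : ℂ).re = p - qg := by
    have hN : Mi X₁ᶜ g = m - Mi X₁ g := by
      have := split g
      rw [hSg] at this
      linear_combination (norm := abel) this
    rw [hN, inner_sub_left]
    simp only [Complex.sub_re]
    rw [hpm, ← hqg]
  -- lower bound
  have lower : 0 ≤ a - p := by
    have h1 := qnonneg X₁ (f - g)
    have h2 := qnonneg X₁ᶜ g
    rw [e1] at h1
    rw [e2] at h2
    linarith
  -- upper bound via positivity of S at f - 2g
  have upper : a - p ≤ 1 / 4 * (inner ℂ (S f) f : ℂ).re := by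
    have hpos : 0 ≤ (inner ℂ (S (f - (2 : ℂ) • g)) (f - (2 : ℂ) • g) : ℂ).re :=
      (Complex.nonneg_iff.mp (hSpos.inner_nonneg_left (f - (2 : ℂ) • g))).1
    have expand : (inner ℂ (S (f - (2 : ℂ) • g)) (f - (2 : ℂ) • g) : ℂ)
        = inner ℂ (S f) f - 2 * inner ℂ (S f) g - 2 * inner ℂ m f + 4 * inner ℂ m g := by
      rw [map_sub, S.map_smul, hSg, inner_sub_left, inner_sub_right, inner_sub_right,
        inner_smul_left, inner_smul_right, inner_smul_left, inner_smul_right]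
      simp only [map_ofNat]
      ring
    have hSfg : (inner ℂ (S f) g : ℂ).re = a := by
      rw [hsa f g, hSg, reSymm f m, ← ha]
    have hexp : (inner ℂ (S (f - (2 : ℂ) • g)) (f - (2 : ℂ) • g) : ℂ).re
        = (inner ℂ (S f) f : ℂ).re - 4 * a + 4 * p := by
      rw [expand]
      simp only [Complex.sub_re, Complex.add_re, Complex.mul_re, Complex.re_ofNat,
        Complex.im_ofNat]
      rw [hSfg, hpm, ← ha]
      ring
    rw [hexp] at hpos
    linarith
  exact ⟨lower, upper⟩
end

section
/- Let (Λ, F, ω) be a continuous g-fusion frame for H with frame operator S, and let S^{-1/2} denote the positive square root of S⁻¹. Then for every measurable set X₁ ⊆ X and every f ∈ H: ∫_{X₁} ω(x)² ‖Λ_x π_{F(x)} f‖² dμ(x) + ‖S^{-1/2} 𝓜^{X₁ᶜ} f‖² ≥ (3/4)·‖S⁻¹‖⁻¹·‖f‖². -/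
open MeasureTheory

theorem stmt_10
    {H : Type*} [NormedAddCommGroup H] [InnerProductSpace ℂ H] [CompleteSpace H]
    {X : Type*} [MeasurableSpace X] (μ : Measure X)
    (ω : X → ℝ) (hω : ∀ x, 0 ≤ ω x) (hωm : Measurable ω)
    {Hx : X → Type*} [∀ x, NormedAddCommGroup (Hx x)]
    [∀ x, InnerProductSpace ℂ (Hx x)] [∀ x, CompleteSpace (Hx x)]
    (K : X → Submodule ℂ H) [∀ x, CompleteSpace (K x)]
    (Λ : (x : X) → (↥(K x) →L[ℂ] Hx x))
    (L : (x : X) → (H →L[ℂ] Hx x))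
    (hL : ∀ x, L x = (Λ x).comp (Submodule.orthogonalProjectionOnto (K x)))
    (hInt : ∀ f : H, Integrable
      (fun x => (ω x) ^ 2 • (ContinuousLinearMap.adjoint (L x)) ((L x) f)) μ)
    (hnInt : ∀ f : H, Integrable (fun x => (ω x) ^ 2 * ‖(L x) f‖ ^ 2) μ)
    (A B : ℝ) (hA : 0 < A) (hAB : A ≤ B)
    (hlow : ∀ f : H, A * ‖f‖ ^ 2 ≤ ∫ x, (ω x) ^ 2 * ‖(L x) f‖ ^ 2 ∂μ)
    (hupp : ∀ f : H, ∫ x, (ω x) ^ 2 * ‖(L x) f‖ ^ 2 ∂μ ≤ B * ‖f‖ ^ 2)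
    (S Sinv : H →L[ℂ] H)
    (hS : ∀ f : H, S f = ∫ x, (ω x) ^ 2 • (ContinuousLinearMap.adjoint (L x)) ((L x) f) ∂μ)
    (hSpos : S.IsPositive) (hSinv1 : S.comp Sinv = 1) (hSinv2 : Sinv.comp S = 1)
    (R : H →L[ℂ] H) (hRpos : R.IsPositive) (hRR : R.comp R = Sinv)
    (X₁ : Set X) (hX₁ : MeasurableSet X₁)
    :
    ∀ f : H,
      3 / 4 * ‖Sinv‖⁻¹ * ‖f‖ ^ 2
        ≤ (∫ x in X₁, (ω x) ^ 2 * ‖(L x) f‖ ^ 2 ∂μ) + ‖R (∫ x in X₁ᶜ, (ω x) ^ 2 • (ContinuousLinearMap.adjoint (L x)) ((L x) f) ∂μ)‖ ^ 2 := by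
  intro f
  have hRadj : ContinuousLinearMap.adjoint R = R :=
    ContinuousLinearMap.isSelfAdjoint_iff'.mp hRpos.isSelfAdjoint
  have hRsym : ∀ u v : H, (inner ℂ (R u) v : ℂ) = inner ℂ u (R v) := by
    intro u v
    conv_lhs => rw [← hRadj]
    exact ContinuousLinearMap.adjoint_inner_left R v u
  have hRRx : ∀ x : H, R (R x) = Sinv x := by
    intro x; rw [← hRR]; rfl
  have hSSinv : ∀ x : H, S (Sinv x) = x := by
    intro x; have := congrArg (fun T : H →L[ℂ] H => T x) hSinv1; simpa using this
  have hSinvS : ∀ x : H, Sinv (S x) = x := by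
    intro x; have := congrArg (fun T : H →L[ℂ] H => T x) hSinv2; simpa using this
  have hRSinv : ∀ x : H, R (Sinv x) = Sinv (R x) := by
    intro x; rw [← hRRx x]; exact hRRx (R x)
  have hSR : ∀ x : H, S (R x) = R (S x) := by
    intro x
    calc S (R x) = S (R (Sinv (S x))) := by rw [hSinvS]
      _ = S (Sinv (R (S x))) := by rw [hRSinv]
      _ = R (S x) := hSSinv _
  set g : H := R (S f) with hg
  have hRg : R g = f := by rw [hg, hRRx, hSinvS]
  set M₁ : H := ∫ x in X₁, (ω x) ^ 2 • (ContinuousLinearMap.adjoint (L x)) ((L x) f) ∂μ with hM₁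
  set M₂ : H := ∫ x in X₁ᶜ, (ω x) ^ 2 • (ContinuousLinearMap.adjoint (L x)) ((L x) f) ∂μ with hM₂
  have hsplit : M₁ + M₂ = S f := by
    rw [hS, hM₁, hM₂]; exact integral_add_compl hX₁ (hInt f)
  -- inner with set integral
  have hinner : ∀ s : Set X,
      (inner ℂ f (∫ x in s, (ω x) ^ 2 • (ContinuousLinearMap.adjoint (L x)) ((L x) f) ∂μ) : ℂ)
        = ((∫ x in s, (ω x) ^ 2 * ‖(L x) f‖ ^ 2 ∂μ : ℝ) : ℂ) := by
    intro s
    rw [← integral_inner ((hInt f).restrict) f]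
    rw [show ((∫ x in s, (ω x) ^ 2 * ‖(L x) f‖ ^ 2 ∂μ : ℝ) : ℂ)
        = ∫ x in s, (((ω x) ^ 2 * ‖(L x) f‖ ^ 2 : ℝ) : ℂ) ∂μ from (integral_ofReal (𝕜 := ℂ)).symm]
    refine integral_congr_ae (Filter.Eventually.of_forall fun x => ?_)
    simp only [← Complex.coe_smul, inner_smul_right,
      ContinuousLinearMap.adjoint_inner_right, inner_self_eq_norm_sq_to_K]
    simp only [show ((RCLike.ofReal : ℝ → ℂ)) = Complex.ofReal from rfl]
    push_cast
    ring
  have hI₁ : (∫ x in X₁, (ω x) ^ 2 * ‖(L x) f‖ ^ 2 ∂μ) = (inner ℂ f M₁ : ℂ).re := by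
    rw [hM₁, hinner X₁, Complex.ofReal_re]
  have hfSf : (inner ℂ f (S f) : ℂ).re = ‖g‖ ^ 2 := by
    have : (inner ℂ f (S f) : ℂ) = inner ℂ g g := by
      conv_lhs => rw [← hRg]
      rw [hRsym, hSR, hRRx (S g), hSinvS]
    rw [this]
    simpa using inner_self_eq_norm_sq (𝕜 := ℂ) g
  have hfM₂ : (inner ℂ f M₂ : ℂ).re = (inner ℂ g (R M₂) : ℂ).re := by
    conv_lhs => rw [← hRg]
    rw [hRsym]
  have hkey : (∫ x in X₁, (ω x) ^ 2 * ‖(L x) f‖ ^ 2 ∂μ)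
      = ‖g‖ ^ 2 - (inner ℂ g (R M₂) : ℂ).re := by
    rw [hI₁, ← hfM₂, ← hfSf, ← hsplit, inner_add_right, Complex.add_re]
    ring
  have habs : (inner ℂ g (R M₂) : ℂ).re ≤ ‖g‖ * ‖R M₂‖ := by simpa using re_inner_le_norm (𝕜 := ℂ) g (R M₂)
  have hnormSinv : ‖Sinv‖ = ‖R‖ * ‖R‖ := by
    have h1 : Sinv = (ContinuousLinearMap.adjoint R).comp R := by rw [hRadj, hRR]
    rw [h1, ContinuousLinearMap.norm_adjoint_comp_self]
  have hfg : ‖f‖ ≤ ‖R‖ * ‖g‖ := by rw [← hRg]; exact R.le_opNorm g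
  have h34 : 3 / 4 * ‖g‖ ^ 2 ≤ ‖g‖ ^ 2 - (inner ℂ g (R M₂) : ℂ).re + ‖R M₂‖ ^ 2 := by
    nlinarith [habs, sq_nonneg (‖g‖ - 2 * ‖R M₂‖)]
  have hlast : 3 / 4 * ‖Sinv‖⁻¹ * ‖f‖ ^ 2 ≤ 3 / 4 * ‖g‖ ^ 2 := by
    rcases eq_or_lt_of_le (norm_nonneg Sinv) with h0 | h0
    · rw [← h0]
      simp only [inv_zero, mul_zero, zero_mul]
      positivity
    · have : ‖Sinv‖⁻¹ * ‖f‖ ^ 2 ≤ ‖g‖ ^ 2 := by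
        rw [inv_mul_le_iff₀ h0, hnormSinv]
        nlinarith [hfg, norm_nonneg f, norm_nonneg g, norm_nonneg R]
      linarith
  rw [hkey]
  linarith
end

section
/- Let (Λ, F, ω) be a continuous g-fusion frame for H with frame operator S (with canonical dual family Λ̃_x = Λ_x π_{F(x)} S⁻¹, for which ∫_X ω(x)²‖Λ_x π_{F(x)} S⁻¹ g‖² dμ(x) = ⟨S⁻¹ g, g⟩ for all g ∈ H). Then for every measurable set X₁ ⊆ X and every f ∈ H: ∫_{X₁} ω(x)² ‖Λ_x π_{F(x)} f‖² dμ(x) − ∫_X ω(x)² ‖Λ_x π_{F(x)} S⁻¹ (𝓜^{X₁} f)‖² dμ(x) = ∫_{X₁ᶜ} ω(x)² ‖Λ_x π_{F(x)} f‖² dμ(x) − ∫_X ω(x)² ‖Λ_x π_{F(x)} S⁻¹ (𝓜^{X₁ᶜ} f)‖² dμ(x). -/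
open MeasureTheory

section Aux

variable {H : Type*} [NormedAddCommGroup H] [InnerProductSpace ℂ H] [CompleteSpace H]
  {X : Type*} [MeasurableSpace X]

local notation "⟪" x ", " y "⟫" => @inner ℂ _ _ x y

lemma stmt11_key {Hx : X → Type*} [∀ x, NormedAddCommGroup (Hx x)]
    [∀ x, InnerProductSpace ℂ (Hx x)] [∀ x, CompleteSpace (Hx x)]
    (ω : X → ℝ) (L : (x : X) → (H →L[ℂ] Hx x)) (g : H) (ν : Measure X)
    (hi : Integrable (fun x => (ω x) ^ 2 • (ContinuousLinearMap.adjoint (L x)) ((L x) g)) ν) :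
    ∫ x, (ω x) ^ 2 * ‖(L x) g‖ ^ 2 ∂ν
      = Complex.re ⟪g, ∫ x, (ω x) ^ 2 • (ContinuousLinearMap.adjoint (L x)) ((L x) g) ∂ν⟫ := by
  rw [← integral_inner hi g]
  have heq : ∀ x, (inner ℂ g ((ω x) ^ 2 • (ContinuousLinearMap.adjoint (L x)) ((L x) g)) : ℂ)
      = (((ω x) ^ 2 * ‖(L x) g‖ ^ 2 : ℝ) : ℂ) := by
    intro x
    rw [RCLike.real_smul_eq_coe_smul (K := ℂ), inner_smul_right,
      ContinuousLinearMap.adjoint_inner_right, inner_self_eq_norm_sq_to_K]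
    push_cast
    norm_num
  simp_rw [heq]
  have : (∫ x, (((ω x) ^ 2 * ‖(L x) g‖ ^ 2 : ℝ) : ℂ) ∂ν)
      = (((∫ x, (ω x) ^ 2 * ‖(L x) g‖ ^ 2 ∂ν : ℝ)) : ℂ) := integral_ofReal
  rw [this, Complex.ofReal_re]

end Aux

theorem stmt_11
    {H : Type*} [NormedAddCommGroup H] [InnerProductSpace ℂ H] [CompleteSpace H]
    {X : Type*} [MeasurableSpace X] (μ : Measure X)
    (ω : X → ℝ) (hω : ∀ x, 0 ≤ ω x) (hωm : Measurable ω)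
    {Hx : X → Type*} [∀ x, NormedAddCommGroup (Hx x)]
    [∀ x, InnerProductSpace ℂ (Hx x)] [∀ x, CompleteSpace (Hx x)]
    (K : X → Submodule ℂ H) [∀ x, CompleteSpace (K x)]
    (Λ : (x : X) → (↥(K x) →L[ℂ] Hx x))
    (L : (x : X) → (H →L[ℂ] Hx x))
    (hL : ∀ x, L x = (Λ x).comp ((K x).orthogonalProjection))
    (hInt : ∀ f : H, Integrable
      (fun x => (ω x) ^ 2 • (ContinuousLinearMap.adjoint (L x)) ((L x) f)) μ)
    (hnInt : ∀ f : H, Integrable (fun x => (ω x) ^ 2 * ‖(L x) f‖ ^ 2) μ)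
    (A B : ℝ) (hA : 0 < A) (hAB : A ≤ B)
    (hlow : ∀ f : H, A * ‖f‖ ^ 2 ≤ ∫ x, (ω x) ^ 2 * ‖(L x) f‖ ^ 2 ∂μ)
    (hupp : ∀ f : H, ∫ x, (ω x) ^ 2 * ‖(L x) f‖ ^ 2 ∂μ ≤ B * ‖f‖ ^ 2)
    (S Sinv : H →L[ℂ] H)
    (hS : ∀ f : H, S f = ∫ x, (ω x) ^ 2 • (ContinuousLinearMap.adjoint (L x)) ((L x) f) ∂μ)
    (hSpos : S.IsPositive) (hSinv1 : S.comp Sinv = 1) (hSinv2 : Sinv.comp S = 1)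
    (X₁ : Set X) (hX₁ : MeasurableSet X₁)
    :
    ∀ f : H,
      (∫ x in X₁, (ω x) ^ 2 * ‖(L x) f‖ ^ 2 ∂μ)
          - (∫ x, (ω x) ^ 2 * ‖(L x) (Sinv (∫ x in X₁, (ω x) ^ 2 • (ContinuousLinearMap.adjoint (L x)) ((L x) f) ∂μ))‖ ^ 2 ∂μ)
        = (∫ x in X₁ᶜ, (ω x) ^ 2 * ‖(L x) f‖ ^ 2 ∂μ)
          - (∫ x, (ω x) ^ 2 * ‖(L x) (Sinv (∫ x in X₁ᶜ, (ω x) ^ 2 • (ContinuousLinearMap.adjoint (L x)) ((L x) f) ∂μ))‖ ^ 2 ∂μ) := by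
  intro f
  set M : H := ∫ x in X₁, (ω x) ^ 2 • (ContinuousLinearMap.adjoint (L x)) ((L x) f) ∂μ with hM
  set Mc : H := ∫ x in X₁ᶜ, (ω x) ^ 2 • (ContinuousLinearMap.adjoint (L x)) ((L x) f) ∂μ with hMcdef
  have hSS : ∀ g : H, S (Sinv g) = g := by
    intro g
    have := congrArg (fun T : H →L[ℂ] H => T g) hSinv1
    simpa using this
  have hSS' : ∀ g : H, Sinv (S g) = g := by
    intro g
    have := congrArg (fun T : H →L[ℂ] H => T g) hSinv2
    simpa using this
  -- Sinv is self-adjoint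
  have hsa : ∀ a b : H, (inner ℂ (Sinv a) b : ℂ) = inner ℂ a (Sinv b) := by
    intro a b
    have hSadj : ContinuousLinearMap.adjoint S = S := hSpos.isSelfAdjoint.adjoint_eq
    calc (inner ℂ (Sinv a) b : ℂ) = inner ℂ (Sinv a) (S (Sinv b)) := by rw [hSS]
      _ = inner ℂ (Sinv a) ((ContinuousLinearMap.adjoint S) (Sinv b)) := by rw [hSadj]
      _ = inner ℂ (S (Sinv a)) (Sinv b) := ContinuousLinearMap.adjoint_inner_right S _ _
      _ = inner ℂ a (Sinv b) := by rw [hSS]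
  have hsum : M + Mc = S f := by
    rw [hS f, hM, hMcdef]
    exact integral_add_compl hX₁ (hInt f)
  -- rewrite the four integrals
  have e1 : ∫ x in X₁, (ω x) ^ 2 * ‖(L x) f‖ ^ 2 ∂μ = Complex.re (inner ℂ f M : ℂ) :=
    stmt11_key ω L f (μ.restrict X₁) ((hInt f).restrict)
  have e2 : ∫ x in X₁ᶜ, (ω x) ^ 2 * ‖(L x) f‖ ^ 2 ∂μ = Complex.re (inner ℂ f Mc : ℂ) :=
    stmt11_key ω L f (μ.restrict X₁ᶜ) ((hInt f).restrict)
  have e3 : ∀ g : H, ∫ x, (ω x) ^ 2 * ‖(L x) (Sinv g)‖ ^ 2 ∂μ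
      = Complex.re (inner ℂ (Sinv g) g : ℂ) := by
    intro g
    have := stmt11_key ω L (Sinv g) μ (hInt (Sinv g))
    rw [this, ← hS (Sinv g), hSS]
  rw [e1, e2, e3 M, e3 Mc]
  have hMc : Mc = S f - M := by rw [← hsum]; abel
  have key : Complex.re (inner ℂ (Sinv M) (S f) : ℂ) = Complex.re (inner ℂ f M : ℂ) := by
    rw [hsa M (S f), hSS']
    rw [← inner_conj_symm f M, Complex.conj_re]
  have hfMc : (inner ℂ f Mc : ℂ) = inner ℂ f (S f) - inner ℂ f M := by
    rw [hMc, inner_sub_right]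
  have hSinvMc : Sinv Mc = f - Sinv M := by rw [hMc, map_sub, hSS']
  have hrhs : (inner ℂ (Sinv Mc) Mc : ℂ)
      = inner ℂ f (S f) - inner ℂ f M - inner ℂ (Sinv M) (S f) + inner ℂ (Sinv M) M := by
    rw [hSinvMc, hMc]
    simp only [inner_sub_left, inner_sub_right]
    ring
  rw [hfMc, hrhs]
  simp only [Complex.sub_re, Complex.add_re]
  linarith [key]
end

section
/- Let (Λ, F, ω) be a λ-tight continuous g-fusion frame for H (λ > 0). Then for every measurable set X₁ ⊆ X and every f ∈ H the following hold: (a) 0 ≤ λ·∫_{X₁} ω(x)² ‖Λ_x π_{F(x)} f‖² dμ(x) − ‖𝓜^{X₁} f‖² ≤ (λ²/4)‖f‖²; (b) (λ²/2)‖f‖² ≤ ‖𝓜^{X₁} f‖² + ‖𝓜^{X₁ᶜ} f‖² ≤ (3λ²/2)‖f‖²; (c) (3λ²/4)‖f‖² ≤ λ·∫_{X₁} ω(x)² ‖Λ_x π_{F(x)} f‖² dμ(x) + ‖𝓜^{X₁ᶜ} f‖² ≤ λ²‖f‖². -/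
open MeasureTheory
open scoped InnerProductSpace

set_option maxHeartbeats 1000000 in
theorem stmt_12
    {H : Type*} [NormedAddCommGroup H] [InnerProductSpace ℂ H] [CompleteSpace H]
    {X : Type*} [MeasurableSpace X] (μ : Measure X)
    (ω : X → ℝ) (hω : ∀ x, 0 ≤ ω x) (hωm : Measurable ω)
    {Hx : X → Type*} [∀ x, NormedAddCommGroup (Hx x)]
    [∀ x, InnerProductSpace ℂ (Hx x)] [∀ x, CompleteSpace (Hx x)]
    (K : X → Submodule ℂ H) [∀ x, CompleteSpace (K x)]
    (Λ : (x : X) → (↥(K x) →L[ℂ] Hx x))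
    (L : (x : X) → (H →L[ℂ] Hx x))
    (hL : ∀ x, L x = (Λ x).comp (Submodule.orthogonalProjection (K x)))
    (hInt : ∀ f : H, Integrable
      (fun x => (ω x) ^ 2 • (ContinuousLinearMap.adjoint (L x)) ((L x) f)) μ)
    (hnInt : ∀ f : H, Integrable (fun x => (ω x) ^ 2 * ‖(L x) f‖ ^ 2) μ)
    (lam : ℝ) (hlam : 0 < lam)
    (htight : ∀ f : H, ∫ x, (ω x) ^ 2 * ‖(L x) f‖ ^ 2 ∂μ = lam * ‖f‖ ^ 2)
    (X₁ : Set X) (hX₁ : MeasurableSet X₁)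
    :
    ∀ f : H,
      (0 ≤ lam * (∫ x in X₁, (ω x) ^ 2 * ‖(L x) f‖ ^ 2 ∂μ) - ‖∫ x in X₁, (ω x) ^ 2 • (ContinuousLinearMap.adjoint (L x)) ((L x) f) ∂μ‖ ^ 2 ∧
        lam * (∫ x in X₁, (ω x) ^ 2 * ‖(L x) f‖ ^ 2 ∂μ) - ‖∫ x in X₁, (ω x) ^ 2 • (ContinuousLinearMap.adjoint (L x)) ((L x) f) ∂μ‖ ^ 2 ≤ lam ^ 2 / 4 * ‖f‖ ^ 2) ∧
      (lam ^ 2 / 2 * ‖f‖ ^ 2 ≤ ‖∫ x in X₁, (ω x) ^ 2 • (ContinuousLinearMap.adjoint (L x)) ((L x) f) ∂μ‖ ^ 2 + ‖∫ x in X₁ᶜ, (ω x) ^ 2 • (ContinuousLinearMap.adjoint (L x)) ((L x) f) ∂μ‖ ^ 2 ∧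
        ‖∫ x in X₁, (ω x) ^ 2 • (ContinuousLinearMap.adjoint (L x)) ((L x) f) ∂μ‖ ^ 2 + ‖∫ x in X₁ᶜ, (ω x) ^ 2 • (ContinuousLinearMap.adjoint (L x)) ((L x) f) ∂μ‖ ^ 2 ≤ 3 * lam ^ 2 / 2 * ‖f‖ ^ 2) ∧
      (3 * lam ^ 2 / 4 * ‖f‖ ^ 2
          ≤ lam * (∫ x in X₁, (ω x) ^ 2 * ‖(L x) f‖ ^ 2 ∂μ) + ‖∫ x in X₁ᶜ, (ω x) ^ 2 • (ContinuousLinearMap.adjoint (L x)) ((L x) f) ∂μ‖ ^ 2 ∧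
        lam * (∫ x in X₁, (ω x) ^ 2 * ‖(L x) f‖ ^ 2 ∂μ) + ‖∫ x in X₁ᶜ, (ω x) ^ 2 • (ContinuousLinearMap.adjoint (L x)) ((L x) f) ∂μ‖ ^ 2 ≤ lam ^ 2 * ‖f‖ ^ 2) := by
  classical
  -- the integrand, as a function of the vector
  set G : H → X → H := fun h x => (ω x) ^ 2 • (ContinuousLinearMap.adjoint (L x)) ((L x) h)
    with hGdef
  have hGInt : ∀ h : H, Integrable (G h) μ := hInt
  -- pointwise inner product formula
  have hpt : ∀ (c h : H) (x : X),
      ⟪c, G h x⟫_ℂ = (((ω x) ^ 2 : ℝ) : ℂ) * ⟪(L x) c, (L x) h⟫_ℂ := by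
    intro c h x
    simp only [hGdef]
    rw [RCLike.real_smul_eq_coe_smul (K := ℂ), inner_smul_right,
      ContinuousLinearMap.adjoint_inner_right]
    norm_cast
  -- inner product with a set integral
  have key : ∀ (c h : H) (s : Set X),
      ⟪c, ∫ x in s, G h x ∂μ⟫_ℂ
        = ∫ x in s, (((ω x) ^ 2 : ℝ) : ℂ) * ⟪(L x) c, (L x) h⟫_ℂ ∂μ := by
    intro c h s
    rw [← integral_inner ((hGInt h).restrict)]
    exact integral_congr_ae (Filter.Eventually.of_forall fun x => hpt c h x)
  have key2 : ∀ (h : H) (s : Set X),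
      ⟪h, ∫ x in s, G h x ∂μ⟫_ℂ
        = ((∫ x in s, (ω x) ^ 2 * ‖(L x) h‖ ^ 2 ∂μ : ℝ) : ℂ) := by
    intro h s
    calc ⟪h, ∫ x in s, G h x ∂μ⟫_ℂ
        = ∫ x in s, (((ω x) ^ 2 * ‖(L x) h‖ ^ 2 : ℝ) : ℂ) ∂μ := by
          rw [key]
          refine integral_congr_ae (Filter.Eventually.of_forall fun x => ?_)
          simp only [inner_self_eq_norm_sq_to_K]
          push_cast
          ring_nf
          rfl
      _ = _ := integral_ofReal
  -- the frame operator as a linear map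
  have hadd : ∀ (h₁ h₂ : H) (x : X), G (h₁ + h₂) x = G h₁ x + G h₂ x := by
    intro h₁ h₂ x; simp only [hGdef, map_add, smul_add]
  have hsmul : ∀ (c : ℂ) (h : H) (x : X), G (c • h) x = c • G h x := by
    intro c h x; simp only [hGdef, _root_.map_smul]; rw [smul_comm]
  set S : H →ₗ[ℂ] H :=
    { toFun := fun h => ∫ x, G h x ∂μ
      map_add' := fun h₁ h₂ => by
        simp only [hadd]
        exact integral_add (hGInt h₁) (hGInt h₂)
      map_smul' := fun c h => by
        simp only [hsmul, RingHom.id_apply]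
        exact integral_smul c _ } with hSdef
  have hS : ∀ h : H, (∫ x, G h x ∂μ) = (lam : ℂ) • h := by
    have h0 : S - (lam : ℂ) • LinearMap.id = 0 := by
      rw [← inner_map_self_eq_zero]
      intro h
      have h1 : ⟪S h, h⟫_ℂ = ((lam * ‖h‖ ^ 2 : ℝ) : ℂ) := by
        have h1' : ⟪h, S h⟫_ℂ = ((lam * ‖h‖ ^ 2 : ℝ) : ℂ) := by
          show ⟪h, ∫ x, G h x ∂μ⟫_ℂ = _
          rw [← setIntegral_univ, key2, setIntegral_univ, htight]
        rw [← inner_conj_symm, h1', Complex.conj_ofReal]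
      simp only [LinearMap.sub_apply, LinearMap.smul_apply, LinearMap.id_apply,
        inner_sub_left, inner_smul_left, h1, inner_self_eq_norm_sq_to_K,
        Complex.conj_ofReal]
      rw [sub_eq_zero]
      push_cast
      ring_nf
      rfl
    intro h
    have h3 := LinearMap.ext_iff.mp h0 h
    simp only [LinearMap.sub_apply, LinearMap.smul_apply, LinearMap.id_apply,
      LinearMap.zero_apply, sub_eq_zero] at h3
    exact h3
  -- the Cauchy–Schwarz type bound
  have hCSgen : ∀ (h : H) (s : Set X),
      ‖∫ x in s, G h x ∂μ‖ ^ 2 ≤ lam * ∫ x in s, (ω x) ^ 2 * ‖(L x) h‖ ^ 2 ∂μ := by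
    intro h s
    set w := ∫ x in s, G h x ∂μ with hw
    have hint : Integrable (fun x => (((ω x) ^ 2 : ℝ) : ℂ) * ⟪(L x) w, (L x) h⟫_ℂ)
        (μ.restrict s) := by
      have := Integrable.const_inner (𝕜 := ℂ) w ((hGInt h).restrict (s := s))
      exact this.congr (Filter.Eventually.of_forall fun x => hpt w h x)
    have h3 : (‖w‖ : ℝ) ^ 2
        = ∫ x in s, RCLike.re ((((ω x) ^ 2 : ℝ) : ℂ) * ⟪(L x) w, (L x) h⟫_ℂ) ∂μ := by
      rw [integral_re hint, ← key w h s, ← hw, inner_self_eq_norm_sq]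
    have h4 : ∫ x in s, RCLike.re ((((ω x) ^ 2 : ℝ) : ℂ) * ⟪(L x) w, (L x) h⟫_ℂ) ∂μ
        ≤ ∫ x in s, ((1 / (2 * lam)) * ((ω x) ^ 2 * ‖(L x) w‖ ^ 2)
            + (lam / 2) * ((ω x) ^ 2 * ‖(L x) h‖ ^ 2)) ∂μ := by
      refine integral_mono hint.re
        ((((hnInt w).restrict (s := s)).const_mul _).add
          (((hnInt h).restrict (s := s)).const_mul _)) ?_
      intro x
      have hre : RCLike.re ((((ω x) ^ 2 : ℝ) : ℂ) * ⟪(L x) w, (L x) h⟫_ℂ)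
          = (ω x) ^ 2 * RCLike.re ⟪(L x) w, (L x) h⟫_ℂ := by
        simp [RCLike.re_to_complex, Complex.mul_re, ← Complex.ofReal_pow]
      have h5 := re_inner_le_norm (𝕜 := ℂ) ((L x) w) ((L x) h)
      have h6 : (0 : ℝ) ≤ (ω x) ^ 2 := sq_nonneg _
      have h7 : (0 : ℝ) ≤ ‖(L x) w‖ := norm_nonneg _
      have h8 : (0 : ℝ) ≤ ‖(L x) h‖ := norm_nonneg _
      simp only [hre]
      have h9 : ‖(L x) w‖ * ‖(L x) h‖
          ≤ (1 / (2 * lam)) * ‖(L x) w‖ ^ 2 + (lam / 2) * ‖(L x) h‖ ^ 2 := by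
        have e1 : (1 / (2 * lam)) * ‖(L x) w‖ ^ 2 + (lam / 2) * ‖(L x) h‖ ^ 2
            - ‖(L x) w‖ * ‖(L x) h‖
            = ((‖(L x) w‖ - lam * ‖(L x) h‖) ^ 2 + (lam - 1) ^ 2 * 0) / (2 * lam) := by
          field_simp
          ring
        have e2 : (0:ℝ) ≤ ((‖(L x) w‖ - lam * ‖(L x) h‖) ^ 2 + (lam - 1) ^ 2 * 0) / (2 * lam) :=
          div_nonneg (by positivity) (by positivity)
        linarith

      calc (ω x) ^ 2 * RCLike.re ⟪(L x) w, (L x) h⟫_ℂ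
          ≤ (ω x) ^ 2 * (‖(L x) w‖ * ‖(L x) h‖) := by nlinarith
        _ ≤ (ω x) ^ 2 * ((1 / (2 * lam)) * ‖(L x) w‖ ^ 2 + (lam / 2) * ‖(L x) h‖ ^ 2) := by
            nlinarith
        _ = (1 / (2 * lam)) * ((ω x) ^ 2 * ‖(L x) w‖ ^ 2)
            + (lam / 2) * ((ω x) ^ 2 * ‖(L x) h‖ ^ 2) := by ring
    have h10 : ∫ x in s, ((1 / (2 * lam)) * ((ω x) ^ 2 * ‖(L x) w‖ ^ 2)
            + (lam / 2) * ((ω x) ^ 2 * ‖(L x) h‖ ^ 2)) ∂μ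
        = (1 / (2 * lam)) * (∫ x in s, (ω x) ^ 2 * ‖(L x) w‖ ^ 2 ∂μ)
          + (lam / 2) * (∫ x in s, (ω x) ^ 2 * ‖(L x) h‖ ^ 2 ∂μ) := by
      rw [integral_add (((hnInt w).restrict (s := s)).const_mul _)
        (((hnInt h).restrict (s := s)).const_mul _), integral_const_mul, integral_const_mul]
    have h11 : ∫ x in s, (ω x) ^ 2 * ‖(L x) w‖ ^ 2 ∂μ ≤ lam * ‖w‖ ^ 2 := by
      calc ∫ x in s, (ω x) ^ 2 * ‖(L x) w‖ ^ 2 ∂μ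
          ≤ ∫ x, (ω x) ^ 2 * ‖(L x) w‖ ^ 2 ∂μ :=
            setIntegral_le_integral (hnInt w) (Filter.Eventually.of_forall fun x => by positivity)
        _ = lam * ‖w‖ ^ 2 := htight w
    have h12 : (1 / (2 * lam)) * (∫ x in s, (ω x) ^ 2 * ‖(L x) w‖ ^ 2 ∂μ)
        ≤ (1 / (2 * lam)) * (lam * ‖w‖ ^ 2) :=
      mul_le_mul_of_nonneg_left h11 (by positivity)
    have h13 : (1 / (2 * lam)) * (lam * ‖w‖ ^ 2) = ‖w‖ ^ 2 / 2 := by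
      field_simp
    have hA := (h3.le.trans h4).trans h10.le
    linarith [hA, h12, h13]
  -- now the main argument
  intro f
  set u := ∫ x in X₁, G f x ∂μ with hu
  set v := ∫ x in X₁ᶜ, G f x ∂μ with hv
  set a := ∫ x in X₁, (ω x) ^ 2 * ‖(L x) f‖ ^ 2 ∂μ with ha
  set b := ∫ x in X₁ᶜ, (ω x) ^ 2 * ‖(L x) f‖ ^ 2 ∂μ with hb
  have hab : a + b = lam * ‖f‖ ^ 2 := by
    rw [ha, hb, integral_add_compl hX₁ (hnInt f), htight]
  have ha0 : 0 ≤ a := integral_nonneg fun x => by positivity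
  have hb0 : 0 ≤ b := integral_nonneg fun x => by positivity
  have huv : u + v = (lam : ℂ) • f := by
    rw [hu, hv, integral_add_compl hX₁ (hGInt f)]
    exact hS f
  have hCSu : ‖u‖ ^ 2 ≤ lam * a := hCSgen f X₁
  have hCSv : ‖v‖ ^ 2 ≤ lam * b := hCSgen f X₁ᶜ
  have hfu : ⟪f, u⟫_ℂ = (a : ℂ) := key2 f X₁
  have hfa : RCLike.re ⟪f, u⟫_ℂ = a := by rw [hfu]; simp
  have hfa' : a ≤ ‖f‖ * ‖u‖ := hfa ▸ re_inner_le_norm (𝕜 := ℂ) f u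
  have hnormlf : ‖(lam : ℂ) • f‖ = lam * ‖f‖ := by
    rw [norm_smul, Complex.norm_real, Real.norm_eq_abs, abs_of_pos hlam]
  -- ‖v‖² in terms of the rest
  have hvsq : ‖v‖ ^ 2 = lam ^ 2 * ‖f‖ ^ 2 - 2 * lam * a + ‖u‖ ^ 2 := by
    have hveq : v = (lam : ℂ) • f - u := by
      rw [eq_sub_iff_add_eq, add_comm]; exact huv
    have hexp := @norm_sub_sq ℂ _ _ _ _ ((lam : ℂ) • f) u
    have hre : RCLike.re ⟪(lam : ℂ) • f, u⟫_ℂ = lam * a := by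
      rw [inner_smul_left, Complex.conj_ofReal, hfu]
      simp
    rw [hveq, hexp, hre, hnormlf]
    ring
  have hf0 : (0 : ℝ) ≤ ‖f‖ := norm_nonneg _
  have hu0 : (0 : ℝ) ≤ ‖u‖ := norm_nonneg _
  have hv0 : (0 : ℝ) ≤ ‖v‖ := norm_nonneg _
  refine ⟨⟨by linarith, ?_⟩, ⟨?_, ?_⟩, ?_, ?_⟩
  · -- upper bound in (a)
    nlinarith [sq_nonneg (‖u‖ - lam / 2 * ‖f‖), hfa', hlam.le]
  · -- lower bound in (b)
    have htri : ‖u + v‖ ≤ ‖u‖ + ‖v‖ := norm_add_le u v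
    rw [huv, hnormlf] at htri
    nlinarith [sq_nonneg (‖u‖ - ‖v‖), mul_nonneg (mul_nonneg hlam.le hf0) hlam.le]
  · -- upper bound in (b)
    have : ‖u‖ ^ 2 + ‖v‖ ^ 2 ≤ lam ^ 2 * ‖f‖ ^ 2 := by nlinarith
    nlinarith [mul_nonneg (mul_nonneg hlam.le hlam.le) (mul_nonneg hf0 hf0)]
  · -- lower bound in (c)
    nlinarith [sq_nonneg (‖u‖ - lam / 2 * ‖f‖), hfa', hlam.le]
  · -- upper bound in (c)
    nlinarith
end

section
/- Let (Λ, F, ω) be a continuous g-fusion frame for H with upper bound B, and let a : X → ℂ be a bounded measurable function with M_a = sup_{x∈X} |a(x)|; assume that for every f ∈ H the functions x ↦ a(x)·ω(x)² π_{F(x)} Λ_x* Λ_x π_{F(x)} f and x ↦ (1 − a(x))·ω(x)² π_{F(x)} Λ_x* Λ_x π_{F(x)} f are Bochner integrable on X. Then the operators S¹f = ∫_X a(x)·ω(x)² π_{F(x)} Λ_x* Λ_x π_{F(x)} f dμ(x) and S²f = ∫_X (1 − a(x))·ω(x)² π_{F(x)} Λ_x* Λ_x π_{F(x)} f dμ(x)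 are bounded linear operators on H with ‖S¹f‖ ≤ B·M_a·‖f‖ for all f, and their adjoints are given by (S¹)* f = ∫_X conj(a(x))·ω(x)² π_{F(x)} Λ_x* Λ_x π_{F(x)} f dμ(x) and (S²)* f = ∫_X (1 − conj(a(x)))·ω(x)² π_{F(x)} Λ_x* Λ_x π_{F(x)} f dμ(x). -/
open MeasureTheory

section Aux

variable {E G : Type*} [NormedAddCommGroup E] [InnerProductSpace ℂ E] [CompleteSpace E]
  [NormedAddCommGroup G] [InnerProductSpace ℂ G] [CompleteSpace G]

lemma my_pt_left (A : E →L[ℂ] G) (r : ℝ) (c : ℂ) (f g : E) :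
    (inner ℂ (c • (r • (ContinuousLinearMap.adjoint A) (A f))) g : ℂ)
      = (starRingEnd ℂ) c * ((r : ℂ) * inner ℂ (A f) (A g)) := by
  rw [RCLike.real_smul_eq_coe_smul (K := ℂ), inner_smul_left, inner_smul_left,
    RCLike.conj_ofReal, ContinuousLinearMap.adjoint_inner_left]
  norm_cast

lemma my_pt_right (A : E →L[ℂ] G) (r : ℝ) (c : ℂ) (f g : E) :
    (inner ℂ f (c • (r • (ContinuousLinearMap.adjoint A) (A g))) : ℂ)
      = c * ((r : ℂ) * inner ℂ (A f) (A g)) := by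
  rw [RCLike.real_smul_eq_coe_smul (K := ℂ), inner_smul_right, inner_smul_right,
    ContinuousLinearMap.adjoint_inner_right]
  norm_cast

lemma my_inner_integral_left {α : Type*} [MeasurableSpace α] {μ : Measure α}
    {F : α → E} (hF : Integrable F μ) (g : E) :
    (inner ℂ (∫ x, F x ∂μ) g : ℂ) = ∫ x, (inner ℂ (F x) g : ℂ) ∂μ := by
  rw [← inner_conj_symm, ← integral_inner hF g, ← integral_conj]
  simp_rw [inner_conj_symm]

end Aux

section Main

variable {H : Type*} [NormedAddCommGroup H] [InnerProductSpace ℂ H] [CompleteSpace H]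
    {X : Type*} [MeasurableSpace X] {μ : Measure X}
    {Hx : X → Type*} [∀ x, NormedAddCommGroup (Hx x)]
    [∀ x, InnerProductSpace ℂ (Hx x)] [∀ x, CompleteSpace (Hx x)]

lemma my_gfusion_aux (ω : X → ℝ) (L : (x : X) → (H →L[ℂ] Hx x))
    (hnInt : ∀ f : H, Integrable (fun x => (ω x) ^ 2 * ‖(L x) f‖ ^ 2) μ)
    (B : ℝ) (hB : 0 ≤ B)
    (hupp : ∀ f : H, ∫ x, (ω x) ^ 2 * ‖(L x) f‖ ^ 2 ∂μ ≤ B * ‖f‖ ^ 2)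
    (c : X → ℂ) (M : ℝ) (hM0 : 0 ≤ M) (hM : ∀ x, ‖c x‖ ≤ M)
    (hIc : ∀ f : H, Integrable
      (fun x => c x • ((ω x) ^ 2 • (ContinuousLinearMap.adjoint (L x)) ((L x) f))) μ) :
    ∃ S : H →L[ℂ] H,
      (∀ f, S f = ∫ x, c x • ((ω x) ^ 2 • (ContinuousLinearMap.adjoint (L x)) ((L x) f)) ∂μ) ∧
      (∀ f, ‖S f‖ ≤ B * M * ‖f‖) := by
  have key : ∀ f : H,
      ‖∫ x, c x • ((ω x) ^ 2 • (ContinuousLinearMap.adjoint (L x)) ((L x) f)) ∂μ‖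
        ≤ B * M * ‖f‖ := by
    intro f
    set v := ∫ x, c x • ((ω x) ^ 2 • (ContinuousLinearMap.adjoint (L x)) ((L x) f)) ∂μ with hv
    rcases eq_or_ne v 0 with h0 | h0
    · rw [h0, norm_zero]; positivity
    rcases eq_or_ne f 0 with hf0 | hf0
    · exfalso; apply h0; rw [hv]
      have : (fun x => c x • ((ω x) ^ 2 • (ContinuousLinearMap.adjoint (L x)) ((L x) f)))
          = fun _ => (0 : H) := by
        funext x; simp [hf0]
      rw [this, integral_zero]
    have hfpos : 0 < ‖f‖ := norm_pos_iff.mpr hf0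
    have hvpos : 0 < ‖v‖ := norm_pos_iff.mpr h0
    set t : ℝ := ‖v‖ / ‖f‖ with htdef
    have htpos : 0 < t := div_pos hvpos hfpos
    have h1 : (‖v‖ : ℝ) ^ 2 = ‖(inner ℂ v v : ℂ)‖ := by
      rw [inner_self_eq_norm_sq_to_K]
      simp [abs_of_nonneg (norm_nonneg v)]
    have h2 : (inner ℂ v v : ℂ)
        = ∫ x, (inner ℂ (c x • ((ω x) ^ 2 • (ContinuousLinearMap.adjoint (L x)) ((L x) f))) v : ℂ) ∂μ := by
      rw [hv]; exact my_inner_integral_left (hIc f) _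
    have h3 : ∀ x : X,
        ‖(inner ℂ (c x • ((ω x) ^ 2 • (ContinuousLinearMap.adjoint (L x)) ((L x) f))) v : ℂ)‖
          ≤ M * ((t * ((ω x) ^ 2 * ‖(L x) f‖ ^ 2) + ((ω x) ^ 2 * ‖(L x) v‖ ^ 2) / t) / 2) := by
      intro x
      rw [my_pt_left]
      have e1 : ‖(starRingEnd ℂ) (c x) * (((ω x) ^ 2 : ℝ) * (inner ℂ ((L x) f) ((L x) v) : ℂ))‖
          = ‖c x‖ * ((ω x) ^ 2 * ‖(inner ℂ ((L x) f) ((L x) v) : ℂ)‖) := by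
        rw [norm_mul, norm_mul, RCLike.norm_conj, Complex.norm_real,
          Real.norm_eq_abs, abs_of_nonneg (sq_nonneg (ω x))]
      rw [e1]
      have e2 : ‖(inner ℂ ((L x) f) ((L x) v) : ℂ)‖ ≤ ‖(L x) f‖ * ‖(L x) v‖ :=
        norm_inner_le_norm _ _
      have e3 : ‖(L x) f‖ * ‖(L x) v‖ ≤ (t * ‖(L x) f‖ ^ 2 + ‖(L x) v‖ ^ 2 / t) / 2 := by
        have heq : (t * ‖(L x) f‖ ^ 2 + ‖(L x) v‖ ^ 2 / t) / 2 - ‖(L x) f‖ * ‖(L x) v‖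
            = (t * ‖(L x) f‖ - ‖(L x) v‖) ^ 2 / (2 * t) := by
          field_simp; ring
        rw [← sub_nonneg, heq]; positivity
      have e4 : (ω x) ^ 2 * ‖(inner ℂ ((L x) f) ((L x) v) : ℂ)‖
          ≤ (ω x) ^ 2 * ((t * ‖(L x) f‖ ^ 2 + ‖(L x) v‖ ^ 2 / t) / 2) :=
        mul_le_mul_of_nonneg_left (e2.trans e3) (sq_nonneg _)
      calc ‖c x‖ * ((ω x) ^ 2 * ‖(inner ℂ ((L x) f) ((L x) v) : ℂ)‖)
          ≤ M * ((ω x) ^ 2 * ((t * ‖(L x) f‖ ^ 2 + ‖(L x) v‖ ^ 2 / t) / 2)) :=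
            mul_le_mul (hM x) e4 (by positivity) hM0
        _ = M * ((t * ((ω x) ^ 2 * ‖(L x) f‖ ^ 2) + ((ω x) ^ 2 * ‖(L x) v‖ ^ 2) / t) / 2) := by
            ring
    have hfun : (fun x => M * ((t * ((ω x) ^ 2 * ‖(L x) f‖ ^ 2)
          + ((ω x) ^ 2 * ‖(L x) v‖ ^ 2) / t) / 2))
        = fun x => (M * t / 2) * ((ω x) ^ 2 * ‖(L x) f‖ ^ 2)
          + (M / (2 * t)) * ((ω x) ^ 2 * ‖(L x) v‖ ^ 2) := by
      funext x; field_simp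
    have hGint : Integrable (fun x => (M * t / 2) * ((ω x) ^ 2 * ‖(L x) f‖ ^ 2)
        + (M / (2 * t)) * ((ω x) ^ 2 * ‖(L x) v‖ ^ 2)) μ :=
      ((hnInt f).const_mul _).add ((hnInt v).const_mul _)
    have h4 : ‖v‖ ^ 2 ≤ ∫ x, ((M * t / 2) * ((ω x) ^ 2 * ‖(L x) f‖ ^ 2)
        + (M / (2 * t)) * ((ω x) ^ 2 * ‖(L x) v‖ ^ 2)) ∂μ := by
      rw [h1, h2]
      refine le_trans (norm_integral_le_integral_norm _) ?_
      refine integral_mono_of_nonneg (Filter.Eventually.of_forall fun x => norm_nonneg _)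
        hGint (Filter.Eventually.of_forall fun x => ?_)
      calc ‖(inner ℂ (c x • ((ω x) ^ 2 • (ContinuousLinearMap.adjoint (L x)) ((L x) f))) v : ℂ)‖
          ≤ _ := h3 x
        _ = _ := by field_simp
    have h5 : ∫ x, ((M * t / 2) * ((ω x) ^ 2 * ‖(L x) f‖ ^ 2)
        + (M / (2 * t)) * ((ω x) ^ 2 * ‖(L x) v‖ ^ 2)) ∂μ
        = (M * t / 2) * (∫ x, (ω x) ^ 2 * ‖(L x) f‖ ^ 2 ∂μ)
          + (M / (2 * t)) * (∫ x, (ω x) ^ 2 * ‖(L x) v‖ ^ 2 ∂μ) := by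
      rw [integral_add ((hnInt f).const_mul _) ((hnInt v).const_mul _),
        integral_const_mul, integral_const_mul]
    have h6 : (M * t / 2) * (∫ x, (ω x) ^ 2 * ‖(L x) f‖ ^ 2 ∂μ)
          + (M / (2 * t)) * (∫ x, (ω x) ^ 2 * ‖(L x) v‖ ^ 2 ∂μ)
        ≤ (M * t / 2) * (B * ‖f‖ ^ 2) + (M / (2 * t)) * (B * ‖v‖ ^ 2) :=
      add_le_add (mul_le_mul_of_nonneg_left (hupp f) (by positivity))
        (mul_le_mul_of_nonneg_left (hupp v) (by positivity))
    have e : (M * t / 2) * (B * ‖f‖ ^ 2) + (M / (2 * t)) * (B * ‖v‖ ^ 2)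
        = B * M * ‖f‖ * ‖v‖ := by
      rw [htdef]; field_simp; ring
    have h7 : ‖v‖ ^ 2 ≤ B * M * ‖f‖ * ‖v‖ := by
      calc ‖v‖ ^ 2 ≤ _ := h4
        _ = _ := h5
        _ ≤ _ := h6
        _ = _ := e
    nlinarith [h7, hvpos]
  refine ⟨LinearMap.mkContinuous
    { toFun := fun f => ∫ x, c x • ((ω x) ^ 2 • (ContinuousLinearMap.adjoint (L x)) ((L x) f)) ∂μ
      map_add' := ?_
      map_smul' := ?_ } (B * M) key, fun f => rfl, key⟩
  · intro f g
    have : (fun x => c x • ((ω x) ^ 2 • (ContinuousLinearMap.adjoint (L x)) ((L x) (f + g))))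
        = fun x => c x • ((ω x) ^ 2 • (ContinuousLinearMap.adjoint (L x)) ((L x) f))
          + c x • ((ω x) ^ 2 • (ContinuousLinearMap.adjoint (L x)) ((L x) g)) := by
      funext x; simp [map_add, smul_add]
    rw [this, integral_add (hIc f) (hIc g)]
  · intro r f
    have : (fun x => c x • ((ω x) ^ 2 • (ContinuousLinearMap.adjoint (L x)) ((L x) (r • f))))
        = fun x => r • (c x • ((ω x) ^ 2 • (ContinuousLinearMap.adjoint (L x)) ((L x) f))) := by
      funext x
      rw [_root_.map_smul, _root_.map_smul, smul_comm ((ω x) ^ 2) r, smul_comm (c x) r]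
    rw [this, integral_smul]
    rfl

lemma my_gfusion_adj (ω : X → ℝ) (L : (x : X) → (H →L[ℂ] Hx x))
    (c : X → ℂ)
    (hIc : ∀ f : H, Integrable
      (fun x => c x • ((ω x) ^ 2 • (ContinuousLinearMap.adjoint (L x)) ((L x) f))) μ)
    (hIc' : ∀ f : H, Integrable
      (fun x => (starRingEnd ℂ) (c x) • ((ω x) ^ 2 • (ContinuousLinearMap.adjoint (L x)) ((L x) f))) μ)
    (S S' : H →L[ℂ] H)
    (hS : ∀ f, S f = ∫ x, c x • ((ω x) ^ 2 • (ContinuousLinearMap.adjoint (L x)) ((L x) f)) ∂μ)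
    (hS' : ∀ f, S' f = ∫ x, (starRingEnd ℂ) (c x) • ((ω x) ^ 2 • (ContinuousLinearMap.adjoint (L x)) ((L x) f)) ∂μ) :
    ContinuousLinearMap.adjoint S = S' := by
  symm
  rw [ContinuousLinearMap.eq_adjoint_iff]
  intro f g
  rw [hS' f, hS g, my_inner_integral_left (hIc' f) g, ← integral_inner (hIc g) f]
  refine integral_congr_ae (Filter.Eventually.of_forall fun x => ?_)
  dsimp only
  rw [my_pt_left, my_pt_right, Complex.conj_conj]

lemma my_conj_int (ω : X → ℝ) (L : (x : X) → (H →L[ℂ] Hx x))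
    (c : X → ℂ) (hcm : Measurable c)
    (hTm : ∀ f : H, AEStronglyMeasurable
      (fun x => (ω x) ^ 2 • (ContinuousLinearMap.adjoint (L x)) ((L x) f)) μ)
    (hIc : ∀ f : H, Integrable
      (fun x => c x • ((ω x) ^ 2 • (ContinuousLinearMap.adjoint (L x)) ((L x) f))) μ) :
    ∀ f : H, Integrable
      (fun x => (starRingEnd ℂ) (c x) • ((ω x) ^ 2 • (ContinuousLinearMap.adjoint (L x)) ((L x) f))) μ := by
  intro f
  refine (hIc f).norm.mono'
    (((continuous_star.measurable.comp hcm).aestronglyMeasurable).smul (hTm f))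
    (Filter.Eventually.of_forall fun x => ?_)
  simp [norm_smul]

end Main

theorem stmt_13
    {H : Type*} [NormedAddCommGroup H] [InnerProductSpace ℂ H] [CompleteSpace H]
    {X : Type*} [MeasurableSpace X] (μ : Measure X)
    (ω : X → ℝ) (hω : ∀ x, 0 ≤ ω x) (hωm : Measurable ω)
    {Hx : X → Type*} [∀ x, NormedAddCommGroup (Hx x)]
    [∀ x, InnerProductSpace ℂ (Hx x)] [∀ x, CompleteSpace (Hx x)]
    (K : X → Submodule ℂ H) [∀ x, CompleteSpace (K x)]
    (Λ : (x : X) → (↥(K x) →L[ℂ] Hx x))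
    (L : (x : X) → (H →L[ℂ] Hx x))
    (hL : ∀ x, L x = (Λ x).comp ((K x).orthogonalProjectionOnto))
    (hInt : ∀ f : H, Integrable
      (fun x => (ω x) ^ 2 • (ContinuousLinearMap.adjoint (L x)) ((L x) f)) μ)
    (hnInt : ∀ f : H, Integrable (fun x => (ω x) ^ 2 * ‖(L x) f‖ ^ 2) μ)
    (A B : ℝ) (hA : 0 < A) (hAB : A ≤ B)
    (hlow : ∀ f : H, A * ‖f‖ ^ 2 ≤ ∫ x, (ω x) ^ 2 * ‖(L x) f‖ ^ 2 ∂μ)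
    (hupp : ∀ f : H, ∫ x, (ω x) ^ 2 * ‖(L x) f‖ ^ 2 ∂μ ≤ B * ‖f‖ ^ 2)
    (a : X → ℂ) (ham : Measurable a) (Ma : ℝ) (hMa0 : 0 ≤ Ma) (hMa : ∀ x, ‖a x‖ ≤ Ma)
    (hIa : ∀ f : H, Integrable (fun x => a x • ((ω x) ^ 2 • (ContinuousLinearMap.adjoint (L x)) ((L x) f))) μ)
    (hIb : ∀ f : H, Integrable (fun x => (1 - a x) • ((ω x) ^ 2 • (ContinuousLinearMap.adjoint (L x)) ((L x) f))) μ) :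
    ∃ S1 S2 : H →L[ℂ] H,
      (∀ f : H, S1 f = ∫ x, a x • ((ω x) ^ 2 • (ContinuousLinearMap.adjoint (L x)) ((L x) f)) ∂μ) ∧
      (∀ f : H, S2 f = ∫ x, (1 - a x) • ((ω x) ^ 2 • (ContinuousLinearMap.adjoint (L x)) ((L x) f)) ∂μ) ∧
      (∀ f : H, ‖S1 f‖ ≤ B * Ma * ‖f‖) ∧
      (∀ f : H, (ContinuousLinearMap.adjoint S1) f = ∫ x, (starRingEnd ℂ) (a x) • ((ω x) ^ 2 • (ContinuousLinearMap.adjoint (L x)) ((L x) f)) ∂μ) ∧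
      (∀ f : H, (ContinuousLinearMap.adjoint S2) f = ∫ x, (1 - (starRingEnd ℂ) (a x)) • ((ω x) ^ 2 • (ContinuousLinearMap.adjoint (L x)) ((L x) f)) ∂μ) := by
  have hB : (0:ℝ) ≤ B := le_of_lt (lt_of_lt_of_le hA hAB)
  have hTm : ∀ f : H, AEStronglyMeasurable
      (fun x => (ω x) ^ 2 • (ContinuousLinearMap.adjoint (L x)) ((L x) f)) μ :=
    fun f => (hInt f).1
  have hM2 : ∀ x, ‖1 - a x‖ ≤ 1 + Ma := fun x =>
    (norm_sub_le _ _).trans (by simpa using hMa x)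
  obtain ⟨S1, hS1, hS1b⟩ := my_gfusion_aux ω L hnInt B hB hupp a Ma hMa0 hMa hIa
  obtain ⟨S2, hS2, _⟩ := my_gfusion_aux ω L hnInt B hB hupp (fun x => 1 - a x) (1 + Ma)
    (by positivity) hM2 hIb
  have hIa' := my_conj_int ω L a ham hTm hIa
  have hIb' := my_conj_int ω L (fun x => 1 - a x) (measurable_const.sub ham) hTm hIb
  obtain ⟨S1', hS1', _⟩ := my_gfusion_aux ω L hnInt B hB hupp
    (fun x => (starRingEnd ℂ) (a x)) Ma hMa0
    (fun x => by rw [RCLike.norm_conj]; exact hMa x) hIa'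
  obtain ⟨S2', hS2', _⟩ := my_gfusion_aux ω L hnInt B hB hupp
    (fun x => (starRingEnd ℂ) (1 - a x)) (1 + Ma) (by positivity)
    (fun x => by rw [RCLike.norm_conj]; exact hM2 x) hIb'
  have hadj1 : ContinuousLinearMap.adjoint S1 = S1' :=
    my_gfusion_adj ω L a hIa hIa' S1 S1' hS1 hS1'
  have hadj2 : ContinuousLinearMap.adjoint S2 = S2' :=
    my_gfusion_adj ω L (fun x => 1 - a x) hIb hIb' S2 S2' hS2 hS2'
  refine ⟨S1, S2, hS1, hS2, hS1b, ?_, ?_⟩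
  · intro f; rw [hadj1]; exact hS1' f
  · intro f
    rw [hadj2, hS2' f]
    refine integral_congr_ae (Filter.Eventually.of_forall fun x => ?_)
    simp [map_sub]
end

section
/- Let (Λ, F, ω) be a λ-tight continuous g-fusion frame for H and let a : X → ℂ be a bounded measurable function such that the operators S¹f = ∫_X a(x)·ω(x)² π_{F(x)} Λ_x* Λ_x π_{F(x)} f dμ(x) and S²f = ∫_X (1 − a(x))·ω(x)² π_{F(x)} Λ_x* Λ_x π_{F(x)} f dμ(x) are well defined (the integrands are Bochner integrable for every f). Then for every f ∈ H: λ·∫_X a(x)·ω(x)² ‖Λ_x π_{F(x)} f‖² dμ(x) + ‖S² f‖² = λ·∫_X (1 − conj(a(x)))·ω(x)² ‖Λ_x π_{F(x)} f‖² dμ(x) + ‖S¹ f‖², where conj denotes complex conjugation. -/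
open MeasureTheory

theorem stmt_14
    {H : Type*} [NormedAddCommGroup H] [InnerProductSpace ℂ H] [CompleteSpace H]
    {X : Type*} [MeasurableSpace X] (μ : Measure X)
    (ω : X → ℝ) (hω : ∀ x, 0 ≤ ω x) (hωm : Measurable ω)
    {Hx : X → Type*} [∀ x, NormedAddCommGroup (Hx x)]
    [∀ x, InnerProductSpace ℂ (Hx x)] [∀ x, CompleteSpace (Hx x)]
    (K : X → Submodule ℂ H) [∀ x, CompleteSpace (K x)]
    (Λ : (x : X) → (↥(K x) →L[ℂ] Hx x))
    (L : (x : X) → (H →L[ℂ] Hx x))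
    (hL : ∀ x, L x = (Λ x).comp ((K x).orthogonalProjectionOnto))
    (hInt : ∀ f : H, Integrable
      (fun x => (ω x) ^ 2 • (ContinuousLinearMap.adjoint (L x)) ((L x) f)) μ)
    (hnInt : ∀ f : H, Integrable (fun x => (ω x) ^ 2 * ‖(L x) f‖ ^ 2) μ)
    (lam : ℝ) (hlam : 0 < lam)
    (htight : ∀ f : H, ∫ x, (ω x) ^ 2 * ‖(L x) f‖ ^ 2 ∂μ = lam * ‖f‖ ^ 2)
    (a : X → ℂ) (ham : Measurable a)
    (hIa : ∀ f : H, Integrable (fun x => a x • ((ω x) ^ 2 • (ContinuousLinearMap.adjoint (L x)) ((L x) f))) μ)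
    (hIb : ∀ f : H, Integrable (fun x => (1 - a x) • ((ω x) ^ 2 • (ContinuousLinearMap.adjoint (L x)) ((L x) f))) μ)
    (S1 S2 : H →L[ℂ] H)
    (hS1 : ∀ f : H, S1 f = ∫ x, a x • ((ω x) ^ 2 • (ContinuousLinearMap.adjoint (L x)) ((L x) f)) ∂μ)
    (hS2 : ∀ f : H, S2 f = ∫ x, (1 - a x) • ((ω x) ^ 2 • (ContinuousLinearMap.adjoint (L x)) ((L x) f)) ∂μ)
    (hsa : ∀ f : H, Integrable
      (fun x => a x * ((ω x : ℂ)) ^ 2 * ((‖(L x) f‖ : ℂ)) ^ 2) μ)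
    (hsb : ∀ f : H, Integrable
      (fun x => (1 - (starRingEnd ℂ) (a x)) * ((ω x : ℂ)) ^ 2 * ((‖(L x) f‖ : ℂ)) ^ 2) μ) :
    ∀ f : H,
      (lam : ℂ) * (∫ x, a x * ((ω x : ℂ)) ^ 2 * ((‖(L x) f‖ : ℂ)) ^ 2 ∂μ)
          + ((‖S2 f‖ ^ 2 : ℝ) : ℂ)
        = (lam : ℂ) * (∫ x, (1 - (starRingEnd ℂ) (a x)) * ((ω x : ℂ)) ^ 2
              * ((‖(L x) f‖ : ℂ)) ^ 2 ∂μ)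
          + ((‖S1 f‖ ^ 2 : ℝ) : ℂ) := by
  -- key pointwise computation of inner products
  have key : ∀ (g : H) (x : X),
      (inner ℂ g ((ω x) ^ 2 • (ContinuousLinearMap.adjoint (L x)) ((L x) g)) : ℂ)
        = ((ω x : ℂ)) ^ 2 * ((‖(L x) g‖ : ℂ)) ^ 2 := by
    intro g x
    rw [RCLike.real_smul_eq_coe_smul (K := ℂ) ((ω x) ^ 2), inner_smul_right,
      ContinuousLinearMap.adjoint_inner_right, inner_self_eq_norm_sq_to_K]
    push_cast
    first | rfl | ring
  -- integrability of the complex scalar integrand ω² ‖L g‖²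
  have hwInt : ∀ g : H, Integrable
      (fun x => ((ω x : ℂ)) ^ 2 * ((‖(L x) g‖ : ℂ)) ^ 2) μ := by
    intro g
    have h0 : Integrable (fun x => (((ω x) ^ 2 * ‖(L x) g‖ ^ 2 : ℝ) : ℂ)) μ := (hnInt g).ofReal
    refine h0.congr (Filter.Eventually.of_forall fun x => ?_)
    push_cast
    ring
  -- the complex integral of ω² ‖L g‖² equals lam‖g‖²
  have hwint : ∀ g : H, (∫ x, ((ω x : ℂ)) ^ 2 * ((‖(L x) g‖ : ℂ)) ^ 2 ∂μ)
      = ((lam * ‖g‖ ^ 2 : ℝ) : ℂ) := by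
    intro g
    have h0 : (fun x => ((ω x : ℂ)) ^ 2 * ((‖(L x) g‖ : ℂ)) ^ 2)
        = fun x => (((ω x) ^ 2 * ‖(L x) g‖ ^ 2 : ℝ) : ℂ) := by
      funext x; push_cast; ring
    rw [h0, ← htight g]
    exact integral_ofReal
  -- ⟪g, S1 g⟫ = ∫ a ω² ‖L g‖²
  have h1 : ∀ g : H, (inner ℂ g (S1 g) : ℂ)
      = ∫ x, a x * ((ω x : ℂ)) ^ 2 * ((‖(L x) g‖ : ℂ)) ^ 2 ∂μ := by
    intro g
    rw [hS1 g, ← integral_inner (hIa g)]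
    refine integral_congr_ae (Filter.Eventually.of_forall fun x => ?_)
    simp only [inner_smul_right, key g x]
    ring
  -- ⟪g, S2 g⟫ = ∫ (1-a) ω² ‖L g‖²
  have h2 : ∀ g : H, (inner ℂ g (S2 g) : ℂ)
      = ∫ x, (1 - a x) * (((ω x : ℂ)) ^ 2 * ((‖(L x) g‖ : ℂ)) ^ 2) ∂μ := by
    intro g
    rw [hS2 g, ← integral_inner (hIb g)]
    refine integral_congr_ae (Filter.Eventually.of_forall fun x => ?_)
    simp only [inner_smul_right, key g x]
  -- S1 + S2 = lam • id
  have hsum : S1 + S2 = (lam : ℂ) • (1 : H →L[ℂ] H) := by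
    have hmain := (ext_inner_map ((S1 + S2 : H →L[ℂ] H) : H →ₗ[ℂ] H)
      (((lam : ℂ) • (1 : H →L[ℂ] H) : H →L[ℂ] H) : H →ₗ[ℂ] H)).mp ?_
    · ext g
      exact congrFun (congrArg (fun (T : H →ₗ[ℂ] H) => (T : H → H)) hmain) g
    · intro g
      have haInt : Integrable (fun x => a x * ((ω x : ℂ)) ^ 2 * ((‖(L x) g‖ : ℂ)) ^ 2) μ := hsa g
      have hbInt : Integrable
          (fun x => (1 - a x) * (((ω x : ℂ)) ^ 2 * ((‖(L x) g‖ : ℂ)) ^ 2)) μ := by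
        have h0 : (fun x => (1 - a x) * (((ω x : ℂ)) ^ 2 * ((‖(L x) g‖ : ℂ)) ^ 2))
            = fun x => (((ω x : ℂ)) ^ 2 * ((‖(L x) g‖ : ℂ)) ^ 2)
              - a x * ((ω x : ℂ)) ^ 2 * ((‖(L x) g‖ : ℂ)) ^ 2 := by
          funext x; ring
        rw [h0]
        exact (hwInt g).sub haInt
      have e1 : (inner ℂ g ((S1 + S2) g) : ℂ) = inner ℂ g (((lam : ℂ) • (1 : H →L[ℂ] H)) g) := by
        rw [ContinuousLinearMap.add_apply, inner_add_right, h1 g, h2 g]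
        have e2 : (∫ x, a x * ((ω x : ℂ)) ^ 2 * ((‖(L x) g‖ : ℂ)) ^ 2 ∂μ)
              + ∫ x, (1 - a x) * (((ω x : ℂ)) ^ 2 * ((‖(L x) g‖ : ℂ)) ^ 2) ∂μ
            = ∫ x, ((ω x : ℂ)) ^ 2 * ((‖(L x) g‖ : ℂ)) ^ 2 ∂μ := by
          rw [← integral_add haInt hbInt]
          refine integral_congr_ae (Filter.Eventually.of_forall fun x => ?_)
          ring
        rw [e2, hwint g]
        simp only [ContinuousLinearMap.smul_apply, ContinuousLinearMap.one_apply,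
          inner_smul_right, inner_self_eq_norm_sq_to_K]
        push_cast
        first | rfl | ring
      calc (inner ℂ ((S1 + S2) g) g : ℂ)
          = starRingEnd ℂ (inner ℂ g ((S1 + S2) g)) := (inner_conj_symm _ _).symm
        _ = starRingEnd ℂ (inner ℂ g (((lam : ℂ) • (1 : H →L[ℂ] H)) g)) := by rw [e1]
        _ = inner ℂ (((lam : ℂ) • (1 : H →L[ℂ] H)) g) g := inner_conj_symm _ _
  intro f
  -- S2 f = lam • f - S1 f
  have hS2f : S2 f = (lam : ℂ) • f - S1 f := by
    have h0 := congrFun (congrArg (fun (T : H →L[ℂ] H) => (T : H → H)) hsum) f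
    simp only [ContinuousLinearMap.add_apply, ContinuousLinearMap.smul_apply,
      ContinuousLinearMap.one_apply] at h0
    linear_combination (norm := module) h0
  set Ia : ℂ := ∫ x, a x * ((ω x : ℂ)) ^ 2 * ((‖(L x) f‖ : ℂ)) ^ 2 ∂μ with hIadef
  -- second integral
  have hI2 : (∫ x, (1 - (starRingEnd ℂ) (a x)) * ((ω x : ℂ)) ^ 2
        * ((‖(L x) f‖ : ℂ)) ^ 2 ∂μ) = ((lam * ‖f‖ ^ 2 : ℝ) : ℂ) - starRingEnd ℂ Ia := by
    have hconjInt : Integrable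
        (fun x => starRingEnd ℂ (a x * ((ω x : ℂ)) ^ 2 * ((‖(L x) f‖ : ℂ)) ^ 2)) μ := by
      have h0 : (fun x => starRingEnd ℂ (a x * ((ω x : ℂ)) ^ 2 * ((‖(L x) f‖ : ℂ)) ^ 2))
          = fun x => (((ω x : ℂ)) ^ 2 * ((‖(L x) f‖ : ℂ)) ^ 2)
            - (1 - (starRingEnd ℂ) (a x)) * ((ω x : ℂ)) ^ 2 * ((‖(L x) f‖ : ℂ)) ^ 2 := by
        funext x
        simp only [map_mul, map_pow, Complex.conj_ofReal]
        ring
      rw [h0]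
      exact (hwInt f).sub (hsb f)
    have hsplit : (fun x => (1 - (starRingEnd ℂ) (a x)) * ((ω x : ℂ)) ^ 2
          * ((‖(L x) f‖ : ℂ)) ^ 2)
        = fun x => (((ω x : ℂ)) ^ 2 * ((‖(L x) f‖ : ℂ)) ^ 2)
          - starRingEnd ℂ (a x * ((ω x : ℂ)) ^ 2 * ((‖(L x) f‖ : ℂ)) ^ 2) := by
      funext x
      simp only [map_mul, map_pow, Complex.conj_ofReal]
      ring
    rw [hsplit, integral_sub (hwInt f) hconjInt, hwint f, integral_conj, hIadef]
  -- norms as inner products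
  have hn2 : ((‖S2 f‖ ^ 2 : ℝ) : ℂ) = inner ℂ (S2 f) (S2 f) := by
    rw [inner_self_eq_norm_sq_to_K]; push_cast; first | rfl | ring
  have hn1 : ((‖S1 f‖ ^ 2 : ℝ) : ℂ) = inner ℂ (S1 f) (S1 f) := by
    rw [inner_self_eq_norm_sq_to_K]; push_cast; first | rfl | ring
  have hfS1 : (inner ℂ f (S1 f) : ℂ) = Ia := h1 f
  have hS1f : (inner ℂ (S1 f) f : ℂ) = starRingEnd ℂ Ia := by
    rw [← inner_conj_symm, hfS1]
  have hff : (inner ℂ f f : ℂ) = ((‖f‖ : ℂ)) ^ 2 := inner_self_eq_norm_sq_to_K f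
  rw [hI2, hn1, hn2, hS2f]
  simp only [inner_sub_left, inner_sub_right, inner_smul_left, inner_smul_right,
    hfS1, hS1f, hff, Complex.conj_ofReal]
  push_cast
  ring
end

section
/- Let (Λ, F, ω) be a continuous g-fusion frame for H with bounds A, B and frame operator S, and let (Γ, G, ν) be an alternate dual of (Λ, F, ω). Then (Γ, G, ν) is a continuous g-fusion frame for H; more precisely, for every f ∈ H, ∫_X ν(x)² ‖Γ_x π_{G(x)} f‖² dμ(x) ≥ ‖f‖² / (B·‖S⁻¹‖²). -/
open MeasureTheory

set_option maxHeartbeats 1000000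

theorem stmt_15
    {H : Type*} [NormedAddCommGroup H] [InnerProductSpace ℂ H] [CompleteSpace H]
    {X : Type*} [MeasurableSpace X] (μ : Measure X)
    (ω ν : X → ℝ) (hω : ∀ x, 0 ≤ ω x) (hν : ∀ x, 0 ≤ ν x)
    (hωm : Measurable ω) (hνm : Measurable ν)
    {Hx : X → Type*} [∀ x, NormedAddCommGroup (Hx x)]
    [∀ x, InnerProductSpace ℂ (Hx x)] [∀ x, CompleteSpace (Hx x)]
    (K G : X → Submodule ℂ H) [∀ x, CompleteSpace (K x)] [∀ x, CompleteSpace (G x)]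
    (Λ : (x : X) → (↥(K x) →L[ℂ] Hx x)) (Γ : (x : X) → (↥(G x) →L[ℂ] Hx x))
    (LF LG : (x : X) → (H →L[ℂ] Hx x))
    (hLF : ∀ x, LF x = (Λ x).comp ((K x).orthogonalProjection))
    (hLG : ∀ x, LG x = (Γ x).comp ((G x).orthogonalProjection))
    (hnF : ∀ f : H, Integrable (fun x => (ω x) ^ 2 * ‖(LF x) f‖ ^ 2) μ)
    (hnG : ∀ f : H, Integrable (fun x => (ν x) ^ 2 * ‖(LG x) f‖ ^ 2) μ)
    (hIntF : ∀ f : H, Integrable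
      (fun x => (ω x) ^ 2 • (ContinuousLinearMap.adjoint (LF x)) ((LF x) f)) μ)
    (A B : ℝ) (hA : 0 < A) (hAB : A ≤ B)
    (hlow : ∀ f : H, A * ‖f‖ ^ 2 ≤ ∫ x, (ω x) ^ 2 * ‖(LF x) f‖ ^ 2 ∂μ)
    (hupp : ∀ f : H, ∫ x, (ω x) ^ 2 * ‖(LF x) f‖ ^ 2 ∂μ ≤ B * ‖f‖ ^ 2)
    (S Sinv : H →L[ℂ] H)
    (hS : ∀ f : H, S f = ∫ x, (ω x) ^ 2 • (ContinuousLinearMap.adjoint (LF x)) ((LF x) f) ∂μ)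
    (hSpos : S.IsPositive) (hSinv1 : S.comp Sinv = 1) (hSinv2 : Sinv.comp S = 1)
    (B₂ : ℝ) (hB₂ : 0 < B₂)
    (hGb : ∀ f : H, ∫ x, (ν x) ^ 2 * ‖(LG x) f‖ ^ 2 ∂μ ≤ B₂ * ‖f‖ ^ 2)
    (hdInt : ∀ f : H, Integrable
      (fun x => (ω x * ν x) • (ContinuousLinearMap.adjoint (LG x)) ((LF x) (Sinv f))) μ)
    (hdual : ∀ f : H,
      f = ∫ x, (ω x * ν x) • (ContinuousLinearMap.adjoint (LG x)) ((LF x) (Sinv f)) ∂μ)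
    :
    ∀ f : H, ‖f‖ ^ 2 / (B * ‖Sinv‖ ^ 2) ≤ ∫ x, (ν x) ^ 2 * ‖(LG x) f‖ ^ 2 ∂μ := by
  intro f
  set I := ∫ x, (ν x) ^ 2 * ‖(LG x) f‖ ^ 2 ∂μ with hIdef
  have hInn : 0 ≤ I := integral_nonneg fun x => by positivity
  by_cases hf : f = 0
  · simpa [hf] using hInn
  have hfn : 0 < ‖f‖ := norm_pos_iff.mpr hf
  have hB : 0 < B := lt_of_lt_of_le hA hAB
  have hSinvf : Sinv f ≠ 0 := by
    intro h
    apply hf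
    have := congrArg (fun g : H →L[ℂ] H => g f) hSinv1
    simpa [ContinuousLinearMap.comp_apply, h] using this.symm
  have hSn : 0 < ‖Sinv‖ := by
    rcases (norm_nonneg Sinv).eq_or_lt with h | h
    · exact absurd (by simp [norm_eq_zero.mp h.symm]) hSinvf
    · exact h
  set C := B * ‖Sinv‖ ^ 2 with hCdef
  have hC : 0 < C := by positivity
  set t := ‖f‖ ^ 2 with htdef
  have ht : 0 < t := by positivity
  -- the key inequality for every positive ε
  have key : ∀ ε : ℝ, 0 < ε → 2 * ε * t ≤ ε ^ 2 * I + C * t := by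
    intro ε hε
    set g : X → H := fun x =>
      (ω x * ν x) • (ContinuousLinearMap.adjoint (LG x)) ((LF x) (Sinv f)) with hg
    -- ⟪f, f⟫ as an integral
    have h1 : (inner ℂ f f) = ∫ x, (inner ℂ f (g x)) ∂μ := by
      nth_rewrite 2 [hdual f]
      exact (integral_inner (𝕜 := ℂ) (hdInt f) f).symm
    have hnormsq : t = ‖(inner ℂ f f)‖ := by
      rw [inner_self_eq_norm_sq_to_K (𝕜 := ℂ) (E := H) f]
      simp [htdef]
    -- pointwise bound
    have hpt : ∀ x, ‖(inner ℂ f (g x))‖ ≤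
        (ε ^ 2 * ((ν x) ^ 2 * ‖(LG x) f‖ ^ 2) + (ω x) ^ 2 * ‖(LF x) (Sinv f)‖ ^ 2)
          / (2 * ε) := by
      intro x
      have he : (inner ℂ f (g x))
          = ((ω x * ν x : ℝ) : ℂ) * inner ℂ ((LG x) f) ((LF x) (Sinv f)) := by
        simp only [hg, RCLike.real_smul_eq_coe_smul (K := ℂ), inner_smul_right,
          ContinuousLinearMap.adjoint_inner_right]
        norm_cast
      have hcs : ‖(inner ℂ ((LG x) f) ((LF x) (Sinv f)))‖
          ≤ ‖(LG x) f‖ * ‖(LF x) (Sinv f)‖ := norm_inner_le_norm _ _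
      have h0 : ‖(inner ℂ f (g x))‖
          ≤ (ν x * ‖(LG x) f‖) * (ω x * ‖(LF x) (Sinv f)‖) := by
        rw [he, norm_mul, Complex.norm_real, Real.norm_of_nonneg
          (mul_nonneg (hω x) (hν x))]
        calc ω x * ν x * ‖(inner ℂ ((LG x) f) ((LF x) (Sinv f)))‖
            ≤ ω x * ν x * (‖(LG x) f‖ * ‖(LF x) (Sinv f)‖) := by
              exact mul_le_mul_of_nonneg_left hcs (mul_nonneg (hω x) (hν x))
          _ = (ν x * ‖(LG x) f‖) * (ω x * ‖(LF x) (Sinv f)‖) := by ring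
      refine h0.trans ?_
      rw [le_div_iff₀ (by positivity)]
      nlinarith [sq_nonneg (ε * (ν x * ‖(LG x) f‖) - ω x * ‖(LF x) (Sinv f)‖)]
    -- integrable bound
    have hbi : Integrable (fun x =>
        (ε ^ 2 * ((ν x) ^ 2 * ‖(LG x) f‖ ^ 2) + (ω x) ^ 2 * ‖(LF x) (Sinv f)‖ ^ 2)
          / (2 * ε)) μ :=
      (((hnG f).const_mul (ε ^ 2)).add (hnF (Sinv f))).div_const (2 * ε)
    have hle : t ≤ (ε ^ 2 * I + ∫ x, (ω x) ^ 2 * ‖(LF x) (Sinv f)‖ ^ 2 ∂μ) / (2 * ε) := by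
      have h2 : t ≤ ∫ x,
          (ε ^ 2 * ((ν x) ^ 2 * ‖(LG x) f‖ ^ 2) + (ω x) ^ 2 * ‖(LF x) (Sinv f)‖ ^ 2)
            / (2 * ε) ∂μ := by
        rw [hnormsq, h1]
        exact norm_integral_le_of_norm_le hbi (Filter.Eventually.of_forall hpt)
      calc t ≤ _ := h2
        _ = (ε ^ 2 * I + ∫ x, (ω x) ^ 2 * ‖(LF x) (Sinv f)‖ ^ 2 ∂μ) / (2 * ε) := by
          rw [integral_div, integral_add ((hnG f).const_mul (ε ^ 2)) (hnF (Sinv f)),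
            integral_const_mul, hIdef]
    have hJ : (∫ x, (ω x) ^ 2 * ‖(LF x) (Sinv f)‖ ^ 2 ∂μ) ≤ C * t := by
      refine (hupp (Sinv f)).trans ?_
      have := Sinv.le_opNorm f
      have hb : ‖Sinv f‖ ^ 2 ≤ ‖Sinv‖ ^ 2 * ‖f‖ ^ 2 := by nlinarith [norm_nonneg (Sinv f)]
      calc B * ‖Sinv f‖ ^ 2 ≤ B * (‖Sinv‖ ^ 2 * ‖f‖ ^ 2) :=
            mul_le_mul_of_nonneg_left hb hB.le
        _ = C * t := by rw [hCdef, htdef]; ring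
    rw [le_div_iff₀ (by positivity)] at hle
    nlinarith [hle, hJ, hε]
  -- quadratic in ε is nonnegative everywhere
  have quad : ∀ x : ℝ, 0 ≤ I * (x * x) + (-(2 * t)) * x + C * t := by
    intro x
    rcases le_or_gt x 0 with hx | hx
    · have h1 : 0 ≤ I * (x * x) := mul_nonneg hInn (mul_self_nonneg x)
      have h2 : 0 ≤ C * t := by positivity
      nlinarith [mul_nonneg (neg_nonneg.mpr hx) ht.le]
    · have := key x hx; nlinarith [this, sq_nonneg x]
  have hd := discrim_le_zero quad
  rw [discrim] at hd
  rw [div_le_iff₀ hC]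
  nlinarith [hd, ht]
end

section
/- Let (Λ, F, ω) be a continuous g-fusion frame for H with frame operator S, and let (Γ, G, ν) be an alternate dual of (Λ, F, ω). For a measurable set X₁ ⊆ X define the bounded operator 𝒯^{X₁} f = ∫_{X₁} ω(x)ν(x) π_{G(x)} Γ_x* Λ_x π_{F(x)} S⁻¹ f dμ(x) (so that 𝒯^{X₁} + 𝒯^{X₁ᶜ} = Id_H). Then for every f ∈ H: ∫_{X₁} ω(x)ν(x) ⟨Λ_x π_{F(x)} S⁻¹ f, Γ_x π_{G(x)} f⟩ dμ(x) − ‖𝒯^{X₁} f‖² = ∫_{X₁ᶜ} ω(x)ν(x) conj(⟨Λ_x π_{F(x)} S⁻¹ f, Γ_x π_{G(x)} f⟩) dμ(x) − ‖𝒯^{X₁ᶜ} f‖², where conj denotes complex conjugation. -/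
open MeasureTheory

theorem stmt_16
    {H : Type*} [NormedAddCommGroup H] [InnerProductSpace ℂ H] [CompleteSpace H]
    {X : Type*} [MeasurableSpace X] (μ : Measure X)
    (ω ν : X → ℝ) (hω : ∀ x, 0 ≤ ω x) (hν : ∀ x, 0 ≤ ν x)
    (hωm : Measurable ω) (hνm : Measurable ν)
    {Hx : X → Type*} [∀ x, NormedAddCommGroup (Hx x)]
    [∀ x, InnerProductSpace ℂ (Hx x)] [∀ x, CompleteSpace (Hx x)]
    (K G : X → Submodule ℂ H) [∀ x, CompleteSpace (K x)] [∀ x, CompleteSpace (G x)]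
    (Λ : (x : X) → (↥(K x) →L[ℂ] Hx x)) (Γ : (x : X) → (↥(G x) →L[ℂ] Hx x))
    (LF LG : (x : X) → (H →L[ℂ] Hx x))
    (hLF : ∀ x, LF x = (Λ x).comp (K x).orthogonalProjectionOnto)
    (hLG : ∀ x, LG x = (Γ x).comp (G x).orthogonalProjectionOnto)
    (hnF : ∀ f : H, Integrable (fun x => (ω x) ^ 2 * ‖(LF x) f‖ ^ 2) μ)
    (hnG : ∀ f : H, Integrable (fun x => (ν x) ^ 2 * ‖(LG x) f‖ ^ 2) μ)
    (hIntF : ∀ f : H, Integrable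
      (fun x => (ω x) ^ 2 • (ContinuousLinearMap.adjoint (LF x)) ((LF x) f)) μ)
    (A B : ℝ) (hA : 0 < A) (hAB : A ≤ B)
    (hlow : ∀ f : H, A * ‖f‖ ^ 2 ≤ ∫ x, (ω x) ^ 2 * ‖(LF x) f‖ ^ 2 ∂μ)
    (hupp : ∀ f : H, ∫ x, (ω x) ^ 2 * ‖(LF x) f‖ ^ 2 ∂μ ≤ B * ‖f‖ ^ 2)
    (S Sinv : H →L[ℂ] H)
    (hS : ∀ f : H, S f = ∫ x, (ω x) ^ 2 • (ContinuousLinearMap.adjoint (LF x)) ((LF x) f) ∂μ)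
    (hSpos : S.IsPositive) (hSinv1 : S.comp Sinv = 1) (hSinv2 : Sinv.comp S = 1)
    (B₂ : ℝ) (hB₂ : 0 < B₂)
    (hGb : ∀ f : H, ∫ x, (ν x) ^ 2 * ‖(LG x) f‖ ^ 2 ∂μ ≤ B₂ * ‖f‖ ^ 2)
    (hdInt : ∀ f : H, Integrable
      (fun x => (ω x * ν x) • (ContinuousLinearMap.adjoint (LG x)) ((LF x) (Sinv f))) μ)
    (hdual : ∀ f : H,
      f = ∫ x, (ω x * ν x) • (ContinuousLinearMap.adjoint (LG x)) ((LF x) (Sinv f)) ∂μ)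
    (X₁ : Set X) (hX₁ : MeasurableSet X₁)
    (hiInt : ∀ f : H, Integrable
      (fun x => ((ω x * ν x : ℝ) : ℂ) * (inner ℂ ((LF x) (Sinv f)) ((LG x) f) : ℂ)) μ) :
    ∀ f : H,
      (∫ x in X₁, ((ω x * ν x : ℝ) : ℂ) * (inner ℂ ((LF x) (Sinv f)) ((LG x) f) : ℂ) ∂μ)
          - ((‖∫ x in X₁, (ω x * ν x) • (ContinuousLinearMap.adjoint (LG x)) ((LF x) (Sinv f)) ∂μ‖ ^ 2 : ℝ) : ℂ)
        = (∫ x in X₁ᶜ, ((ω x * ν x : ℝ) : ℂ)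
              * (starRingEnd ℂ) (inner ℂ ((LF x) (Sinv f)) ((LG x) f) : ℂ) ∂μ)
          - ((‖∫ x in X₁ᶜ, (ω x * ν x) • (ContinuousLinearMap.adjoint (LG x)) ((LF x) (Sinv f)) ∂μ‖ ^ 2 : ℝ) : ℂ) := by
  intro f
  set g : X → H := fun x =>
    (ω x * ν x) • (ContinuousLinearMap.adjoint (LG x)) ((LF x) (Sinv f)) with hg
  have hgint : Integrable g μ := hdInt f
  have key : ∀ s : Set X,
      (∫ x in s, ((ω x * ν x : ℝ) : ℂ) * (inner ℂ ((LF x) (Sinv f)) ((LG x) f) : ℂ) ∂μ)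
        = inner ℂ (∫ x in s, g x ∂μ) f := by
    intro s
    have h1 : ∀ x, (inner ℂ (g x) f : ℂ)
        = ((ω x * ν x : ℝ) : ℂ) * inner ℂ ((LF x) (Sinv f)) ((LG x) f) := by
      intro x
      have : g x = (((ω x * ν x : ℝ) : ℂ)) • (ContinuousLinearMap.adjoint (LG x)) ((LF x) (Sinv f)) := by
        simp [hg, ← Complex.coe_smul, Complex.ofReal_mul]
      rw [this, inner_smul_left, ContinuousLinearMap.adjoint_inner_left, Complex.conj_ofReal]
    calc (∫ x in s, ((ω x * ν x : ℝ) : ℂ) * (inner ℂ ((LF x) (Sinv f)) ((LG x) f) : ℂ) ∂μ)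
        = ∫ x in s, (inner ℂ (g x) f : ℂ) ∂μ := by
          exact integral_congr_ae (Filter.Eventually.of_forall fun x => (h1 x).symm)
      _ = ∫ x in s, (starRingEnd ℂ) (inner ℂ f (g x) : ℂ) ∂μ := by
          simp_rw [inner_conj_symm]
      _ = (starRingEnd ℂ) (∫ x in s, (inner ℂ f (g x) : ℂ) ∂μ) := integral_conj
      _ = (starRingEnd ℂ) (inner ℂ f (∫ x in s, g x ∂μ) : ℂ) := by
          rw [integral_inner (hgint.restrict)]
      _ = inner ℂ (∫ x in s, g x ∂μ) f := inner_conj_symm _ _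
  set a : H := ∫ x in X₁, g x ∂μ with ha
  set b : H := ∫ x in X₁ᶜ, g x ∂μ with hb
  have hab : a + b = f := by
    rw [ha, hb, integral_add_compl hX₁ hgint]
    exact (hdual f).symm
  have keyc : (∫ x in X₁ᶜ, ((ω x * ν x : ℝ) : ℂ)
      * (starRingEnd ℂ) (inner ℂ ((LF x) (Sinv f)) ((LG x) f) : ℂ) ∂μ)
      = inner ℂ f b := by
    have : ∀ x, ((ω x * ν x : ℝ) : ℂ)
        * (starRingEnd ℂ) (inner ℂ ((LF x) (Sinv f)) ((LG x) f) : ℂ)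
        = (starRingEnd ℂ) (((ω x * ν x : ℝ) : ℂ) * (inner ℂ ((LF x) (Sinv f)) ((LG x) f) : ℂ)) := by
      intro x; rw [map_mul, Complex.conj_ofReal]
    rw [integral_congr_ae (Filter.Eventually.of_forall fun x => this x), integral_conj,
      key X₁ᶜ, inner_conj_symm]
  rw [key X₁, keyc]
  have hna : ((‖a‖ ^ 2 : ℝ) : ℂ) = inner ℂ a a := by rw [Complex.ofReal_pow]; exact (inner_self_eq_norm_sq_to_K a).symm
  have hnb : ((‖b‖ ^ 2 : ℝ) : ℂ) = inner ℂ b b := by rw [Complex.ofReal_pow]; exact (inner_self_eq_norm_sq_to_K b).symm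
  rw [hna, hnb, ← hab]
  rw [inner_add_right, inner_add_left]
  ring
end

section
/- Let (Λ, F, ω) and (Γ, G, ν) be a pair of Bessel continuous g-fusion mappings for H with Bessel bounds B₁ and B₂ respectively, and let S_{ΛΓ} be their mixed frame operator. Then S_{ΛΓ} is a bounded linear operator on H with ‖S_{ΛΓ}‖ ≤ √(B₁·B₂); moreover, for every f ∈ H, ‖S_{ΛΓ} f‖ ≤ √B₁ · (∫_X ν(x)² ‖Γ_x π_{G(x)} f‖² dμ(x))^{1/2}, and the adjoint of S_{ΛΓ} is S_{ΓΛ}, i.e. (S_{ΛΓ})* f = ∫_X ω(x)ν(x) π_{G(x)} Γ_x* Λ_x π_{F(x)} f dμ(x). -/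
open MeasureTheory

lemma integral_cs {X : Type*} [MeasurableSpace X] {μ : Measure X} {a b : X → ℝ}
    (ham : AEStronglyMeasurable a μ) (hbm : AEStronglyMeasurable b μ)
    (ha2 : Integrable (fun x => a x ^ 2) μ) (hb2 : Integrable (fun x => b x ^ 2) μ) :
    Integrable (fun x => a x * b x) μ ∧
    ∫ x, a x * b x ∂μ ≤ Real.sqrt (∫ x, a x ^ 2 ∂μ) * Real.sqrt (∫ x, b x ^ 2 ∂μ) := by
  have hma : MemLp a 2 μ := (memLp_two_iff_integrable_sq ham).2 ha2
  have hmb : MemLp b 2 μ := (memLp_two_iff_integrable_sq hbm).2 hb2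
  set fA : Lp ℝ 2 μ := hma.toLp a
  set fB : Lp ℝ 2 μ := hmb.toLp b
  have hA : (fA : X → ℝ) =ᵐ[μ] a := hma.coeFn_toLp
  have hB : (fB : X → ℝ) =ᵐ[μ] b := hmb.coeFn_toLp
  have hint : Integrable (fun x => a x * b x) μ := by
    refine (L2.integrable_inner (𝕜 := ℝ) fA fB).congr ?_
    filter_upwards [hA, hB] with x h1 h2
    simp [h1, h2, real_inner_comm, mul_comm]
  refine ⟨hint, ?_⟩
  have h1 : ∫ x, a x * b x ∂μ = @inner ℝ _ _ fA fB := by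
    rw [L2.inner_def]
    refine integral_congr_ae ?_
    filter_upwards [hA, hB] with x h1 h2
    simp [h1, h2, real_inner_comm, mul_comm]
  have hnA : ‖fA‖ = Real.sqrt (∫ x, a x ^ 2 ∂μ) := by
    have : (‖fA‖ : ℝ) ^ 2 = ∫ x, a x ^ 2 ∂μ := by
      rw [← real_inner_self_eq_norm_sq, L2.inner_def]
      refine integral_congr_ae ?_
      filter_upwards [hA] with x h1
      simp [h1, sq]
    rw [← this, Real.sqrt_sq (norm_nonneg _)]
  have hnB : ‖fB‖ = Real.sqrt (∫ x, b x ^ 2 ∂μ) := by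
    have : (‖fB‖ : ℝ) ^ 2 = ∫ x, b x ^ 2 ∂μ := by
      rw [← real_inner_self_eq_norm_sq, L2.inner_def]
      refine integral_congr_ae ?_
      filter_upwards [hB] with x h1
      simp [h1, sq]
    rw [← this, Real.sqrt_sq (norm_nonneg _)]
  rw [h1, ← hnA, ← hnB]
  exact real_inner_le_norm fA fB

theorem stmt_17
    {H : Type*} [NormedAddCommGroup H] [InnerProductSpace ℂ H] [CompleteSpace H]
    {X : Type*} [MeasurableSpace X] (μ : Measure X)
    (ω ν : X → ℝ) (hω : ∀ x, 0 ≤ ω x) (hν : ∀ x, 0 ≤ ν x)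
    (hωm : Measurable ω) (hνm : Measurable ν)
    {Hx : X → Type*} [∀ x, NormedAddCommGroup (Hx x)]
    [∀ x, InnerProductSpace ℂ (Hx x)] [∀ x, CompleteSpace (Hx x)]
    (K G : X → Submodule ℂ H) [∀ x, CompleteSpace (K x)] [∀ x, CompleteSpace (G x)]
    (Λ : (x : X) → (↥(K x) →L[ℂ] Hx x)) (Γ : (x : X) → (↥(G x) →L[ℂ] Hx x))
    (LF LG : (x : X) → (H →L[ℂ] Hx x))
    (hLF : ∀ x, LF x = (Λ x).comp (Submodule.orthogonalProjectionOnto (K x)))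
    (hLG : ∀ x, LG x = (Γ x).comp (Submodule.orthogonalProjectionOnto (G x)))
    (hnF : ∀ f : H, Integrable (fun x => (ω x) ^ 2 * ‖(LF x) f‖ ^ 2) μ)
    (hnG : ∀ f : H, Integrable (fun x => (ν x) ^ 2 * ‖(LG x) f‖ ^ 2) μ)
    (B₁ B₂ : ℝ) (hB₁ : 0 < B₁) (hB₂ : 0 < B₂)
    (hFb : ∀ f : H, ∫ x, (ω x) ^ 2 * ‖(LF x) f‖ ^ 2 ∂μ ≤ B₁ * ‖f‖ ^ 2)
    (hGb : ∀ f : H, ∫ x, (ν x) ^ 2 * ‖(LG x) f‖ ^ 2 ∂μ ≤ B₂ * ‖f‖ ^ 2)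
    (hIFG : ∀ f : H, Integrable
      (fun x => (ω x * ν x) • (ContinuousLinearMap.adjoint (LF x)) ((LG x) f)) μ)
    (hIGF : ∀ f : H, Integrable
      (fun x => (ω x * ν x) • (ContinuousLinearMap.adjoint (LG x)) ((LF x) f)) μ)
    (SLG : H →L[ℂ] H)
    (hSLG : ∀ f : H,
      SLG f = ∫ x, (ω x * ν x) • (ContinuousLinearMap.adjoint (LF x)) ((LG x) f) ∂μ)
    :
    ‖SLG‖ ≤ Real.sqrt (B₁ * B₂) ∧
    (∀ f : H, ‖SLG f‖ ≤ Real.sqrt B₁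
        * Real.sqrt (∫ x, (ν x) ^ 2 * ‖(LG x) f‖ ^ 2 ∂μ)) ∧
    (∀ f : H, (ContinuousLinearMap.adjoint SLG) f
        = ∫ x, (ω x * ν x) • (ContinuousLinearMap.adjoint (LG x)) ((LF x) f) ∂μ) := by
  -- measurability and square-integrability of the auxiliary functions
  have haF : ∀ c : H, AEStronglyMeasurable (fun x => ω x * ‖(LF x) c‖) μ := by
    intro c
    have h := (hnF c).aestronglyMeasurable
    have := Real.continuous_sqrt.comp_aestronglyMeasurable h
    refine this.congr (Filter.Eventually.of_forall fun x => ?_)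
    simp only [Function.comp]
    rw [← mul_pow, Real.sqrt_sq (mul_nonneg (hω x) (norm_nonneg _))]
  have haG : ∀ c : H, AEStronglyMeasurable (fun x => ν x * ‖(LG x) c‖) μ := by
    intro c
    have h := (hnG c).aestronglyMeasurable
    have := Real.continuous_sqrt.comp_aestronglyMeasurable h
    refine this.congr (Filter.Eventually.of_forall fun x => ?_)
    simp only [Function.comp]
    rw [← mul_pow, Real.sqrt_sq (mul_nonneg (hν x) (norm_nonneg _))]
  have hsqF : ∀ c : H, Integrable (fun x => (ω x * ‖(LF x) c‖) ^ 2) μ :=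
    fun c => (hnF c).congr (Filter.Eventually.of_forall fun x => by ring)
  have hsqG : ∀ c : H, Integrable (fun x => (ν x * ‖(LG x) c‖) ^ 2) μ :=
    fun c => (hnG c).congr (Filter.Eventually.of_forall fun x => by ring)
  -- the key inner product estimate
  have key : ∀ f c : H, ‖(inner ℂ c (SLG f) : ℂ)‖ ≤
      Real.sqrt (∫ x, (ω x) ^ 2 * ‖(LF x) c‖ ^ 2 ∂μ) *
      Real.sqrt (∫ x, (ν x) ^ 2 * ‖(LG x) f‖ ^ 2 ∂μ) := by
    intro f c
    obtain ⟨hintab, hcs⟩ := integral_cs (haF c) (haG f) (hsqF c) (hsqG f)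
    have h1 : (inner ℂ c (SLG f) : ℂ) =
        ∫ x, inner ℂ c ((ω x * ν x) • (ContinuousLinearMap.adjoint (LF x)) ((LG x) f)) ∂μ := by
      rw [hSLG f, integral_inner (hIFG f) c]
    have h2 : ‖(inner ℂ c (SLG f) : ℂ)‖ ≤
        ∫ x, (ω x * ‖(LF x) c‖) * (ν x * ‖(LG x) f‖) ∂μ := by
      rw [h1]
      refine (norm_integral_le_integral_norm _).trans ?_
      refine integral_mono ((hIFG f).const_inner c).norm hintab fun x => ?_
      simp only
      rw [RCLike.real_smul_eq_coe_smul (K := ℂ), inner_smul_right,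
        ContinuousLinearMap.adjoint_inner_right]
      rw [norm_mul, RCLike.norm_ofReal]
      calc |ω x * ν x| * ‖(inner ℂ ((LF x) c) ((LG x) f) : ℂ)‖
          ≤ (ω x * ν x) * (‖(LF x) c‖ * ‖(LG x) f‖) := by
            rw [abs_of_nonneg (mul_nonneg (hω x) (hν x))]
            exact mul_le_mul_of_nonneg_left (norm_inner_le_norm _ _)
              (mul_nonneg (hω x) (hν x))
        _ = (ω x * ‖(LF x) c‖) * (ν x * ‖(LG x) f‖) := by ring
    have e1 : ∫ x, (ω x * ‖(LF x) c‖) ^ 2 ∂μ = ∫ x, (ω x) ^ 2 * ‖(LF x) c‖ ^ 2 ∂μ :=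
      integral_congr_ae (Filter.Eventually.of_forall fun x => by ring)
    have e2 : ∫ x, (ν x * ‖(LG x) f‖) ^ 2 ∂μ = ∫ x, (ν x) ^ 2 * ‖(LG x) f‖ ^ 2 ∂μ :=
      integral_congr_ae (Filter.Eventually.of_forall fun x => by ring)
    rw [e1, e2] at hcs
    exact h2.trans hcs
  -- the key bound on sqrt(∫ ω² ‖LF c‖²)
  have hAle : ∀ c : H, Real.sqrt (∫ x, (ω x) ^ 2 * ‖(LF x) c‖ ^ 2 ∂μ) ≤
      Real.sqrt B₁ * ‖c‖ := by
    intro c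
    calc Real.sqrt (∫ x, (ω x) ^ 2 * ‖(LF x) c‖ ^ 2 ∂μ)
        ≤ Real.sqrt (B₁ * ‖c‖ ^ 2) := Real.sqrt_le_sqrt (hFb c)
      _ = Real.sqrt B₁ * ‖c‖ := by
          rw [Real.sqrt_mul hB₁.le, Real.sqrt_sq (norm_nonneg _)]
  have hBle : ∀ f : H, Real.sqrt (∫ x, (ν x) ^ 2 * ‖(LG x) f‖ ^ 2 ∂μ) ≤
      Real.sqrt B₂ * ‖f‖ := by
    intro f
    calc Real.sqrt (∫ x, (ν x) ^ 2 * ‖(LG x) f‖ ^ 2 ∂μ)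
        ≤ Real.sqrt (B₂ * ‖f‖ ^ 2) := Real.sqrt_le_sqrt (hGb f)
      _ = Real.sqrt B₂ * ‖f‖ := by
          rw [Real.sqrt_mul hB₂.le, Real.sqrt_sq (norm_nonneg _)]
  -- part 2
  have part2 : ∀ f : H, ‖SLG f‖ ≤ Real.sqrt B₁
      * Real.sqrt (∫ x, (ν x) ^ 2 * ‖(LG x) f‖ ^ 2 ∂μ) := by
    intro f
    set Bf := Real.sqrt (∫ x, (ν x) ^ 2 * ‖(LG x) f‖ ^ 2 ∂μ)
    have hBf : 0 ≤ Bf := Real.sqrt_nonneg _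
    rcases eq_or_ne (SLG f) 0 with h0 | h0
    · rw [h0, norm_zero]
      exact mul_nonneg (Real.sqrt_nonneg _) hBf
    · have hpos : 0 < ‖SLG f‖ := norm_pos_iff.2 h0
      have h1 : ‖SLG f‖ ^ 2 = ‖(inner ℂ (SLG f) (SLG f) : ℂ)‖ := by
        rw [inner_self_eq_norm_sq_to_K]
        simp [Real.norm_of_nonneg (norm_nonneg (SLG f))]
      have h2 : ‖SLG f‖ ^ 2 ≤ (Real.sqrt B₁ * ‖SLG f‖) * Bf := by
        rw [h1]
        exact (key f (SLG f)).trans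
          (mul_le_mul_of_nonneg_right (hAle (SLG f)) hBf)
      have h3 : ‖SLG f‖ * ‖SLG f‖ ≤ (Real.sqrt B₁ * Bf) * ‖SLG f‖ := by
        calc ‖SLG f‖ * ‖SLG f‖ = ‖SLG f‖ ^ 2 := (sq _).symm
          _ ≤ (Real.sqrt B₁ * ‖SLG f‖) * Bf := h2
          _ = (Real.sqrt B₁ * Bf) * ‖SLG f‖ := by ring
      exact le_of_mul_le_mul_right h3 hpos
  refine ⟨?_, part2, ?_⟩
  · -- part 1
    refine SLG.opNorm_le_bound (Real.sqrt_nonneg _) fun f => ?_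
    calc ‖SLG f‖ ≤ Real.sqrt B₁
          * Real.sqrt (∫ x, (ν x) ^ 2 * ‖(LG x) f‖ ^ 2 ∂μ) := part2 f
      _ ≤ Real.sqrt B₁ * (Real.sqrt B₂ * ‖f‖) :=
          mul_le_mul_of_nonneg_left (hBle f) (Real.sqrt_nonneg _)
      _ = Real.sqrt (B₁ * B₂) * ‖f‖ := by
          rw [Real.sqrt_mul hB₁.le]; ring
  · -- part 3: adjoint
    intro f
    refine ext_inner_left ℂ fun c => ?_
    rw [ContinuousLinearMap.adjoint_inner_right]
    rw [← integral_inner (hIGF f) c]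
    have hLHS : (inner ℂ (SLG c) f : ℂ) =
        ∫ x, starRingEnd ℂ (inner ℂ f ((ω x * ν x) •
          (ContinuousLinearMap.adjoint (LF x)) ((LG x) c))) ∂μ := by
      rw [← inner_conj_symm (SLG c) f, hSLG c, ← integral_inner (hIFG c) f,
        ← integral_conj]
    rw [hLHS]
    refine integral_congr_ae (Filter.Eventually.of_forall fun x => ?_)
    simp only
    rw [RCLike.real_smul_eq_coe_smul (K := ℂ), RCLike.real_smul_eq_coe_smul (K := ℂ),
      inner_smul_right, inner_smul_right,
      ContinuousLinearMap.adjoint_inner_right, ContinuousLinearMap.adjoint_inner_right,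
      map_mul, inner_conj_symm, RCLike.conj_ofReal]
end

section
/- Let (Λ, F, ω) and (Γ, G, ν) be a pair of Bessel continuous g-fusion mappings for H with Bessel bounds B₁ and B₂, and let S_{ΛΓ} be their mixed frame operator. Then the following are equivalent: (i) S_{ΛΓ} is bounded below, i.e. there exists m > 0 such that ‖S_{ΛΓ} f‖ ≥ m‖f‖ for all f ∈ H; (ii) there exists a bounded linear operator K on H such that the family T_x = ω(x)ν(x) K π_{F(x)} Λ_x* Γ_x π_{G(x)} is a resolution of the identity, i.e. f = ∫_X ω(x)ν(x) K π_{F(x)} Λ_x* Γ_x π_{G(x)} f dμ(x) for every f ∈ H. Moreover, if these conditions hold, then (Γ, G, ν) is a continuous g-fusion frame: ∫_X ν(x)² ‖Γ_x π_{G(x)} f‖² dμ(x) ≥ (m²/B₁)‖f‖² for all f ∈ H. -/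
open MeasureTheory Filter

theorem stmt_18
    {H : Type*} [NormedAddCommGroup H] [InnerProductSpace ℂ H] [CompleteSpace H]
    {X : Type*} [MeasurableSpace X] (μ : Measure X)
    (ω ν : X → ℝ) (hω : ∀ x, 0 ≤ ω x) (hν : ∀ x, 0 ≤ ν x)
    (hωm : Measurable ω) (hνm : Measurable ν)
    {Hx : X → Type*} [∀ x, NormedAddCommGroup (Hx x)]
    [∀ x, InnerProductSpace ℂ (Hx x)] [∀ x, CompleteSpace (Hx x)]
    (K G : X → Submodule ℂ H) [∀ x, CompleteSpace (K x)] [∀ x, CompleteSpace (G x)]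
    (Λ : (x : X) → (↥(K x) →L[ℂ] Hx x)) (Γ : (x : X) → (↥(G x) →L[ℂ] Hx x))
    (LF LG : (x : X) → (H →L[ℂ] Hx x))
    (hLF : ∀ x, LF x = (Λ x).comp (Submodule.orthogonalProjection (K x)))
    (hLG : ∀ x, LG x = (Γ x).comp (Submodule.orthogonalProjection (G x)))
    (hnF : ∀ f : H, Integrable (fun x => (ω x) ^ 2 * ‖(LF x) f‖ ^ 2) μ)
    (hnG : ∀ f : H, Integrable (fun x => (ν x) ^ 2 * ‖(LG x) f‖ ^ 2) μ)
    (B₁ B₂ : ℝ) (hB₁ : 0 < B₁) (hB₂ : 0 < B₂)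
    (hFb : ∀ f : H, ∫ x, (ω x) ^ 2 * ‖(LF x) f‖ ^ 2 ∂μ ≤ B₁ * ‖f‖ ^ 2)
    (hGb : ∀ f : H, ∫ x, (ν x) ^ 2 * ‖(LG x) f‖ ^ 2 ∂μ ≤ B₂ * ‖f‖ ^ 2)
    (hIFG : ∀ f : H, Integrable
      (fun x => (ω x * ν x) • (ContinuousLinearMap.adjoint (LF x)) ((LG x) f)) μ)
    (hIGF : ∀ f : H, Integrable
      (fun x => (ω x * ν x) • (ContinuousLinearMap.adjoint (LG x)) ((LF x) f)) μ)
    (SLG : H →L[ℂ] H)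
    (hSLG : ∀ f : H,
      SLG f = ∫ x, (ω x * ν x) • (ContinuousLinearMap.adjoint (LF x)) ((LG x) f) ∂μ)
    :
    ((∃ m : ℝ, 0 < m ∧ ∀ f : H, m * ‖f‖ ≤ ‖SLG f‖) ↔
      (∃ Kop : H →L[ℂ] H, ∀ f : H,
        f = ∫ x, (ω x * ν x) • Kop ((ContinuousLinearMap.adjoint (LF x)) ((LG x) f)) ∂μ)) ∧
    (∀ m : ℝ, 0 < m → (∀ f : H, m * ‖f‖ ≤ ‖SLG f‖) →
      ∀ f : H, m ^ 2 / B₁ * ‖f‖ ^ 2 ≤ ∫ x, (ν x) ^ 2 * ‖(LG x) f‖ ^ 2 ∂μ) := by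
  -- Membership in L² of the weighted norm functions
  have memF : ∀ g : H, MemLp (fun x => ω x * ‖(LF x) g‖) 2 μ := by
    intro g
    have hm : AEStronglyMeasurable (fun x => ω x * ‖(LF x) g‖) μ := by
      have h1 := (hnF g).aestronglyMeasurable
      have h2 : AEStronglyMeasurable (fun x => Real.sqrt ((ω x) ^ 2 * ‖(LF x) g‖ ^ 2)) μ :=
        Real.continuous_sqrt.comp_aestronglyMeasurable h1
      convert h2 using 1
      funext x
      rw [← mul_pow, Real.sqrt_sq (mul_nonneg (hω x) (norm_nonneg _))]
    refine (memLp_two_iff_integrable_sq hm).2 ?_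
    convert hnF g using 1
    funext x; ring
  have memG : ∀ f : H, MemLp (fun x => ν x * ‖(LG x) f‖) 2 μ := by
    intro f
    have hm : AEStronglyMeasurable (fun x => ν x * ‖(LG x) f‖) μ := by
      have h1 := (hnG f).aestronglyMeasurable
      have h2 : AEStronglyMeasurable (fun x => Real.sqrt ((ν x) ^ 2 * ‖(LG x) f‖ ^ 2)) μ :=
        Real.continuous_sqrt.comp_aestronglyMeasurable h1
      convert h2 using 1
      funext x
      rw [← mul_pow, Real.sqrt_sq (mul_nonneg (hν x) (norm_nonneg _))]
    refine (memLp_two_iff_integrable_sq hm).2 ?_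
    convert hnG f using 1
    funext x; ring
  -- Integrability of the product
  have hprod : ∀ f g : H,
      Integrable (fun x => (ω x * ‖(LF x) g‖) * (ν x * ‖(LG x) f‖)) μ := by
    intro f g
    have h12 : (1 : ENNReal) / 1 = 1 / 2 + 1 / 2 := by
      rw [ENNReal.add_halves, div_one]
    have := ((memG f).smul (memF g) :
      MemLp ((fun x => ω x * ‖(LF x) g‖) • (fun x => ν x * ‖(LG x) f‖)) 1 μ)
    rw [memLp_one_iff_integrable] at this
    exact this
  -- Cauchy–Schwarz for the weighted integrals
  have CS : ∀ f g : H,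
      ∫ x, (ω x * ‖(LF x) g‖) * (ν x * ‖(LG x) f‖) ∂μ ≤
        Real.sqrt (∫ x, (ω x) ^ 2 * ‖(LF x) g‖ ^ 2 ∂μ) *
          Real.sqrt (∫ x, (ν x) ^ 2 * ‖(LG x) f‖ ^ 2 ∂μ) := by
    intro f g
    have hpq : Real.HolderConjugate 2 2 := Real.HolderConjugate.two_two
    have h2 : ENNReal.ofReal (2 : ℝ) = 2 := by norm_num
    have hF2 : MemLp (fun x => ω x * ‖(LF x) g‖) (ENNReal.ofReal 2) μ := h2 ▸ memF g
    have hG2 : MemLp (fun x => ν x * ‖(LG x) f‖) (ENNReal.ofReal 2) μ := h2 ▸ memG f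
    have := integral_mul_le_Lp_mul_Lq_of_nonneg hpq
      (Eventually.of_forall fun x => mul_nonneg (hω x) (norm_nonneg _))
      (Eventually.of_forall fun x => mul_nonneg (hν x) (norm_nonneg _)) hF2 hG2
    refine this.trans (le_of_eq ?_)
    have eF : ∫ x, (ω x * ‖(LF x) g‖) ^ (2 : ℝ) ∂μ = ∫ x, (ω x) ^ 2 * ‖(LF x) g‖ ^ 2 ∂μ := by
      refine integral_congr_ae (Eventually.of_forall fun x => ?_)
      simp only [Real.rpow_two, mul_pow]
    have eG : ∫ x, (ν x * ‖(LG x) f‖) ^ (2 : ℝ) ∂μ = ∫ x, (ν x) ^ 2 * ‖(LG x) f‖ ^ 2 ∂μ := by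
      refine integral_congr_ae (Eventually.of_forall fun x => ?_)
      simp only [Real.rpow_two, mul_pow]
    rw [eF, eG, ← Real.sqrt_eq_rpow, ← Real.sqrt_eq_rpow]
  -- Key estimate on the inner products with SLG f
  have key : ∀ f g : H, ‖(inner ℂ g (SLG f) : ℂ)‖ ≤
      Real.sqrt (∫ x, (ω x) ^ 2 * ‖(LF x) g‖ ^ 2 ∂μ) *
        Real.sqrt (∫ x, (ν x) ^ 2 * ‖(LG x) f‖ ^ 2 ∂μ) := by
    intro f g
    rw [hSLG f, ← integral_inner (hIFG f) g]
    calc ‖∫ x, (inner ℂ g ((ω x * ν x) • (ContinuousLinearMap.adjoint (LF x)) ((LG x) f)) : ℂ) ∂μ‖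
        ≤ ∫ x, ‖(inner ℂ g ((ω x * ν x) • (ContinuousLinearMap.adjoint (LF x)) ((LG x) f)) : ℂ)‖ ∂μ :=
          norm_integral_le_integral_norm _
      _ ≤ ∫ x, (ω x * ‖(LF x) g‖) * (ν x * ‖(LG x) f‖) ∂μ := by
          refine integral_mono_of_nonneg (Eventually.of_forall fun x => norm_nonneg _)
            (hprod f g) (Eventually.of_forall fun x => ?_)
          show ‖(inner ℂ g ((ω x * ν x) • (ContinuousLinearMap.adjoint (LF x)) ((LG x) f)) : ℂ)‖ ≤
            (ω x * ‖(LF x) g‖) * (ν x * ‖(LG x) f‖)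
          have : (inner ℂ g ((ω x * ν x) • (ContinuousLinearMap.adjoint (LF x)) ((LG x) f)) : ℂ)
              = (ω x * ν x : ℝ) • (inner ℂ ((LF x) g) ((LG x) f) : ℂ) := by
            rw [inner_smul_right_eq_smul, ContinuousLinearMap.adjoint_inner_right]
          rw [this, norm_smul]
          simp only [Real.norm_eq_abs, abs_of_nonneg (mul_nonneg (hω x) (hν x))]
          calc (ω x * ν x) * ‖(inner ℂ ((LF x) g) ((LG x) f) : ℂ)‖
              ≤ (ω x * ν x) * (‖(LF x) g‖ * ‖(LG x) f‖) := by
                refine mul_le_mul_of_nonneg_left ?_ (mul_nonneg (hω x) (hν x))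
                exact norm_inner_le_norm _ _
            _ = (ω x * ‖(LF x) g‖) * (ν x * ‖(LG x) f‖) := by ring
      _ ≤ _ := CS f g
  -- Norm bound: ‖SLG f‖ ≤ √B₁ * √(∫ ν²‖LG f‖²)
  have Sb : ∀ f : H, ‖SLG f‖ ≤
      Real.sqrt B₁ * Real.sqrt (∫ x, (ν x) ^ 2 * ‖(LG x) f‖ ^ 2 ∂μ) := by
    intro f
    rcases eq_or_lt_of_le (norm_nonneg (SLG f)) with h0 | h0
    · rw [← h0]
      positivity
    · have h1 := key f (SLG f)
      have h2 : ‖(inner ℂ (SLG f) (SLG f) : ℂ)‖ = ‖SLG f‖ ^ 2 := by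
        rw [inner_self_eq_norm_sq_to_K]
        push_cast
        rw [norm_pow]
        simp
      rw [h2] at h1
      have h3 : Real.sqrt (∫ x, (ω x) ^ 2 * ‖(LF x) (SLG f)‖ ^ 2 ∂μ) ≤
          Real.sqrt B₁ * ‖SLG f‖ := by
        have := Real.sqrt_le_sqrt (hFb (SLG f))
        rwa [Real.sqrt_mul hB₁.le, Real.sqrt_sq (norm_nonneg _)] at this
      have h4 : ‖SLG f‖ ^ 2 ≤ (Real.sqrt B₁ * ‖SLG f‖) *
          Real.sqrt (∫ x, (ν x) ^ 2 * ‖(LG x) f‖ ^ 2 ∂μ) := by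
        refine h1.trans (mul_le_mul_of_nonneg_right h3 (Real.sqrt_nonneg _))
      have h5 : ‖SLG f‖ * ‖SLG f‖ ≤
          ‖SLG f‖ * (Real.sqrt B₁ * Real.sqrt (∫ x, (ν x) ^ 2 * ‖(LG x) f‖ ^ 2 ∂μ)) := by
        nlinarith [h4]
      exact le_of_mul_le_mul_left h5 h0
  constructor
  · constructor
    · -- (i) → (ii)
      rintro ⟨m, hm, hbd⟩
      have hanti : AntilipschitzWith (⟨m, hm.le⟩ : NNReal)⁻¹ SLG := by
        refine SLG.antilipschitz_of_bound fun x => ?_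
        have hc : (((⟨m, hm.le⟩ : NNReal)⁻¹ : NNReal) : ℝ) = m⁻¹ := by
          exact NNReal.coe_inv _
        rw [hc, inv_mul_eq_div, le_div_iff₀ hm, mul_comm]
        exact hbd x
      have hinj : Function.Injective SLG := hanti.injective
      haveI : CompleteSpace (LinearMap.range (SLG : H →ₗ[ℂ] H)) := by exact hanti.completeSpace_range_clm
      set R : Submodule ℂ H := LinearMap.range (SLG : H →ₗ[ℂ] H) with hR
      have hmem : ∀ x : H, SLG x ∈ R := fun x => LinearMap.mem_range_self _ x
      set S' : H →L[ℂ] ↥R := SLG.codRestrict R hmem with hS'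
      have hker : LinearMap.ker (S' : H →ₗ[ℂ] ↥R) = ⊥ := by
        rw [ContinuousLinearMap.ker_codRestrict]
        exact LinearMap.ker_eq_bot.mpr hinj
      have hrange : LinearMap.range (S' : H →ₗ[ℂ] ↥R) = ⊤ := by
        rw [LinearMap.range_eq_top]
        rintro ⟨y, hy⟩
        obtain ⟨x, hx⟩ := hy
        exact ⟨x, Subtype.ext hx⟩
      set E := ContinuousLinearEquiv.ofBijective S' hker hrange with hE
      set Kop : H →L[ℂ] H :=
        (E.symm : ↥R →L[ℂ] H).comp (Submodule.orthogonalProjection R) with hKop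
      have hKS : ∀ f : H, Kop (SLG f) = f := by
        intro f
        have hp : Submodule.orthogonalProjection R (SLG f) = ⟨SLG f, hmem f⟩ := by
          exact Submodule.orthogonalProjection_mem_subspace_eq_self (⟨SLG f, hmem f⟩ : ↥R)
        have hEf : E f = ⟨SLG f, hmem f⟩ := rfl
        simp only [hKop, ContinuousLinearMap.coe_comp', Function.comp_apply, hp, ← hEf]
        exact E.symm_apply_apply f
      refine ⟨Kop, fun f => ?_⟩
      conv_lhs => rw [← hKS f, hSLG f]
      rw [← ContinuousLinearMap.integral_comp_comm Kop (hIFG f)]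
      exact integral_congr_ae (Eventually.of_forall fun x => Kop.map_smul_of_tower _ _)
    · -- (ii) → (i)
      rintro ⟨Kop, hK⟩
      refine ⟨(‖Kop‖ + 1)⁻¹, by positivity, fun f => ?_⟩
      have h1 : f = Kop (SLG f) := by
        rw [hSLG f, ← ContinuousLinearMap.integral_comp_comm Kop (hIFG f)]
        have he : (∫ x, Kop ((ω x * ν x) • (ContinuousLinearMap.adjoint (LF x)) ((LG x) f)) ∂μ)
            = ∫ x, (ω x * ν x) • Kop ((ContinuousLinearMap.adjoint (LF x)) ((LG x) f)) ∂μ :=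
          integral_congr_ae (Eventually.of_forall fun x => Kop.map_smul_of_tower _ _)
        rw [he]
        exact hK f
      have h2 : ‖f‖ ≤ (‖Kop‖ + 1) * ‖SLG f‖ := by
        calc ‖f‖ = ‖Kop (SLG f)‖ := by rw [← h1]
          _ ≤ ‖Kop‖ * ‖SLG f‖ := Kop.le_opNorm _
          _ ≤ (‖Kop‖ + 1) * ‖SLG f‖ := by nlinarith [norm_nonneg (SLG f)]
      rw [inv_mul_le_iff₀ (by positivity)]
      exact h2
  · -- Moreover
    intro m hm hbd f
    have hA : 0 ≤ ∫ x, (ν x) ^ 2 * ‖(LG x) f‖ ^ 2 ∂μ :=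
      integral_nonneg fun x => mul_nonneg (sq_nonneg _) (sq_nonneg _)
    have h1 : m * ‖f‖ ≤ Real.sqrt B₁ * Real.sqrt (∫ x, (ν x) ^ 2 * ‖(LG x) f‖ ^ 2 ∂μ) :=
      (hbd f).trans (Sb f)
    have h2 : (m * ‖f‖) ^ 2 ≤ B₁ * (∫ x, (ν x) ^ 2 * ‖(LG x) f‖ ^ 2 ∂μ) := by
      have hsq := mul_self_le_mul_self (by positivity) h1
      nlinarith [Real.sq_sqrt hB₁.le, Real.sq_sqrt hA, Real.sqrt_nonneg B₁,
        Real.sqrt_nonneg (∫ x, (ν x) ^ 2 * ‖(LG x) f‖ ^ 2 ∂μ)]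
    rw [div_mul_eq_mul_div, div_le_iff₀ hB₁]
    calc m ^ 2 * ‖f‖ ^ 2 = (m * ‖f‖) ^ 2 := by ring
      _ ≤ B₁ * _ := h2
      _ = (∫ x, (ν x) ^ 2 * ‖(LG x) f‖ ^ 2 ∂μ) * B₁ := by ring
end

section
/- Let (Λ, F, ω) and (Γ, G, ν) be a pair of Bessel continuous g-fusion mappings for H with Bessel bounds B₁ and B₂, and let S_{ΛΓ} be their mixed frame operator. Suppose there exist real numbers λ₁ < 1 and λ₂ > −1 such that for every f ∈ H, ‖f − S_{ΛΓ} f‖ ≤ λ₁‖f‖ + λ₂‖S_{ΛΓ} f‖. Then (Γ, G, ν) is a continuous g-fusion frame for H; precisely, for every f ∈ H, ∫_X ν(x)² ‖Γ_x π_{G(x)} f‖² dμ(x) ≥ ((1 − λ₁)/(1 + λ₂))² · (1/B₁) · ‖f‖². -/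
open MeasureTheory

theorem stmt_19
    {H : Type*} [NormedAddCommGroup H] [InnerProductSpace ℂ H] [CompleteSpace H]
    {X : Type*} [MeasurableSpace X] (μ : Measure X)
    (ω ν : X → ℝ) (hω : ∀ x, 0 ≤ ω x) (hν : ∀ x, 0 ≤ ν x)
    (hωm : Measurable ω) (hνm : Measurable ν)
    {Hx : X → Type*} [∀ x, NormedAddCommGroup (Hx x)]
    [∀ x, InnerProductSpace ℂ (Hx x)] [∀ x, CompleteSpace (Hx x)]
    (K G : X → Submodule ℂ H) [∀ x, CompleteSpace (K x)] [∀ x, CompleteSpace (G x)]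
    (Λ : (x : X) → (↥(K x) →L[ℂ] Hx x)) (Γ : (x : X) → (↥(G x) →L[ℂ] Hx x))
    (LF LG : (x : X) → (H →L[ℂ] Hx x))
    (hLF : ∀ x, LF x = (Λ x).comp (K x).orthogonalProjection)
    (hLG : ∀ x, LG x = (Γ x).comp (G x).orthogonalProjection)
    (hnF : ∀ f : H, Integrable (fun x => (ω x) ^ 2 * ‖(LF x) f‖ ^ 2) μ)
    (hnG : ∀ f : H, Integrable (fun x => (ν x) ^ 2 * ‖(LG x) f‖ ^ 2) μ)
    (B₁ B₂ : ℝ) (hB₁ : 0 < B₁) (hB₂ : 0 < B₂)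
    (hFb : ∀ f : H, ∫ x, (ω x) ^ 2 * ‖(LF x) f‖ ^ 2 ∂μ ≤ B₁ * ‖f‖ ^ 2)
    (hGb : ∀ f : H, ∫ x, (ν x) ^ 2 * ‖(LG x) f‖ ^ 2 ∂μ ≤ B₂ * ‖f‖ ^ 2)
    (hIFG : ∀ f : H, Integrable
      (fun x => (ω x * ν x) • (ContinuousLinearMap.adjoint (LF x)) ((LG x) f)) μ)
    (hIGF : ∀ f : H, Integrable
      (fun x => (ω x * ν x) • (ContinuousLinearMap.adjoint (LG x)) ((LF x) f)) μ)
    (SLG : H →L[ℂ] H)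
    (hSLG : ∀ f : H,
      SLG f = ∫ x, (ω x * ν x) • (ContinuousLinearMap.adjoint (LF x)) ((LG x) f) ∂μ)
    (lam₁ lam₂ : ℝ) (hl₁ : lam₁ < 1) (hl₂ : -1 < lam₂)
    (hineq : ∀ f : H, ‖f - SLG f‖ ≤ lam₁ * ‖f‖ + lam₂ * ‖SLG f‖) :
    ∀ f : H, ((1 - lam₁) / (1 + lam₂)) ^ 2 * (1 / B₁) * ‖f‖ ^ 2
        ≤ ∫ x, (ν x) ^ 2 * ‖(LG x) f‖ ^ 2 ∂μ := by

  intro f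
  set g := SLG f with hg
  set I := ∫ x, (ν x) ^ 2 * ‖(LG x) f‖ ^ 2 ∂μ with hIdef
  have hI0 : 0 ≤ I := integral_nonneg fun x => by positivity
  -- measurability of the weighted norms
  have aesmF : AEStronglyMeasurable (fun x => ω x * ‖(LF x) g‖) μ := by
    have h := (Real.continuous_sqrt.comp_aestronglyMeasurable
      (hnF g).aestronglyMeasurable)
    refine h.congr (Filter.Eventually.of_forall fun x => ?_)
    simp only [Function.comp]
    rw [← mul_pow, Real.sqrt_sq (mul_nonneg (hω x) (norm_nonneg _))]
  have aesmG : AEStronglyMeasurable (fun x => ν x * ‖(LG x) f‖) μ := by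
    have h := (Real.continuous_sqrt.comp_aestronglyMeasurable
      (hnG f).aestronglyMeasurable)
    refine h.congr (Filter.Eventually.of_forall fun x => ?_)
    simp only [Function.comp]
    rw [← mul_pow, Real.sqrt_sq (mul_nonneg (hν x) (norm_nonneg _))]
  have mF : MemLp (fun x => ω x * ‖(LF x) g‖) (ENNReal.ofReal 2) μ := by
    rw [show ENNReal.ofReal (2:ℝ) = 2 by norm_num]
    rw [memLp_two_iff_integrable_sq aesmF]
    exact (hnF g).congr (Filter.Eventually.of_forall fun x => by ring)
  have mG : MemLp (fun x => ν x * ‖(LG x) f‖) (ENNReal.ofReal 2) μ := by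
    rw [show ENNReal.ofReal (2:ℝ) = 2 by norm_num]
    rw [memLp_two_iff_integrable_sq aesmG]
    exact (hnG f).congr (Filter.Eventually.of_forall fun x => by ring)
  -- integrability of the product
  have hP : Integrable (fun x => (ω x * ‖(LF x) g‖) * (ν x * ‖(LG x) f‖)) μ := by
    refine ((hnF g).add (hnG f)).mono' (aesmF.mul aesmG)
      (Filter.Eventually.of_forall fun x => ?_)
    have h1 : 0 ≤ ω x * ‖(LF x) g‖ := mul_nonneg (hω x) (norm_nonneg _)
    have h2 : 0 ≤ ν x * ‖(LG x) f‖ := mul_nonneg (hν x) (norm_nonneg _)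
    rw [Real.norm_of_nonneg (mul_nonneg h1 h2)]
    simp only [Pi.add_apply]
    nlinarith [sq_nonneg (ω x * ‖(LF x) g‖ - ν x * ‖(LG x) f‖)]
  -- Cauchy–Schwarz in L²
  have hconj : Real.HolderConjugate 2 2 := Real.HolderConjugate.two_two
  have holder := integral_mul_le_Lp_mul_Lq_of_nonneg hconj
    (Filter.Eventually.of_forall fun x => mul_nonneg (hω x) (norm_nonneg _))
    (Filter.Eventually.of_forall fun x => mul_nonneg (hν x) (norm_nonneg _)) mF mG
  have hpow : ∀ y : ℝ, y ^ (2:ℝ) = y ^ 2 := fun y => by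
    rw [show (2:ℝ) = ((2:ℕ):ℝ) by norm_num, Real.rpow_natCast]
  simp only [hpow] at holder
  have hrw1 : ∫ x, (ω x * ‖(LF x) g‖) ^ 2 ∂μ
      = ∫ x, (ω x) ^ 2 * ‖(LF x) g‖ ^ 2 ∂μ :=
    integral_congr_ae (Filter.Eventually.of_forall fun x => by simp only []; ring)
  have hrw2 : ∫ x, (ν x * ‖(LG x) f‖) ^ 2 ∂μ = I :=
    integral_congr_ae (Filter.Eventually.of_forall fun x => by simp only []; ring)
  rw [hrw1, hrw2] at holder
  have hF2 : ∫ x, (ω x) ^ 2 * ‖(LF x) g‖ ^ 2 ∂μ ≤ B₁ * ‖g‖ ^ 2 := hFb g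
  have hF2nn : 0 ≤ ∫ x, (ω x) ^ 2 * ‖(LF x) g‖ ^ 2 ∂μ :=
    integral_nonneg fun x => by positivity
  -- bound on ‖g‖²
  have key : ‖g‖ ^ 2 ≤ (Real.sqrt B₁ * ‖g‖) * Real.sqrt I := by
    have e1 : (‖g‖ : ℝ) ^ 2 = ‖(inner ℂ g g : ℂ)‖ := by
      rw [inner_self_eq_norm_sq_to_K]
      simp
    have e2 : (inner ℂ g g : ℂ)
        = ∫ x, inner ℂ g ((ω x * ν x) • (ContinuousLinearMap.adjoint (LF x)) ((LG x) f)) ∂μ := by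
      conv_lhs => rw [hg, hSLG f]
      rw [integral_inner (hIFG f)]
      rw [← hSLG f, ← hg]
    have e3 : ‖(inner ℂ g g : ℂ)‖
        ≤ ∫ x, (ω x * ‖(LF x) g‖) * (ν x * ‖(LG x) f‖) ∂μ := by
      rw [e2]
      refine norm_integral_le_of_norm_le hP (Filter.Eventually.of_forall fun x => ?_)
      rw [RCLike.real_smul_eq_coe_smul (K := ℂ), inner_smul_right,
        ContinuousLinearMap.adjoint_inner_right]
      rw [norm_mul, RCLike.norm_ofReal, abs_of_nonneg (mul_nonneg (hω x) (hν x))]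
      calc ω x * ν x * ‖(inner ℂ ((LF x) g) ((LG x) f) : ℂ)‖
          ≤ ω x * ν x * (‖(LF x) g‖ * ‖(LG x) f‖) := by
            refine mul_le_mul_of_nonneg_left (norm_inner_le_norm _ _)
              (mul_nonneg (hω x) (hν x))
        _ = (ω x * ‖(LF x) g‖) * (ν x * ‖(LG x) f‖) := by ring
    have e4 : ∫ x, (ω x * ‖(LF x) g‖) * (ν x * ‖(LG x) f‖) ∂μ
        ≤ (Real.sqrt B₁ * ‖g‖) * Real.sqrt I := by
      refine holder.trans ?_
      rw [← Real.sqrt_eq_rpow, ← Real.sqrt_eq_rpow]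
      refine mul_le_mul (le_trans (Real.sqrt_le_sqrt hF2) ?_) (le_refl _)
        (Real.sqrt_nonneg _) (by positivity)
      rw [Real.sqrt_mul hB₁.le, Real.sqrt_sq (norm_nonneg _)]
    calc ‖g‖ ^ 2 = ‖(inner ℂ g g : ℂ)‖ := e1
      _ ≤ _ := e3.trans e4
  have hg2 : ‖g‖ ^ 2 ≤ B₁ * I := by
    rcases eq_or_lt_of_le (norm_nonneg g) with h0 | h0
    · rw [← h0]; simpa using mul_nonneg hB₁.le hI0
    · have h1 : ‖g‖ ≤ Real.sqrt B₁ * Real.sqrt I := by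
        have := key
        rw [pow_two] at this
        nlinarith [Real.sqrt_nonneg B₁, Real.sqrt_nonneg I]
      calc ‖g‖ ^ 2 ≤ (Real.sqrt B₁ * Real.sqrt I) ^ 2 :=
            pow_le_pow_left₀ (norm_nonneg g) h1 2
        _ = B₁ * I := by
            rw [mul_pow, Real.sq_sqrt hB₁.le, Real.sq_sqrt hI0]
  -- lower bound from the perturbation inequality
  have hlow : (1 - lam₁) * ‖f‖ ≤ (1 + lam₂) * ‖g‖ := by
    have h1 : ‖f‖ - ‖g‖ ≤ ‖f - g‖ := norm_sub_norm_le f g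
    have h2 := hineq f
    rw [← hg] at h2
    nlinarith
  have h12 : (0:ℝ) < 1 + lam₂ := by linarith
  have hsq : (1 - lam₁) ^ 2 * ‖f‖ ^ 2 ≤ (1 + lam₂) ^ 2 * ‖g‖ ^ 2 := by
    have hnn : 0 ≤ (1 - lam₁) * ‖f‖ := mul_nonneg (by linarith) (norm_nonneg f)
    nlinarith
  have hd : (0:ℝ) < (1 + lam₂) ^ 2 * B₁ := by positivity
  have hre : ((1 - lam₁) / (1 + lam₂)) ^ 2 * (1 / B₁) * ‖f‖ ^ 2
      = ((1 - lam₁) ^ 2 * ‖f‖ ^ 2) / ((1 + lam₂) ^ 2 * B₁) := by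
    field_simp
  rw [hre, div_le_iff₀ hd]
  nlinarith [mul_le_mul_of_nonneg_left hg2 (sq_nonneg (1 + lam₂))]
end
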